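/- arXiv:1203.2986 — 7 statements merged into one kernel-verified Lean document; each statement's English description precedes it below -/
import Mathlib

section
/- Every solution u of the Dirichlet problem Δu(x) = ε⁻²·(exp(u(x)) − |x|²·exp(−u(x))) in B₁(0), u = 0 on ∂B₁(0), satisfies u(x) < 0 for all x ∈ B₁(0). -/
open Real Set Metric

/-- The Euclidean Laplacian of `u : ℝ² → ℝ`. -/
noncomputable def laplacian2 (u : EuclideanSpace ℝ (Fin 2) → ℝ)
    (x : EuclideanSpace ℝ (Fin 2)) : ℝ :=
  ∑ i : Fin 2,
    fderiv ℝ (fun y => fderiv ℝ u y (EuclideanSpace.single i 1)) x (EuclideanSpace.single i 1)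

/-- `u` is a solution of the Dirichlet problem
`Δu = ε⁻²·(exp u − |x|²·exp (−u))` in `B₁(0)`, `u = 0` on `∂B₁(0)`. -/
def IsDirichletSol (ε : ℝ) (u : EuclideanSpace ℝ (Fin 2) → ℝ) : Prop :=
  ContinuousOn u (closedBall 0 1) ∧
  ContDiffOn ℝ (⊤ : ℕ∞) u (ball 0 1) ∧
  (∀ x ∈ ball (0 : EuclideanSpace ℝ (Fin 2)) 1,
    laplacian2 u x = (ε ^ 2)⁻¹ * (Real.exp (u x) - ‖x‖ ^ 2 * Real.exp (-u x))) ∧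
  (∀ x ∈ sphere (0 : EuclideanSpace ℝ (Fin 2)) 1, u x = 0)

open Filter Topology

/-- 1D second derivative test: at a local max the second derivative is nonpositive. -/
lemma second_deriv_nonpos_of_isLocalMax {g : ℝ → ℝ} {c : ℝ}
    (hmax : IsLocalMax g 0)
    (hg : ∀ᶠ t in 𝓝 (0:ℝ), DifferentiableAt ℝ g t)
    (hc : HasDerivAt (deriv g) c 0) : c ≤ 0 := by
  by_contra hpos
  push_neg at hpos
  have h0 : deriv g 0 = 0 := hmax.deriv_eq_zero
  have hslope := hasDerivAt_iff_tendsto_slope.mp hc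
  have hev : ∀ᶠ t in 𝓝[≠] (0:ℝ), 0 < slope (deriv g) 0 t :=
    hslope.eventually (eventually_gt_nhds hpos)
  rw [eventually_nhdsWithin_iff] at hev
  have hall : ∀ᶠ t in 𝓝 (0:ℝ),
      DifferentiableAt ℝ g t ∧ g t ≤ g 0 ∧ (t ∈ ({0}ᶜ : Set ℝ) → 0 < slope (deriv g) 0 t) :=
    hg.and (hmax.and hev)
  rw [Metric.eventually_nhds_iff] at hall
  obtain ⟨δ, hδ, hδ'⟩ := hall
  set t₀ := δ/2 with ht₀
  have ht₀pos : 0 < t₀ := by positivity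
  have hsub : ∀ t ∈ Icc (0:ℝ) t₀, dist t 0 < δ := by
    intro t ht
    rw [Real.dist_eq, sub_zero, abs_of_nonneg ht.1]
    linarith [ht.2]
  have hmono : StrictMonoOn g (Icc 0 t₀) := by
    apply strictMonoOn_of_deriv_pos (convex_Icc _ _)
    · intro t ht
      exact ((hδ' (hsub t ht)).1.continuousAt).continuousWithinAt
    · intro t ht
      rw [interior_Icc] at ht
      have hd := hδ' (hsub t ⟨le_of_lt ht.1, le_of_lt ht.2⟩)
      have hs := hd.2.2 (by simp [ne_of_gt ht.1])
      rw [slope_def_field, h0, sub_zero, sub_zero] at hs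
      have := mul_pos hs ht.1
      rwa [div_mul_cancel₀ _ (ne_of_gt ht.1)] at this
  have h1 : g 0 < g t₀ :=
    hmono (left_mem_Icc.2 (le_of_lt ht₀pos)) (right_mem_Icc.2 (le_of_lt ht₀pos)) ht₀pos
  have h2 : g t₀ ≤ g 0 :=
    (hδ' (by rw [Real.dist_eq, sub_zero, abs_of_nonneg (le_of_lt ht₀pos)]; linarith)).2.1
  linarith

/-- Directional second derivative test for an interior local maximum. -/
lemma dir_second_nonpos {u : EuclideanSpace ℝ (Fin 2) → ℝ}
    {x₀ : EuclideanSpace ℝ (Fin 2)} (hx₀ : x₀ ∈ ball (0:EuclideanSpace ℝ (Fin 2)) 1)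
    (hsm : ContDiffOn ℝ (⊤ : ℕ∞) u (ball 0 1)) (hmax : IsLocalMax u x₀)
    (e : EuclideanSpace ℝ (Fin 2)) :
    fderiv ℝ (fun y => fderiv ℝ u y e) x₀ e ≤ 0 := by
  set L : ℝ → EuclideanSpace ℝ (Fin 2) := fun t => x₀ + t • e with hLdef
  have hL0 : L 0 = x₀ := by simp [hLdef]
  have hL : ∀ t, HasDerivAt L e t := by
    intro t
    have h1 : HasDerivAt (fun t : ℝ => t • e) ((1:ℝ) • e) t :=
      (hasDerivAt_id t).smul_const e
    simpa [hLdef, one_smul] using h1.const_add x₀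
  have hLcont : Tendsto L (𝓝 0) (𝓝 x₀) := by
    rw [← hL0]; exact (hL 0).continuousAt
  have sball : ∀ᶠ t in 𝓝 (0:ℝ), L t ∈ ball (0:EuclideanSpace ℝ (Fin 2)) 1 :=
    hLcont.eventually (isOpen_ball.eventually_mem hx₀)
  have hcd : ∀ y ∈ ball (0:EuclideanSpace ℝ (Fin 2)) 1, ContDiffAt ℝ (⊤ : ℕ∞) u y := fun y hy =>
    hsm.contDiffAt (isOpen_ball.mem_nhds hy)
  have hdiff : ∀ᶠ t in 𝓝 (0:ℝ), HasDerivAt (u ∘ L) (fderiv ℝ u (L t) e) t := by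
    filter_upwards [sball] with t ht
    exact ((hcd (L t) ht).differentiableAt (by simp)).hasFDerivAt.comp_hasDerivAt t (hL t)
  have hder_eq : deriv (u ∘ L) =ᶠ[𝓝 (0:ℝ)] fun t => fderiv ℝ u (L t) e := by
    filter_upwards [hdiff] with t ht
    exact ht.deriv
  have hF : ContDiffAt ℝ 1 (fun y => fderiv ℝ u y e) x₀ := by
    have h1 : ContDiffAt ℝ 1 (fderiv ℝ u) x₀ :=
      (hcd x₀ hx₀).fderiv_right ((by exact WithTop.coe_le_coe.mpr le_top))
    exact h1.clm_apply contDiffAt_const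
  have hFd : DifferentiableAt ℝ (fun y => fderiv ℝ u y e) x₀ :=
    hF.differentiableAt one_ne_zero
  have hc : HasDerivAt (fun t => fderiv ℝ u (L t) e)
      (fderiv ℝ (fun y => fderiv ℝ u y e) x₀ e) 0 := by
    have hF' := hFd.hasFDerivAt
    rw [← hL0] at hF'
    have := hF'.comp_hasDerivAt 0 (hL 0)
    rw [hL0] at this
    exact this
  have hc' : HasDerivAt (deriv (u ∘ L)) (fderiv ℝ (fun y => fderiv ℝ u y e) x₀ e) 0 :=
    hc.congr_of_eventuallyEq hder_eq
  have hmaxL : IsLocalMax (u ∘ L) 0 := by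
    have := hLcont.eventually hmax
    simpa [IsLocalMax, IsMaxFilter, hL0] using this
  exact second_deriv_nonpos_of_isLocalMax hmaxL
    (hdiff.mono fun t ht => ht.differentiableAt) hc'

/-- No interior maximum point can have a nonnegative value. -/
lemma no_nonneg_interior_max (ε : ℝ) (hε : 0 < ε) (u : EuclideanSpace ℝ (Fin 2) → ℝ)
    (hu : IsDirichletSol ε u) {x₀ : EuclideanSpace ℝ (Fin 2)}
    (hx₀ : x₀ ∈ ball (0:EuclideanSpace ℝ (Fin 2)) 1)
    (hmax : IsMaxOn u (closedBall 0 1) x₀) (hnn : 0 ≤ u x₀) : False := by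
  obtain ⟨hcont, hsm, hpde, hbd⟩ := hu
  have hloc : IsLocalMax u x₀ :=
    hmax.isLocalMax (Filter.mem_of_superset (isOpen_ball.mem_nhds hx₀) ball_subset_closedBall)
  have hlap : laplacian2 u x₀ ≤ 0 := by
    unfold laplacian2
    exact Finset.sum_nonpos fun i _ => dir_second_nonpos hx₀ hsm hloc _
  have hnorm : ‖x₀‖ < 1 := by rwa [mem_ball_zero_iff] at hx₀
  have h1 : 1 ≤ Real.exp (u x₀) := Real.one_le_exp hnn
  have h2 : Real.exp (-u x₀) ≤ 1 := Real.exp_le_one_iff.mpr (neg_nonpos.mpr hnn)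
  have h3 : (0:ℝ) ≤ ‖x₀‖ ^ 2 := sq_nonneg _
  have h3' : ‖x₀‖ ^ 2 < 1 := by nlinarith [norm_nonneg x₀]
  have h4 : 0 < Real.exp (u x₀) - ‖x₀‖ ^ 2 * Real.exp (-u x₀) := by
    nlinarith [mul_le_of_le_one_right h3 h2]
  have h5 : 0 < (ε ^ 2)⁻¹ * (Real.exp (u x₀) - ‖x₀‖ ^ 2 * Real.exp (-u x₀)) :=
    mul_pos (inv_pos.2 (pow_pos hε 2)) h4
  rw [hpde x₀ hx₀] at hlap
  linarith

/-- every solution of the Dirichlet problem is negative on the open unit disc. -/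
theorem stmt_1 (ε : ℝ) (hε : 0 < ε) (u : EuclideanSpace ℝ (Fin 2) → ℝ)
    (hu : IsDirichletSol ε u) :
    ∀ x ∈ ball (0 : EuclideanSpace ℝ (Fin 2)) 1, u x < 0 := by
  intro x hx
  by_contra hge
  push_neg at hge
  obtain ⟨x₀, hx₀mem, hmax⟩ :=
    (isCompact_closedBall (0 : EuclideanSpace ℝ (Fin 2)) 1).exists_isMaxOn
      ⟨x, ball_subset_closedBall hx⟩ hu.1
  by_cases hball : x₀ ∈ ball (0 : EuclideanSpace ℝ (Fin 2)) 1
  · exact no_nonneg_interior_max ε hε u hu hball hmax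
      (le_trans hge (hmax (ball_subset_closedBall hx)))
  · have hs : x₀ ∈ sphere (0 : EuclideanSpace ℝ (Fin 2)) 1 := by
      rw [mem_closedBall_zero_iff] at hx₀mem
      rw [mem_ball_zero_iff] at hball
      rw [mem_sphere_zero_iff_norm]
      linarith [not_lt.mp hball]
    have h0 : u x₀ = 0 := hu.2.2.2 x₀ hs
    have hmax' : IsMaxOn u (closedBall 0 1) x := by
      intro y hy
      have hle : u y ≤ u x₀ := hmax hy
      simp only [mem_setOf_eq]
      linarith [h0 ▸ hle]
    exact no_nonneg_interior_max ε hε u hu hx hmax' hge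
end

section
/- If v : (0,1] → ℝ is smooth on (0,1), continuous at 1, satisfies v''(r) + r⁻¹·v'(r) = 2ε⁻²·r·sinh(v(r)) on (0,1), v(1) = 0, and v(r) → +∞ as r → 0⁺, then v(r) > 0 for all 0 < r < 1. -/
open Real Set Metric Filter

/-- `v : (0,1] → ℝ` (modeled as a function on `ℝ`) is smooth on `(0,1)`, continuous at `1`
(from within `(0,1]`), satisfies the ODE `v″(r) + r⁻¹·v′(r) = 2ε⁻²·r·sinh(v(r))` on `(0,1)`,
`v(1) = 0`, and `v(r) → +∞` as `r → 0⁺`. -/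
def IsODESol (ε : ℝ) (v : ℝ → ℝ) : Prop :=
  ContDiffOn ℝ (⊤ : ℕ∞) v (Ioo 0 1) ∧
  ContinuousWithinAt v (Ioc 0 1) 1 ∧
  (∀ r ∈ Ioo (0 : ℝ) 1,
    deriv (deriv v) r + r⁻¹ * deriv v r = 2 * (ε ^ 2)⁻¹ * r * Real.sinh (v r)) ∧
  v 1 = 0 ∧
  Tendsto v (nhdsWithin 0 (Ioi 0)) atTop


lemma sinh_le_three_mul {x : ℝ} (h0 : 0 ≤ x) (h1 : x ≤ 1) : Real.sinh x ≤ 3 * x := by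
  have hmono : MonotoneOn (fun x => 3 * x - Real.sinh x) (Icc (0:ℝ) 1) := by
    apply monotoneOn_of_deriv_nonneg (convex_Icc 0 1)
    · exact ((continuous_const.mul continuous_id).sub Real.continuous_sinh).continuousOn
    · intro t ht
      exact ((((hasDerivAt_id' t).const_mul 3).sub (Real.hasDerivAt_sinh t)).differentiableAt).differentiableWithinAt
    · intro t ht
      rw [interior_Icc] at ht
      rw [(show HasDerivAt (fun x => 3 * x - Real.sinh x) (3 * 1 - Real.cosh t) t from ((hasDerivAt_id' t).const_mul 3).sub (Real.hasDerivAt_sinh t)).deriv]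
      have h2 : Real.cosh t ≤ 3 := by
        rw [Real.cosh_eq]
        have e1 : Real.exp t ≤ Real.exp 1 := Real.exp_le_exp.2 ht.2.le
        have e2 : Real.exp (-t) ≤ Real.exp 0 := Real.exp_le_exp.2 (by linarith [ht.1])
        have e3 : Real.exp 1 < 2.7182818286 := Real.exp_one_lt_d9
        rw [Real.exp_zero] at e2
        linarith
      simp only [mul_one]
      linarith
  have := hmono (left_mem_Icc.2 zero_le_one) ⟨h0, h1⟩ h0
  simp only [Real.sinh_zero, mul_zero, sub_zero] at this
  linarith [this]


set_option maxHeartbeats 1000000 in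
/-- any such `v` is positive on `(0,1)`. -/
theorem stmt_2 (ε : ℝ) (hε : 0 < ε) (v : ℝ → ℝ) (hv : IsODESol ε v) :
    ∀ r ∈ Ioo (0 : ℝ) 1, 0 < v r := by
  obtain ⟨hsm, hc1, hode, hv1, htop⟩ := hv
  set c : ℝ := 2 * (ε ^ 2)⁻¹ with hc
  have hcpos : 0 < c := by positivity
  -- continuity of v
  have hvCA : ∀ x ∈ Ioo (0:ℝ) 1, ContinuousAt v x := fun x hx =>
    (hsm.continuousOn.continuousAt (isOpen_Ioo.mem_nhds hx))
  have hvcont : ContinuousOn v (Ioc 0 1) := by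
    intro x hx
    rcases eq_or_lt_of_le hx.2 with h | h
    · rw [h]; exact hc1
    · exact (hvCA x ⟨hx.1, h⟩).continuousWithinAt
  -- derivatives
  have hder : ∀ x ∈ Ioo (0:ℝ) 1, HasDerivAt v (deriv v x) x := fun x hx =>
    ((hsm.differentiableOn (by simp)).differentiableAt (isOpen_Ioo.mem_nhds hx)).hasDerivAt
  have hd1 : ContDiffOn ℝ 1 (deriv v) (Ioo 0 1) :=
    hsm.deriv_of_isOpen isOpen_Ioo (by norm_cast)
  have hder2 : ∀ x ∈ Ioo (0:ℝ) 1, HasDerivAt (deriv v) (deriv (deriv v) x) x := fun x hx =>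
    ((hd1.differentiableOn one_ne_zero).differentiableAt (isOpen_Ioo.mem_nhds hx)).hasDerivAt
  have hdcont : ContinuousOn (deriv v) (Ioo 0 1) := hd1.continuousOn
  set u : ℝ → ℝ := fun r => r * deriv v r with hu
  have hucont : ContinuousOn u (Ioo 0 1) := continuousOn_id.mul hdcont
  have huder : ∀ x ∈ Ioo (0:ℝ) 1, HasDerivAt u (c * x ^ 2 * Real.sinh (v x)) x := by
    intro x hx
    have h := (hasDerivAt_id' x).mul (hder2 x hx)
    have heq : c * x ^ 2 * Real.sinh (v x) = 1 * deriv v x + x * deriv (deriv v) x := by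
      have hode' := hode x hx
      have hx0 : (x:ℝ) ≠ 0 := ne_of_gt hx.1
      field_simp at hode'
      nlinarith [hode']
    rw [heq]; exact h
  -- u monotone helper (v ≥ 0 on the open interval)
  have humono : ∀ a b : ℝ, 0 < a → a ≤ b → b < 1 →
      (∀ x ∈ Ioo a b, 0 ≤ v x) → u a ≤ u b := by
    intro a b ha hab hb hnn
    have hsub : Icc a b ⊆ Ioo 0 1 := fun x hx => ⟨lt_of_lt_of_le ha hx.1, lt_of_le_of_lt hx.2 hb⟩
    have hmono : MonotoneOn u (Icc a b) := by
      apply monotoneOn_of_deriv_nonneg (convex_Icc a b) (hucont.mono hsub)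
      · intro x hx
        rw [interior_Icc] at hx
        exact ((huder x (hsub (Ioo_subset_Icc_self hx))).differentiableAt).differentiableWithinAt
      · intro x hx
        rw [interior_Icc] at hx
        rw [(huder x (hsub (Ioo_subset_Icc_self hx))).deriv]
        have hs0 := Real.sinh_nonneg_iff.2 (hnn x hx)
        exact mul_nonneg (mul_nonneg hcpos.le (sq_nonneg x)) hs0
    exact hmono (left_mem_Icc.2 hab) (right_mem_Icc.2 hab) hab
  -- u strict antitone helper (v < 0 on the open interval)
  have hustrict : ∀ a b : ℝ, 0 < a → a < b → b < 1 →
      (∀ x ∈ Ioo a b, v x < 0) → u b < u a := by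
    intro a b ha hab hb hneg
    have hsub : Icc a b ⊆ Ioo 0 1 := fun x hx => ⟨lt_of_lt_of_le ha hx.1, lt_of_le_of_lt hx.2 hb⟩
    have hmono : StrictAntiOn u (Icc a b) := by
      apply strictAntiOn_of_deriv_neg (convex_Icc a b) (hucont.mono hsub)
      intro x hx
      rw [interior_Icc] at hx
      rw [(huder x (hsub (Ioo_subset_Icc_self hx))).deriv]
      have hs : Real.sinh (v x) < 0 := by
        rw [← Real.sinh_zero]
        exact Real.sinh_lt_sinh.2 (hneg x hx)
      have hx2 : 0 < x ^ 2 := pow_pos (hsub (Ioo_subset_Icc_self hx)).1 2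
      have := mul_pos hcpos hx2
      nlinarith
    exact hmono (left_mem_Icc.2 hab.le) (right_mem_Icc.2 hab.le) hab
  -- v > 1 near 0
  have h1 : ∀ᶠ x in nhdsWithin 0 (Ioi 0), 1 < v x := htop.eventually_gt_atTop 1
  rw [eventually_nhdsWithin_iff, Metric.eventually_nhds_iff] at h1
  obtain ⟨a₀, ha₀pos, ha₀⟩ := h1
  have hbig : ∀ x : ℝ, 0 < x → x < a₀ → 1 < v x := by
    intro x hx1 hx2
    refine ha₀ ?_ hx1
    rw [Real.dist_eq, sub_zero, abs_of_pos hx1]; exact hx2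
  -- main argument
  by_contra hcon
  push_neg at hcon
  obtain ⟨r₀, hr₀, hvr₀⟩ := hcon
  by_cases hA : ∃ r₁ ∈ Ioo (0:ℝ) 1, v r₁ < 0
  · -- Case A : v takes a negative value
    obtain ⟨rn, hrn, hrnneg⟩ := hA
    set a : ℝ := min a₀ rn / 2 with hadef
    have hapos : 0 < a := by
      have : 0 < min a₀ rn := lt_min ha₀pos hrn.1
      rw [hadef]; linarith
    have harn : a < rn := by
      have : min a₀ rn ≤ rn := min_le_right _ _
      rw [hadef]; linarith [hrn.1]
    have haa₀ : a < a₀ := by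
      have : min a₀ rn ≤ a₀ := min_le_left _ _
      rw [hadef]; linarith
    have hva : 0 < v a := lt_trans one_pos (hbig a hapos haa₀)
    have ha1 : a < 1 := lt_trans harn hrn.2
    have hsubIoc : Icc a 1 ⊆ Ioc 0 1 := fun x hx => ⟨lt_of_lt_of_le hapos hx.1, hx.2⟩
    obtain ⟨r₁, hr₁mem, hr₁min⟩ := isCompact_Icc.exists_isMinOn (nonempty_Icc.2 ha1.le)
      (hvcont.mono hsubIoc)
    have hvr₁ : v r₁ < 0 := lt_of_le_of_lt (hr₁min ⟨harn.le, hrn.2.le⟩) hrnneg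
    have hr₁a : a < r₁ := lt_of_le_of_ne hr₁mem.1 (by rintro rfl; linarith)
    have hr₁1 : r₁ < 1 := lt_of_le_of_ne hr₁mem.2 (by rintro rfl; linarith [hv1])
    have hr₁Ioo : r₁ ∈ Ioo (0:ℝ) 1 := ⟨lt_trans hapos hr₁a, hr₁1⟩
    have hdz : deriv v r₁ = 0 :=
      (hr₁min.isLocalMin (Icc_mem_nhds hr₁a hr₁1)).deriv_eq_zero
    have hur₁ : u r₁ = 0 := by rw [hu]; simp [hdz]
    -- first zero after r₁
    have hsubZ : Icc r₁ 1 ⊆ Ioc 0 1 := fun x hx => ⟨lt_of_lt_of_le hr₁Ioo.1 hx.1, hx.2⟩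
    have hZclosed : IsClosed (Icc r₁ 1 ∩ v ⁻¹' {0}) :=
      (hvcont.mono hsubZ).preimage_isClosed_of_isClosed isClosed_Icc isClosed_singleton
    have hZne : (Icc r₁ 1 ∩ v ⁻¹' {0}).Nonempty := ⟨1, ⟨hr₁1.le, le_rfl⟩, by simpa using hv1⟩
    have hZbdd : BddBelow (Icc r₁ 1 ∩ v ⁻¹' {0}) := ⟨r₁, fun x hx => hx.1.1⟩
    obtain ⟨b, hbZ, hbLB⟩ : ∃ b, b ∈ Icc r₁ 1 ∩ v ⁻¹' {0} ∧ b ∈ lowerBounds (Icc r₁ 1 ∩ v ⁻¹' {0}) :=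
      ⟨sInf _, hZclosed.csInf_mem hZne hZbdd, fun x hx => csInf_le hZbdd hx⟩
    have hvb : v b = 0 := hbZ.2
    have hbr₁ : r₁ < b := lt_of_le_of_ne hbZ.1.1 (by rintro rfl; rw [hvb] at hvr₁; linarith)
    have hb1 : b ≤ 1 := hbZ.1.2
    have hvneg : ∀ t ∈ Ico r₁ b, v t < 0 := by
      intro t ht
      rcases lt_trichotomy (v t) 0 with h | h | h
      · exact h
      · exfalso
        have htZ : t ∈ Icc r₁ 1 ∩ v ⁻¹' {0} := ⟨⟨ht.1, le_trans ht.2.le hb1⟩, h⟩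
        have := hbLB htZ
        linarith [ht.2]
      · exfalso
        have hsub2 : Icc r₁ t ⊆ Ioc 0 1 := fun x hx =>
          ⟨lt_of_lt_of_le hr₁Ioo.1 hx.1, le_trans hx.2 (le_trans ht.2.le hb1)⟩
        obtain ⟨z, hzmem, hvz⟩ := intermediate_value_Icc ht.1 (hvcont.mono hsub2) ⟨hvr₁.le, h.le⟩
        have hzZ : z ∈ Icc r₁ 1 ∩ v ⁻¹' {0} :=
          ⟨⟨hzmem.1, le_trans hzmem.2 (le_trans ht.2.le hb1)⟩, hvz⟩
        have := hbLB hzZ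
        linarith [hzmem.2, ht.2]
    have hult : ∀ t ∈ Ioo r₁ b, deriv v t < 0 := by
      intro t ht
      have htIoo : t ∈ Ioo (0:ℝ) 1 := ⟨lt_trans hr₁Ioo.1 ht.1, lt_of_lt_of_le ht.2 hb1⟩
      have hub : u t < u r₁ :=
        hustrict r₁ t hr₁Ioo.1 ht.1 htIoo.2 (fun x hx =>
          hvneg x ⟨hx.1.le, lt_trans hx.2 ht.2⟩)
      rw [hur₁] at hub
      have ht0 : 0 < t := htIoo.1
      by_contra hge
      push_neg at hge
      have : (0:ℝ) ≤ t * deriv v t := mul_nonneg ht0.le hge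
      rw [hu] at hub
      simp only at hub
      linarith
    have hanti : StrictAntiOn v (Icc r₁ b) := by
      apply strictAntiOn_of_deriv_neg (convex_Icc r₁ b)
        (hvcont.mono (fun x hx => ⟨lt_of_lt_of_le hr₁Ioo.1 hx.1, le_trans hx.2 hb1⟩))
      intro x hx
      rw [interior_Icc] at hx
      exact hult x hx
    have := hanti (left_mem_Icc.2 hbr₁.le) (right_mem_Icc.2 hbr₁.le) hbr₁
    rw [hvb] at this
    linarith
  · -- Case B : v ≥ 0 everywhere, touches 0
    push_neg at hA
    have hvr₀0 : v r₀ = 0 := le_antisymm hvr₀ (hA r₀ hr₀)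
    set a' : ℝ := min a₀ r₀ / 2 with ha'def
    have ha'pos : 0 < a' := by
      have : 0 < min a₀ r₀ := lt_min ha₀pos hr₀.1
      rw [ha'def]; linarith
    have ha'r₀ : a' < r₀ := by
      have : min a₀ r₀ ≤ r₀ := min_le_right _ _
      rw [ha'def]; linarith [hr₀.1]
    have ha'a₀ : a' < a₀ := by
      have : min a₀ r₀ ≤ a₀ := min_le_left _ _
      rw [ha'def]; linarith
    have hsubZ : Icc a' r₀ ⊆ Ioc 0 1 := fun x hx =>
      ⟨lt_of_lt_of_le ha'pos hx.1, le_trans hx.2 hr₀.2.le⟩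
    have hZclosed : IsClosed (Icc a' r₀ ∩ v ⁻¹' {0}) :=
      (hvcont.mono hsubZ).preimage_isClosed_of_isClosed isClosed_Icc isClosed_singleton
    have hZne : (Icc a' r₀ ∩ v ⁻¹' {0}).Nonempty := ⟨r₀, ⟨ha'r₀.le, le_rfl⟩, hvr₀0⟩
    have hZbdd : BddBelow (Icc a' r₀ ∩ v ⁻¹' {0}) := ⟨a', fun x hx => hx.1.1⟩
    obtain ⟨s, hsZ, hsLB⟩ : ∃ s, s ∈ Icc a' r₀ ∩ v ⁻¹' {0} ∧
        s ∈ lowerBounds (Icc a' r₀ ∩ v ⁻¹' {0}) :=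
      ⟨sInf _, hZclosed.csInf_mem hZne hZbdd, fun x hx => csInf_le hZbdd hx⟩
    have hvs : v s = 0 := hsZ.2
    have hs0 : 0 < s := lt_of_lt_of_le ha'pos hsZ.1.1
    have hs1 : s < 1 := lt_of_le_of_lt hsZ.1.2 hr₀.2
    have hsIoo : s ∈ Ioo (0:ℝ) 1 := ⟨hs0, hs1⟩
    have hpos : ∀ t ∈ Ioo (0:ℝ) s, 0 < v t := by
      intro t ht
      by_cases hta : t < a₀
      · linarith [hbig t ht.1 hta]
      · push_neg at hta
        have htmem : t ∈ Icc a' r₀ := ⟨le_trans ha'a₀.le hta, le_trans ht.2.le hsZ.1.2⟩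
        have hne : v t ≠ 0 := by
          intro h0
          have htZ : t ∈ Icc a' r₀ ∩ v ⁻¹' {0} := ⟨htmem, h0⟩
          have := hsLB htZ
          linarith [ht.2]
        exact lt_of_le_of_ne (hA t ⟨ht.1, lt_trans ht.2 hs1⟩) (Ne.symm hne)
    have hds : deriv v s = 0 := by
      have hloc : IsLocalMin v s := by
        filter_upwards [isOpen_Ioo.mem_nhds hsIoo] with x hx
        rw [hvs]; exact hA x hx
      exact hloc.deriv_eq_zero
    have hus : u s = 0 := by rw [hu]; simp [hds]
    have hune : ∀ r ∈ Ioo (0:ℝ) s, u r ≤ 0 := by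
      intro r hr
      have := humono r s hr.1 hr.2.le hs1 (fun x hx =>
        hA x ⟨lt_trans hr.1 hx.1, lt_trans hx.2 hs1⟩)
      rw [hus] at this; exact this
    have hvle : ∀ r ∈ Ioo (0:ℝ) s, deriv v r ≤ 0 := by
      intro r hr
      have h1 := hune r hr
      rw [hu] at h1
      simp only at h1
      by_contra hge
      push_neg at hge
      have : 0 < r * deriv v r := mul_pos hr.1 hge
      linarith
    -- continuity at s gives bound 1 nearby
    have hev : ∀ᶠ x in nhds s, v x < 1 := by
      have h2 : Tendsto v (nhds s) (nhds (v s)) := hvCA s hsIoo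
      rw [hvs] at h2
      exact h2.eventually_lt_const one_pos
    rw [Metric.eventually_nhds_iff] at hev
    obtain ⟨δ₀, hδ₀pos, hδ₀⟩ := hev
    have hsqpos : 0 < Real.sqrt (s / (12 * c)) := Real.sqrt_pos.2 (by positivity)
    set δ : ℝ := min (s/2) (min (δ₀/2) (Real.sqrt (s / (12 * c)))) with hδdef
    have hδpos : 0 < δ := lt_min (by positivity) (lt_min (by positivity) hsqpos)
    have hδs2 : δ ≤ s / 2 := min_le_left _ _
    have hδ₀' : δ < δ₀ := lt_of_le_of_lt (le_trans (min_le_right _ _) (min_le_left _ _))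
      (by linarith)
    have hδsq : δ ^ 2 ≤ s / (12 * c) := by
      have h1 : δ ≤ Real.sqrt (s / (12 * c)) := le_trans (min_le_right _ _) (min_le_right _ _)
      have h2 := Real.sq_sqrt (le_of_lt (show (0:ℝ) < s / (12 * c) by positivity))
      nlinarith [hδpos.le]
    have h12c : 12 * c * δ ^ 2 ≤ s := by
      rw [le_div_iff₀ (by positivity : (0:ℝ) < 12 * c)] at hδsq
      linarith
    have hppos : 0 < s - δ := by linarith
    have hps : s - δ < s := by linarith
    have hMpos : 0 < v (s - δ) := hpos (s - δ) ⟨hppos, hps⟩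
    have hM1 : v (s - δ) < 1 := by
      apply hδ₀
      rw [Real.dist_eq]
      rw [abs_of_nonpos (by linarith)]
      simp only [neg_sub]
      linarith
    have hsubIoo : Icc (s - δ) s ⊆ Ioo (0:ℝ) 1 := fun x hx =>
      ⟨lt_of_lt_of_le hppos hx.1, lt_of_le_of_lt hx.2 hs1⟩
    -- v ≤ M on [s-δ, s]
    have hMb : ∀ t ∈ Icc (s - δ) s, v t ≤ v (s - δ) := by
      have hanti : AntitoneOn v (Icc (s - δ) s) := by
        apply antitoneOn_of_deriv_nonpos (convex_Icc _ _)
          (hvcont.mono (fun x hx => ⟨(hsubIoo hx).1, (hsubIoo hx).2.le⟩))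
        · intro x hx
          rw [interior_Icc] at hx
          exact ((hder x (hsubIoo (Ioo_subset_Icc_self hx))).differentiableAt).differentiableWithinAt
        · intro x hx
          rw [interior_Icc] at hx
          exact hvle x ⟨lt_of_lt_of_le hppos hx.1.le, hx.2⟩
      intro t ht
      exact hanti (left_mem_Icc.2 hps.le) ht ht.1
    have hvnn : ∀ t ∈ Icc (s - δ) s, 0 ≤ v t := by
      intro t ht
      rcases eq_or_lt_of_le ht.2 with h | h
      · rw [h, hvs]
      · exact (hpos t ⟨lt_of_lt_of_le hppos ht.1, h⟩).le
    -- step (i) : u ≥ -3cMδ on [s-δ,s]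
    have hulb : ∀ r ∈ Icc (s - δ) s, -(3*c*(v (s-δ))*δ) ≤ u r := by
      intro r hr
      have hmono : MonotoneOn (fun t => 3*c*(v (s-δ))*t - u t) (Icc r s) := by
        apply monotoneOn_of_deriv_nonneg (convex_Icc r s)
        · exact ((continuous_const.mul continuous_id).continuousOn).sub
            (hucont.mono (fun x hx => hsubIoo ⟨le_trans hr.1 hx.1, hx.2⟩))
        · intro x hx
          rw [interior_Icc] at hx
          have hxIoo : x ∈ Ioo (0:ℝ) 1 := hsubIoo ⟨le_trans hr.1 hx.1.le, hx.2.le⟩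
          exact (((hasDerivAt_id' x).const_mul (3*c*(v (s-δ)))).sub
            (huder x hxIoo)).differentiableAt.differentiableWithinAt
        · intro x hx
          rw [interior_Icc] at hx
          have hxIcc : x ∈ Icc (s - δ) s := ⟨le_trans hr.1 hx.1.le, hx.2.le⟩
          have hxIoo : x ∈ Ioo (0:ℝ) 1 := hsubIoo hxIcc
          rw [(show HasDerivAt (fun t => 3*c*(v (s-δ))*t - u t) (3*c*(v (s-δ)) * 1 - c * x ^ 2 * Real.sinh (v x)) x from ((hasDerivAt_id' x).const_mul (3*c*(v (s-δ)))).sub (huder x hxIoo)).deriv]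
          have hvx1 : v x ≤ 1 := le_trans (hMb x hxIcc) hM1.le
          have hvx0 : 0 ≤ v x := hvnn x hxIcc
          have hsinh : Real.sinh (v x) ≤ 3 * v x := sinh_le_three_mul hvx0 hvx1
          have hsinh0 : 0 ≤ Real.sinh (v x) := Real.sinh_nonneg_iff.2 hvx0
          have hx1 : x ^ 2 ≤ 1 := by nlinarith [hxIoo.1.le, hxIoo.2.le]
          have hvxM : v x ≤ v (s - δ) := hMb x hxIcc
          simp only [mul_one]
          nlinarith [sq_nonneg x, mul_nonneg hcpos.le hsinh0]
      have hkey := hmono (left_mem_Icc.2 hr.2) (right_mem_Icc.2 hr.2) hr.2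
      simp only at hkey
      rw [hus] at hkey
      have hrange : s - r ≤ δ := by linarith [hr.1]
      have h3cM : 0 ≤ 3*c*(v (s-δ)) := by positivity
      nlinarith [mul_nonneg h3cM (by linarith : (0:ℝ) ≤ δ - (s - r))]
    -- step (ii) : deriv v ≥ -C₂ on (s-δ,s)
    have hdvlb : ∀ r ∈ Ioo (s - δ) s, -(6*c*(v (s-δ))*δ/s) ≤ deriv v r := by
      intro r hr
      have hrIcc : r ∈ Icc (s - δ) s := Ioo_subset_Icc_self hr
      have hrpos : 0 < r := lt_of_lt_of_le hppos hr.1.le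
      have h1 := hulb r hrIcc
      have hrs2 : s / 2 ≤ r := by linarith [hr.1]
      have h2 : -(3*c*(v (s-δ))*δ) / r ≤ deriv v r := by
        rw [div_le_iff₀ hrpos]
        calc -(3*c*(v (s-δ))*δ) ≤ u r := h1
        _ = deriv v r * r := by rw [hu]; ring
      refine le_trans ?_ h2
      rw [neg_div, neg_le_neg_iff, div_le_div_iff₀ hrpos (by positivity : (0:ℝ) < s)]
      have hA3 : 0 ≤ 3*c*(v (s-δ))*δ := by positivity
      nlinarith
    -- step (iii) : integrate
    have hmono2 : MonotoneOn (fun t => v t + (6*c*(v (s-δ))*δ/s)*t) (Icc (s - δ) s) := by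
      apply monotoneOn_of_deriv_nonneg (convex_Icc _ _)
      · exact (hvcont.mono (fun x hx => ⟨(hsubIoo hx).1, (hsubIoo hx).2.le⟩)).add
          (continuous_const.mul continuous_id).continuousOn
      · intro x hx
        rw [interior_Icc] at hx
        exact ((hder x (hsubIoo (Ioo_subset_Icc_self hx))).add
          ((hasDerivAt_id' x).const_mul _)).differentiableAt.differentiableWithinAt
      · intro x hx
        rw [interior_Icc] at hx
        rw [(show HasDerivAt (fun t => v t + (6*c*(v (s-δ))*δ/s)*t) (deriv v x + (6*c*(v (s-δ))*δ/s) * 1) x from (hder x (hsubIoo (Ioo_subset_Icc_self hx))).add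
          ((hasDerivAt_id' x).const_mul _)).deriv]
        have := hdvlb x hx
        simp only [mul_one]
        linarith
    have hfin := hmono2 (left_mem_Icc.2 hps.le) (right_mem_Icc.2 hps.le) hps.le
    simp only at hfin
    rw [hvs] at hfin
    have hMle : v (s-δ) ≤ (6*c*(v (s-δ))*δ/s) * δ := by nlinarith [hfin]
    have hfinal : (6*c*(v (s-δ))*δ/s) * δ ≤ v (s-δ) / 2 := by
      rw [div_mul_eq_mul_div, div_le_div_iff₀ (by positivity : (0:ℝ) < s) (by norm_num : (0:ℝ) < 2)]
      nlinarith [hMpos.le, mul_nonneg hcpos.le (sq_nonneg δ)]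
    linarith
end

section
/- Suppose in addition that v(r) > 0 for all 0 < r < 1 and that v'(r) < 0 for all r ∈ [1/2, 1). Then for all 0 < r < 1 one has v'(r) < 0, v''(r) > 0, and v'''(r) < 0. -/
open Real Set Metric Filter

/-- if in addition `v > 0` on `(0,1)` and `v′ < 0` on `[1/2,1)`, then for all
`0 < r < 1` one has `v′(r) < 0`, `v″(r) > 0`, and `v‴(r) < 0`. -/
theorem stmt_3 (ε : ℝ) (hε : 0 < ε) (v : ℝ → ℝ) (hv : IsODESol ε v)
    (hpos : ∀ r ∈ Ioo (0 : ℝ) 1, 0 < v r)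
    (hdec : ∀ r ∈ Ico (1/2 : ℝ) 1, deriv v r < 0) :
    ∀ r ∈ Ioo (0 : ℝ) 1,
      deriv v r < 0 ∧ 0 < deriv (deriv v) r ∧ deriv (deriv (deriv v)) r < 0 := by
  obtain ⟨hsm, hcont1, hode, hv1, htop⟩ := hv
  have hopen : IsOpen (Ioo (0:ℝ) 1) := isOpen_Ioo
  have hd1 : ContDiffOn ℝ (⊤ : ℕ∞) (deriv v) (Ioo 0 1) := hsm.deriv_of_isOpen hopen (by simp)
  have hvd : ∀ r ∈ Ioo (0:ℝ) 1, DifferentiableAt ℝ v r := fun r hr =>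
    (hsm.differentiableOn (by simp)).differentiableAt (hopen.mem_nhds hr)
  have hv'd : ∀ r ∈ Ioo (0:ℝ) 1, DifferentiableAt ℝ (deriv v) r := fun r hr =>
    (hd1.differentiableOn (by simp)).differentiableAt (hopen.mem_nhds hr)
  have hsinh : ∀ r ∈ Ioo (0:ℝ) 1, 0 < Real.sinh (v r) := fun r hr =>
    Real.sinh_pos_iff.2 (hpos r hr)
  have hE : (0:ℝ) < (ε ^ 2)⁻¹ := by positivity
  -- g = r * v' has positive derivative
  have hgderiv : ∀ r ∈ Ioo (0:ℝ) 1,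
      HasDerivAt (fun x => x * deriv v x) (2 * (ε^2)⁻¹ * r^2 * Real.sinh (v r)) r := by
    intro r hr
    have h1 : HasDerivAt (fun x => x * deriv v x)
        (1 * deriv v r + r * deriv (deriv v) r) r :=
      (hasDerivAt_id r).mul (hv'd r hr).hasDerivAt
    convert h1 using 1
    have h2 := hode r hr
    have hrne : r ≠ 0 := ne_of_gt hr.1
    field_simp at h2 ⊢
    nlinarith [h2]
  have hgmono : StrictMonoOn (fun x => x * deriv v x) (Ioo 0 1) := by
    apply strictMonoOn_of_deriv_pos (convex_Ioo 0 1)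
    · exact fun r hr => ((hgderiv r hr).differentiableAt.continuousAt).continuousWithinAt
    · intro r hr
      rw [interior_Ioo] at hr
      rw [(hgderiv r hr).deriv]
      have := hsinh r hr
      have := hr.1
      positivity
  have hv'neg : ∀ r ∈ Ioo (0:ℝ) 1, deriv v r < 0 := by
    intro r hr
    rcases lt_or_ge r (1/2) with h | h
    · have h12 : (1/2:ℝ) ∈ Ioo (0:ℝ) 1 := by norm_num
      have hlt := hgmono hr h12 h
      have hd12 : deriv v (1/2) < 0 := hdec (1/2) (by norm_num)
      have : r * deriv v r < 0 := by simp only at hlt; nlinarith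
      nlinarith [hr.1]
    · exact hdec r ⟨h, hr.2⟩
  have hv''pos : ∀ r ∈ Ioo (0:ℝ) 1, 0 < deriv (deriv v) r := by
    intro r hr
    have h2 := hode r hr
    have h1 := hsinh r hr
    have hrpos := hr.1
    have hinv : (0:ℝ) < r⁻¹ := inv_pos.2 hrpos
    nlinarith [hv'neg r hr, mul_pos (mul_pos (mul_pos two_pos hE) hrpos) h1,
      mul_pos hinv (neg_pos.2 (hv'neg r hr))]
  intro r hr
  refine ⟨hv'neg r hr, hv''pos r hr, ?_⟩
  -- third derivative
  have hrpos := hr.1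
  have hrne : r ≠ 0 := ne_of_gt hrpos
  set F : ℝ → ℝ := fun x => 2 * (ε ^ 2)⁻¹ * x * Real.sinh (v x) - x⁻¹ * deriv v x with hF
  have hEq : deriv (deriv v) =ᶠ[nhds r] F := by
    filter_upwards [hopen.mem_nhds hr] with x hx
    have := hode x hx
    simp only [hF]
    linarith
  have hFd : HasDerivAt F
      ((2 * (ε ^ 2)⁻¹ * Real.sinh (v r) + 2 * (ε ^ 2)⁻¹ * r * (Real.cosh (v r) * deriv v r))
        - (-(r ^ 2)⁻¹ * deriv v r + r⁻¹ * deriv (deriv v) r)) r := by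
    have h1 : HasDerivAt (fun x => 2 * (ε ^ 2)⁻¹ * x) (2 * (ε ^ 2)⁻¹) r := by
      simpa using (hasDerivAt_id r).const_mul (2 * (ε ^ 2)⁻¹)
    have h2 : HasDerivAt (fun x => Real.sinh (v x)) (Real.cosh (v r) * deriv v r) r :=
      (hvd r hr).hasDerivAt.sinh
    have h3 : HasDerivAt (fun x : ℝ => x⁻¹) (-(r ^ 2)⁻¹) r := by
      simpa using hasDerivAt_inv hrne
    exact (h1.mul h2).sub (h3.mul (hv'd r hr).hasDerivAt)
  have hder3 : deriv (deriv (deriv v)) r = _ := hEq.deriv_eq.trans hFd.deriv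
  rw [hder3]
  have h2 := hode r hr
  have hkey : (2 * (ε ^ 2)⁻¹ * Real.sinh (v r) + 2 * (ε ^ 2)⁻¹ * r * (Real.cosh (v r) * deriv v r))
        - (-(r ^ 2)⁻¹ * deriv v r + r⁻¹ * deriv (deriv v) r)
      = 2 * (ε ^ 2)⁻¹ * r * Real.cosh (v r) * deriv v r + 2 * deriv v r / r ^ 2 := by
    have h2' : deriv (deriv v) r = 2 * (ε ^ 2)⁻¹ * r * Real.sinh (v r) - r⁻¹ * deriv v r := by
      linarith
    rw [h2']
    field_simp
    ring
  rw [hkey]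
  have hc := Real.cosh_pos (x := v r)
  have ha := hv'neg r hr
  have t1 : 2 * (ε ^ 2)⁻¹ * r * Real.cosh (v r) * deriv v r < 0 := by
    apply mul_neg_of_pos_of_neg _ ha
    positivity
  have t2 : 2 * deriv v r / r ^ 2 < 0 := by
    apply div_neg_of_neg_of_pos (by linarith) (by positivity)
  linarith
end

section
/- If v_ε(r) = ū_ε(r) − ln r is positive for all 0 < r < 1, then ∫₀¹ r²·sinh(v_ε(r)) dr ≤ ε²/2. -/
open Real Set Metric

variable {F : Type*} [NormedAddCommGroup F] [InnerProductSpace ℝ F]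

lemma hasFDerivAt_norm' {y : F} (hy : y ≠ 0) :
    HasFDerivAt (fun x : F => ‖x‖) ((‖y‖⁻¹ : ℝ) • innerSL ℝ y) y := by
  have hq : HasFDerivAt (fun x : F => ‖x‖ ^ 2) (2 • innerSL ℝ y) y := by
    simpa using (hasFDerivAt_id y).norm_sq
  have hy' : (0:ℝ) < ‖y‖ := norm_pos_iff.mpr hy
  have hs : HasDerivAt (√·) (1 / (2 * √(‖y‖ ^ 2))) (‖y‖ ^ 2) :=
    Real.hasDerivAt_sqrt (by positivity)
  have h2 := hs.comp_hasFDerivAt y hq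
  have heq : ((√·) ∘ fun x : F => ‖x‖ ^ 2) = fun x : F => ‖x‖ := by
    funext x; simp [Function.comp, Real.sqrt_sq (norm_nonneg x)]
  rw [heq] at h2
  convert h2 using 1
  · rfl
  · rfl
  rw [Real.sqrt_sq (norm_nonneg y)]
  ext z
  simp [smul_smul]
  rw [← mul_assoc]
  congr 1
  field_simp

noncomputable abbrev ee (i : Fin 2) : EuclideanSpace ℝ (Fin 2) := EuclideanSpace.single i 1

section main
variable (u : EuclideanSpace ℝ (Fin 2) → ℝ) (g : ℝ → ℝ)
  (hs : ContDiffOn ℝ (⊤ : ℕ∞) u (ball 0 1))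
  (hrad : ∀ x ∈ closedBall (0 : EuclideanSpace ℝ (Fin 2)) 1, u x = g ‖x‖)

lemma norm_smul_ee (r : ℝ) : ‖r • ee 0‖ = |r| := by
  rw [norm_smul]; simp

include hs hrad in
lemma g_smooth : ContDiffOn ℝ (⊤ : ℕ∞) g (Ioo 0 1) := by
  have hc : ContDiffOn ℝ (⊤ : ℕ∞) (fun r : ℝ => u (r • ee 0)) (Ioo 0 1) := by
    apply hs.comp ((contDiff_id.smul contDiff_const).contDiffOn)
    intro r hr
    simp only [mem_ball, dist_zero_right, Pi.smul_apply', norm_smul_ee, id_eq]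
    rw [abs_of_pos hr.1]; exact hr.2
  apply hc.congr
  intro r hr
  have := hrad (r • ee 0) (by
    simp only [mem_closedBall, dist_zero_right, norm_smul_ee]
    rw [abs_of_pos hr.1]; exact hr.2.le)
  rw [this, norm_smul_ee, abs_of_pos hr.1]

include hs hrad in
lemma dg_smooth : ContDiffOn ℝ (⊤ : ℕ∞) (deriv g) (Ioo 0 1) :=
  (g_smooth u g hs hrad).deriv_of_isOpen isOpen_Ioo (by simp)

include hs hrad in
lemma fderiv_u {y : EuclideanSpace ℝ (Fin 2)} (hy : y ∈ ball (0:EuclideanSpace ℝ (Fin 2)) 1)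
    (hy0 : y ≠ 0) :
    fderiv ℝ u y = (deriv g ‖y‖ * ‖y‖⁻¹) • innerSL ℝ y := by
  have hn : ‖y‖ ∈ Ioo (0:ℝ) 1 := ⟨norm_pos_iff.mpr hy0, by simpa [dist_zero_right] using hy⟩
  have hgd : HasDerivAt g (deriv g ‖y‖) ‖y‖ :=
    (((g_smooth u g hs hrad).contDiffAt (isOpen_Ioo.mem_nhds hn)).differentiableAt (by simp)).hasDerivAt
  have h2 := hgd.comp_hasFDerivAt y (hasFDerivAt_norm' hy0)
  have hev : (fun x : EuclideanSpace ℝ (Fin 2) => g ‖x‖) =ᶠ[nhds y] u := by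
    filter_upwards [isOpen_ball.eventually_mem hy] with x hx
    exact (hrad x (ball_subset_closedBall hx)).symm
  have h3 : HasFDerivAt u (deriv g ‖y‖ • ‖y‖⁻¹ • innerSL ℝ y) y := by
    exact HasFDerivAt.congr_of_eventuallyEq h2 hev.symm
  rw [h3.fderiv, smul_smul]
include hs hrad in
lemma fderiv_u_apply {y : EuclideanSpace ℝ (Fin 2)} (hy : y ∈ ball (0:EuclideanSpace ℝ (Fin 2)) 1)
    (hy0 : y ≠ 0) (i : Fin 2) :
    fderiv ℝ u y (ee i) = deriv g ‖y‖ * ‖y‖⁻¹ * y i := by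
  rw [fderiv_u u g hs hrad hy hy0]
  fin_cases i <;> simp [EuclideanSpace.inner_single_right, mul_comm]

include hs hrad in
lemma diff_F {r : ℝ} (hr : r ∈ Ioo (0:ℝ) 1) (i : Fin 2) :
    DifferentiableAt ℝ (fun y => fderiv ℝ u y (ee i)) (r • ee 0) := by
  have hx : r • ee 0 ∈ ball (0:EuclideanSpace ℝ (Fin 2)) 1 := by
    simp only [mem_ball, dist_zero_right, norm_smul_ee]
    rw [abs_of_pos hr.1]; exact hr.2
  have hc : ContDiffAt ℝ (⊤ : ℕ∞) u (r • ee 0) := hs.contDiffAt (isOpen_ball.mem_nhds hx)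
  have h2 : DifferentiableAt ℝ (fderiv ℝ u) (r • ee 0) :=
    (hc.fderiv_right (m := 1) (WithTop.coe_le_coe.mpr le_top)).differentiableAt one_ne_zero
  exact ((ContinuousLinearMap.apply ℝ ℝ (ee i)).differentiableAt).comp _ h2

include hs hrad in
lemma key_line {r : ℝ} (hr : r ∈ Ioo (0:ℝ) 1) (i : Fin 2) :
    HasDerivAt (fun t : ℝ => fderiv ℝ u ((r • ee 0) + t • ee i) (ee i))
      (fderiv ℝ (fun y => fderiv ℝ u y (ee i)) (r • ee 0) (ee i)) 0 := by
  have hline : HasDerivAt (fun t : ℝ => (r • ee 0) + t • ee i) (ee i) 0 := by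
    simpa using (((hasDerivAt_id (0:ℝ)).smul_const (ee i)).const_add (r • ee 0))
  have hF := (diff_F u g hs hrad hr i).hasFDerivAt
  have hF' : HasFDerivAt (fun y => fderiv ℝ u y (ee i))
      (fderiv ℝ (fun y => fderiv ℝ u y (ee i)) (r • ee 0))
      ((fun t : ℝ => (r • ee 0) + t • ee i) 0) := by simpa using hF
  exact hF'.comp_hasDerivAt 0 hline
include hs hrad in
lemma sd0 {r : ℝ} (hr : r ∈ Ioo (0:ℝ) 1) :
    fderiv ℝ (fun y => fderiv ℝ u y (ee 0)) (r • ee 0) (ee 0) = deriv (deriv g) r := by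
  have hkey := key_line u g hs hrad hr 0
  have hev : (fun t : ℝ => fderiv ℝ u ((r • ee 0) + t • ee 0) (ee 0)) =ᶠ[nhds 0]
      (fun t : ℝ => deriv g (r + t)) := by
    have hmem : ∀ᶠ t : ℝ in nhds 0, r + t ∈ Ioo (0:ℝ) 1 := by
      have : ContinuousAt (fun t : ℝ => r + t) 0 := by fun_prop
      exact this.eventually_mem (by simpa using isOpen_Ioo.mem_nhds (by simpa using hr))
    filter_upwards [hmem] with t ht
    have hcomb : (r • ee 0) + t • ee 0 = (r + t) • ee 0 := by rw [add_smul]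
    rw [hcomb, fderiv_u_apply u g hs hrad (y := (r+t) • ee 0) ?_ ?_ 0]
    · rw [norm_smul_ee, abs_of_pos ht.1]
      have h1 : ((r + t) • ee 0) 0 = r + t := by
        simp [PiLp.smul_apply, EuclideanSpace.single_apply]
      rw [h1, mul_assoc, inv_mul_cancel₀ (ne_of_gt ht.1), mul_one]
    · simp only [mem_ball, dist_zero_right, norm_smul_ee]
      rw [abs_of_pos ht.1]; exact ht.2
    · apply norm_ne_zero_iff.mp
      rw [norm_smul_ee]
      exact ne_of_gt (by rw [abs_of_pos ht.1]; exact ht.1)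
  have hkey' : HasDerivAt (fun t : ℝ => deriv g (r + t))
      (fderiv ℝ (fun y => fderiv ℝ u y (ee 0)) (r • ee 0) (ee 0)) 0 :=
    hkey.congr_of_eventuallyEq hev.symm
  have hdg2 : HasDerivAt (deriv g) (deriv (deriv g) r) r :=
    (((dg_smooth u g hs hrad).contDiffAt (isOpen_Ioo.mem_nhds hr)).differentiableAt
      (by simp)).hasDerivAt
  have hE0 : HasDerivAt (fun t : ℝ => deriv g (r + t)) (deriv (deriv g) r) 0 := by
    have h2 := HasDerivAt.comp_of_eq (0:ℝ) hdg2 ((hasDerivAt_id (0:ℝ)).const_add r) (by simp)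
    rw [mul_one] at h2
    exact h2
  exact hkey'.unique hE0

lemma norm_combo (r t : ℝ) :
    ‖(r • ee 0 + t • ee 1 : EuclideanSpace ℝ (Fin 2))‖ = √(r^2 + t^2) := by
  rw [EuclideanSpace.norm_eq]
  congr 1
  rw [Fin.sum_univ_two]
  simp [EuclideanSpace.single_apply, Real.norm_eq_abs, sq_abs]

include hs hrad in
lemma sd1 {r : ℝ} (hr : r ∈ Ioo (0:ℝ) 1) :
    fderiv ℝ (fun y => fderiv ℝ u y (ee 1)) (r • ee 0) (ee 1) = deriv g r * r⁻¹ := by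
  have hkey := key_line u g hs hrad hr 1
  set ρ : ℝ → ℝ := fun t => deriv g (√(r^2 + t^2)) * (√(r^2 + t^2))⁻¹ with hρdef
  have hev : (fun t : ℝ => fderiv ℝ u ((r • ee 0) + t • ee 1) (ee 1)) =ᶠ[nhds 0]
      (fun t : ℝ => ρ t * t) := by
    have hmem : ∀ᶠ t : ℝ in nhds 0, r^2 + t^2 < 1 := by
      have hc : ContinuousAt (fun t : ℝ => r^2 + t^2) 0 := by fun_prop
      exact hc.eventually_mem (Iio_mem_nhds (by nlinarith [hr.1, hr.2]))
    filter_upwards [hmem] with t ht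
    have hn : ‖(r • ee 0 + t • ee 1 : EuclideanSpace ℝ (Fin 2))‖ = √(r^2 + t^2) :=
      norm_combo r t
    have hpos : (0:ℝ) < √(r^2 + t^2) := Real.sqrt_pos.mpr (by nlinarith [hr.1, sq_nonneg t])
    rw [fderiv_u_apply u g hs hrad (y := r • ee 0 + t • ee 1) ?_ ?_ 1]
    · rw [hn]
      have h1 : (r • ee 0 + t • ee 1 : EuclideanSpace ℝ (Fin 2)) 1 = t := by
        simp [EuclideanSpace.single_apply]
      rw [h1]
    · simp only [mem_ball, dist_zero_right, hn]
      rw [show (1:ℝ) = √1 by simp]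
      exact Real.sqrt_lt_sqrt (by positivity) ht
    · exact norm_ne_zero_iff.mp (by rw [hn]; exact ne_of_gt hpos)
  have hkey' : HasDerivAt (fun t : ℝ => ρ t * t)
      (fderiv ℝ (fun y => fderiv ℝ u y (ee 1)) (r • ee 0) (ee 1)) 0 :=
    hkey.congr_of_eventuallyEq hev.symm
  -- the explicit derivative
  have hsq0 : √(r^2 + 0^2) = r := by
    rw [show r^2 + 0^2 = r^2 by ring, Real.sqrt_sq hr.1.le]
  have hq : DifferentiableAt ℝ (fun t : ℝ => r^2 + t^2) 0 := by fun_prop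
  have hsqd : DifferentiableAt ℝ (fun t : ℝ => √(r^2 + t^2)) 0 :=
    hq.sqrt (by simp; nlinarith [hr.1])
  have hdgat : DifferentiableAt ℝ (deriv g) r :=
    ((dg_smooth u g hs hrad).contDiffAt (isOpen_Ioo.mem_nhds hr)).differentiableAt (by simp)
  have hρd : DifferentiableAt ℝ ρ 0 := by
    apply DifferentiableAt.mul
    · have h3 : DifferentiableAt ℝ (deriv g) (√(r^2 + 0^2)) := by rw [hsq0]; exact hdgat
      exact h3.comp 0 hsqd
    · exact hsqd.inv (by rw [hsq0]; exact ne_of_gt hr.1)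
  have hE1 : HasDerivAt (fun t : ℝ => ρ t * t) (deriv g r * r⁻¹) 0 := by
    have h2 := hρd.hasDerivAt.mul (hasDerivAt_id (0:ℝ))
    simp only [id_eq, mul_zero, mul_one, zero_add] at h2
    refine h2.congr_deriv (Eq.symm ?_)
    simp [hρdef, Real.sqrt_sq hr.1.le]
  exact hkey'.unique hE1
include hs hrad in
lemma lap_radial {r : ℝ} (hr : r ∈ Ioo (0:ℝ) 1) :
    laplacian2 u (r • ee 0) = deriv (deriv g) r + deriv g r * r⁻¹ := by
  rw [laplacian2, Fin.sum_univ_two]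
  rw [show (EuclideanSpace.single (0 : Fin 2) (1:ℝ)) = ee 0 from rfl,
    show (EuclideanSpace.single (1 : Fin 2) (1:ℝ)) = ee 1 from rfl,
    sd0 u g hs hrad hr, sd1 u g hs hrad hr]

-- The ODE for h(r) = r * g'(r)
lemma ode_h (ε : ℝ) (hε : 0 < ε) (hu : IsDirichletSol ε u)
    (hrad' : ∀ x ∈ closedBall (0 : EuclideanSpace ℝ (Fin 2)) 1, u x = g ‖x‖)
    {r : ℝ} (hr : r ∈ Ioo (0:ℝ) 1) :
    HasDerivAt (fun s => s * deriv g s)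
      (2 * (ε^2)⁻¹ * (r^2 * Real.sinh (g r - Real.log r))) r := by
  obtain ⟨hc, hsm, hpde, hbd⟩ := hu
  have hx : r • ee 0 ∈ ball (0:EuclideanSpace ℝ (Fin 2)) 1 := by
    simp only [mem_ball, dist_zero_right, norm_smul_ee]
    rw [abs_of_pos hr.1]; exact hr.2
  have hgd : DifferentiableAt ℝ g r :=
    ((g_smooth u g hsm hrad' ).contDiffAt (isOpen_Ioo.mem_nhds hr)).differentiableAt (by simp)
  have hdgd : DifferentiableAt ℝ (deriv g) r :=
    ((dg_smooth u g hsm hrad').contDiffAt (isOpen_Ioo.mem_nhds hr)).differentiableAt (by simp)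
  have hprod : HasDerivAt (fun s => s * deriv g s)
      (1 * deriv g r + r * deriv (deriv g) r) r :=
    (hasDerivAt_id r).mul hdgd.hasDerivAt
  convert hprod using 1
  have hlap := lap_radial u g hsm hrad' hr
  have hval : u (r • ee 0) = g r := by
    have := hrad' (r • ee 0) (by
      simp only [mem_closedBall, dist_zero_right, norm_smul_ee]
      rw [abs_of_pos hr.1]; exact hr.2.le)
    rw [this, norm_smul_ee, abs_of_pos hr.1]
  have hpde' := hpde (r • ee 0) hx
  rw [hlap, hval, norm_smul_ee, abs_of_pos hr.1] at hpde'
  -- hpde' : deriv (deriv g) r + deriv g r * r⁻¹ = (ε^2)⁻¹ * (exp (g r) - r^2 * exp (-(g r)))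
  have hrne : r ≠ 0 := ne_of_gt hr.1
  have hsinh : Real.sinh (g r - Real.log r)
      = (Real.exp (g r) / r - r * Real.exp (-(g r))) / 2 := by
    rw [Real.sinh_eq, neg_sub, Real.exp_sub, Real.exp_sub, Real.exp_log hr.1, Real.exp_neg]
    field_simp
  rw [hsinh]
  have : deriv (deriv g) r = (ε^2)⁻¹ * (Real.exp (g r) - r^2 * Real.exp (-(g r)))
      - deriv g r * r⁻¹ := by linarith [hpde']
  rw [this]
  field_simp
  ring
end main


/-- if `v_ε(r) = ū_ε(r) − ln r` is positive on `(0,1)`, then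
`∫₀¹ r²·sinh(v_ε(r)) dr ≤ ε²/2`. -/
theorem stmt_4 (ε : ℝ) (hε : 0 < ε) (u : EuclideanSpace ℝ (Fin 2) → ℝ) (g : ℝ → ℝ)
    (hu : IsDirichletSol ε u)
    (hrad : ∀ x ∈ closedBall (0 : EuclideanSpace ℝ (Fin 2)) 1, u x = g ‖x‖)
    (hpos : ∀ r ∈ Ioo (0 : ℝ) 1, 0 < g r - Real.log r) :
    ∫ r in (0 : ℝ)..1, r ^ 2 * Real.sinh (g r - Real.log r) ≤ ε ^ 2 / 2 := by
  obtain ⟨hc, hsm, hpde, hbd⟩ := hu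
  set f : ℝ → ℝ := fun r => r ^ 2 * Real.sinh (g r - Real.log r) with hfdef
  set h : ℝ → ℝ := fun r => r * deriv g r with hhdef
  have hode : ∀ r ∈ Ioo (0:ℝ) 1, HasDerivAt h (2 * (ε^2)⁻¹ * f r) r :=
    fun r hr => ode_h u g ε hε ⟨hc, hsm, hpde, hbd⟩ hrad hr
  have hfpos : ∀ r ∈ Ioo (0:ℝ) 1, 0 < f r := by
    intro r hr
    have h7 : (0:ℝ) < r ^ 2 := pow_pos hr.1 2
    exact mul_pos h7 (Real.sinh_pos_iff.mpr (hpos r hr))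
  -- h is strictly monotone on (0,1)
  have hmono : StrictMonoOn h (Ioo 0 1) := by
    apply strictMonoOn_of_deriv_pos (convex_Ioo 0 1)
    · exact fun r hr => ((hode r hr).differentiableAt.continuousAt).continuousWithinAt
    · intro x hx
      rw [interior_Ioo] at hx
      rw [(hode x hx).deriv]
      have := hfpos x hx
      positivity
  -- continuity of g on [0,1]
  have hγc : ContinuousOn (fun r : ℝ => u (r • ee 0)) (Icc 0 1) := by
    apply hc.comp (Continuous.continuousOn (by fun_prop))
    intro r hr
    simp only [mem_closedBall, dist_zero_right, norm_smul_ee]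
    rw [abs_of_nonneg hr.1]; exact hr.2
  have hgc : ContinuousOn g (Icc 0 1) := by
    apply hγc.congr
    intro r hr
    have h5 := hrad (r • ee 0) (by
      simp only [mem_closedBall, dist_zero_right, norm_smul_ee]
      rw [abs_of_nonneg hr.1]; exact hr.2)
    show g r = u (r • ee 0)
    rw [h5, norm_smul_ee, abs_of_nonneg hr.1]
  have hg1 : g 1 = 0 := by
    have h1 : u (ee 0) = 0 := hbd (ee 0) (by simp [mem_sphere, dist_zero_right])
    have h2 := hrad (ee 0) (by simp [mem_closedBall, dist_zero_right])
    rw [h1] at h2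
    simpa using h2.symm
  have hgdiff : ∀ x ∈ Ioo (0:ℝ) 1, HasDerivAt g (deriv g x) x := fun x hx =>
    (((g_smooth u g hsm hrad).contDiffAt (isOpen_Ioo.mem_nhds hx)).differentiableAt
      (by simp)).hasDerivAt
  -- h ≤ 1 on (0,1)
  have hle1 : ∀ b ∈ Ioo (0:ℝ) 1, h b ≤ 1 := by
    by_contra hcon
    push_neg at hcon
    obtain ⟨b, hb, hb1⟩ := hcon
    have hv : StrictMonoOn (fun r => g r - Real.log r) (Icc b 1) := by
      apply strictMonoOn_of_deriv_pos (convex_Icc b 1)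
      · apply ContinuousOn.sub
        · exact hgc.mono (Icc_subset_Icc hb.1.le le_rfl)
        · exact Real.continuousOn_log.mono (fun x hx => ne_of_gt (lt_of_lt_of_le hb.1 hx.1))
      · intro x hx
        rw [interior_Icc] at hx
        have hx' : x ∈ Ioo (0:ℝ) 1 := ⟨lt_trans hb.1 hx.1, hx.2⟩
        have hder : HasDerivAt (fun r => g r - Real.log r) (deriv g x - x⁻¹) x :=
          (hgdiff x hx').sub (Real.hasDerivAt_log (ne_of_gt hx'.1))
        rw [hder.deriv]
        have hhx : 1 < h x := lt_trans hb1 (hmono hb hx' hx.1)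
        simp only [hhdef] at hhx
        have hx0 : 0 < x := hx'.1
        have hinv : x * x⁻¹ = 1 := mul_inv_cancel₀ (ne_of_gt hx0)
        nlinarith [hhx]
    have hvb1 : g b - Real.log b < g 1 - Real.log 1 :=
      hv ⟨le_rfl, hb.2.le⟩ ⟨hb.2.le, le_rfl⟩ hb.2
    rw [hg1, Real.log_one] at hvb1
    linarith [hpos b hb]
  -- h ≥ 0 on (0,1)
  have hge0 : ∀ a ∈ Ioo (0:ℝ) 1, 0 ≤ h a := by
    by_contra hcon
    push_neg at hcon
    obtain ⟨a, ha, ha0⟩ := hcon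
    set c : ℝ := -h a with hcdef
    have hc0 : 0 < c := by simp [hcdef]; linarith
    obtain ⟨x₀, _, hx₀⟩ := IsCompact.exists_isMaxOn isCompact_Icc
      ⟨0, left_mem_Icc.mpr zero_le_one⟩ hgc
    set C : ℝ := g x₀ with hCdef
    set w : ℝ → ℝ := fun r => g r + c * Real.log r with hwdef
    have hkey : ∀ t ∈ Ioo (0:ℝ) a, w a < w t := by
      intro t ht
      have hanti : StrictAntiOn w (Icc t a) := by
        apply strictAntiOn_of_deriv_neg (convex_Icc t a)
        · apply ContinuousOn.add
          · exact hgc.mono (Icc_subset_Icc ht.1.le ha.2.le)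
          · apply ContinuousOn.mul continuousOn_const
            exact Real.continuousOn_log.mono (fun x hx => ne_of_gt (lt_of_lt_of_le ht.1 hx.1))
        · intro x hx
          rw [interior_Icc] at hx
          have hx' : x ∈ Ioo (0:ℝ) 1 := ⟨lt_trans ht.1 hx.1, lt_trans hx.2 ha.2⟩
          have hder : HasDerivAt w (deriv g x + c * x⁻¹) x :=
            (hgdiff x hx').add ((Real.hasDerivAt_log (ne_of_gt hx'.1)).const_mul c)
          rw [hder.deriv]
          have hhx : h x < h a := hmono hx' ha hx.2
          have hx0 : 0 < x := hx'.1
          have hinv : x * x⁻¹ = 1 := mul_inv_cancel₀ (ne_of_gt hx0)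
          have h6 : x * deriv g x < a * deriv g a := by simpa only [hhdef] using hhx
          have hc2 : c = -(a * deriv g a) := by simp only [hcdef, hhdef]
          nlinarith [h6, hc2, hinv, hx0]
      exact hanti ⟨le_rfl, ht.2.le⟩ ⟨ht.2.le, le_rfl⟩ ht.2
    have hC : ∀ x ∈ Icc (0:ℝ) 1, g x ≤ C := fun x hx => hx₀ hx
    set t : ℝ := min (a/2) (Real.exp ((w a - C - 1)/c)) with htdef
    have ht0 : 0 < t := lt_min (by linarith [ha.1]) (Real.exp_pos _)
    have hta : t < a := lt_of_le_of_lt (min_le_left _ _) (by linarith [ha.1])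
    have hlog : Real.log t ≤ (w a - C - 1)/c := by
      have h8 : t ≤ Real.exp ((w a - C - 1)/c) := min_le_right _ _
      have := (Real.log_le_log_iff ht0 (Real.exp_pos _)).mpr h8
      rwa [Real.log_exp] at this
    have hwt := hkey t ⟨ht0, hta⟩
    have hgt : g t ≤ C := hC t ⟨ht0.le, le_trans hta.le ha.2.le⟩
    have hup : w t ≤ C + c * ((w a - C - 1)/c) := by
      simp only [hwdef]
      have h9 := mul_le_mul_of_nonneg_left hlog hc0.le
      linarith [hgt, h9]
    have hcc : c * ((w a - C - 1)/c) = w a - C - 1 := by field_simp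
    rw [hcc] at hup
    linarith [hwt, hup]
  -- the integral computation
  have hε2 : (ε:ℝ)^2 ≠ 0 := by positivity
  set ψ : ℝ → ℝ := fun r => (r * Real.exp (g r) - r^3 * Real.exp (-(g r)))/2 with hψdef
  have hEq : ∀ r ∈ Icc (0:ℝ) 1, f r = ψ r := by
    intro r hr
    rcases eq_or_lt_of_le hr.1 with h0 | h0
    · simp [hfdef, hψdef, ← h0]
    · simp only [hfdef, hψdef]
      rw [Real.sinh_eq, neg_sub, Real.exp_sub, Real.exp_sub, Real.exp_log h0, Real.exp_neg]
      field_simp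
  have hψc : ContinuousOn ψ (Icc 0 1) := by
    apply ContinuousOn.div_const
    apply ContinuousOn.sub
    · exact continuousOn_id.mul (Real.continuous_exp.comp_continuousOn hgc)
    · exact ((continuous_pow 3).continuousOn).mul
        (Real.continuous_exp.comp_continuousOn hgc.neg)
  set Ψ : ℝ → ℝ := fun t => ∫ s in (0:ℝ)..t, ψ s with hΨdef
  have hψint : MeasureTheory.IntegrableOn ψ (uIcc (0:ℝ) 1) MeasureTheory.volume := by
    rw [uIcc_of_le zero_le_one]
    exact hψc.integrableOn_Icc
  have hΨc : ContinuousOn Ψ (Icc 0 1) := by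
    have := intervalIntegral.continuousOn_primitive_interval hψint
    rwa [uIcc_of_le zero_le_one] at this
  have hii : ∀ c d : ℝ, 0 ≤ c → c ≤ d → d ≤ 1 →
      IntervalIntegrable ψ MeasureTheory.volume c d := by
    intro c d h1 h2 h3
    apply ContinuousOn.intervalIntegrable
    apply hψc.mono
    rw [uIcc_of_le h2]
    exact Icc_subset_Icc h1 h3
  have hkey2 : ∀ a b : ℝ, a ∈ Ioo (0:ℝ) 1 → b ∈ Ioo (0:ℝ) 1 → a ≤ b → Ψ b - Ψ a ≤ ε^2/2 := by
    intro a b ha hb hab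
    have hsub : Ψ b - Ψ a = ∫ s in a..b, ψ s :=
      intervalIntegral.integral_interval_sub_left
        (hii 0 b le_rfl hb.1.le hb.2.le) (hii 0 a le_rfl ha.1.le ha.2.le)
    have hfd : ∀ x ∈ uIcc a b, HasDerivAt (fun r => ε^2/2 * h r) (ψ x) x := by
      intro x hx
      rw [uIcc_of_le hab] at hx
      have hx' : x ∈ Ioo (0:ℝ) 1 := ⟨lt_of_lt_of_le ha.1 hx.1, lt_of_le_of_lt hx.2 hb.2⟩
      have h10 := (hode x hx').const_mul (ε^2/2)
      refine h10.congr_deriv (Eq.symm ?_)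
      rw [← hEq x ⟨hx'.1.le, hx'.2.le⟩]
      field_simp
    have hval : (∫ s in a..b, ψ s) = ε^2/2 * h b - ε^2/2 * h a :=
      intervalIntegral.integral_eq_sub_of_hasDerivAt hfd (hii a b ha.1.le hab hb.2.le)
    rw [hsub, hval]
    have h1 := hle1 b hb
    have h2 := hge0 a ha
    nlinarith [h1, h2, sq_nonneg ε]
  -- limits along sequences
  have htend_a : Filter.Tendsto (fun n : ℕ => ((n:ℝ)+2)⁻¹) Filter.atTop (nhds 0) :=
    tendsto_inv_atTop_zero.comp
      (Filter.tendsto_atTop_add_const_right Filter.atTop 2 tendsto_natCast_atTop_atTop)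
  have htend_b : Filter.Tendsto (fun n : ℕ => 1 - ((n:ℝ)+2)⁻¹) Filter.atTop (nhds 1) := by
    have := Filter.Tendsto.sub (tendsto_const_nhds (x := (1:ℝ)) (f := Filter.atTop (α := ℕ)))
      htend_a
    simpa using this
  have hmem_a : ∀ n : ℕ, ((n:ℝ)+2)⁻¹ ∈ Ioo (0:ℝ) 1 := by
    intro n
    have hn2 : (1:ℝ) < (n:ℝ) + 2 := by
      have := Nat.cast_nonneg (α := ℝ) n
      linarith
    exact ⟨by positivity, inv_lt_one_of_one_lt₀ hn2⟩
  have hmem_b : ∀ n : ℕ, 1 - ((n:ℝ)+2)⁻¹ ∈ Ioo (0:ℝ) 1 := by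
    intro n
    have h1 := hmem_a n
    exact ⟨by linarith [h1.2], by linarith [h1.1]⟩
  have hab' : ∀ n : ℕ, ((n:ℝ)+2)⁻¹ ≤ 1 - ((n:ℝ)+2)⁻¹ := by
    intro n
    have hn2 : (2:ℝ) ≤ (n:ℝ) + 2 := by
      have := Nat.cast_nonneg (α := ℝ) n
      linarith
    have h11 : ((n:ℝ)+2)⁻¹ ≤ 2⁻¹ := by
      apply inv_anti₀ (by norm_num) hn2
    linarith [h11]
  have hseq : Filter.Tendsto (fun n : ℕ => Ψ (1 - ((n:ℝ)+2)⁻¹) - Ψ (((n:ℝ)+2)⁻¹))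
      Filter.atTop (nhds (Ψ 1 - Ψ 0)) := by
    apply Filter.Tendsto.sub
    · apply ((hΨc 1 (right_mem_Icc.mpr zero_le_one)).tendsto).comp
      apply tendsto_nhdsWithin_iff.mpr
      exact ⟨htend_b, Filter.Eventually.of_forall fun n => mem_Icc_of_Ioo (hmem_b n)⟩
    · apply ((hΨc 0 (left_mem_Icc.mpr zero_le_one)).tendsto).comp
      apply tendsto_nhdsWithin_iff.mpr
      exact ⟨htend_a, Filter.Eventually.of_forall fun n => mem_Icc_of_Ioo (hmem_a n)⟩
  have hfinal : Ψ 1 - Ψ 0 ≤ ε^2/2 :=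
    le_of_tendsto' hseq fun n => hkey2 _ _ (hmem_a n) (hmem_b n) (hab' n)
  have hΨ0 : Ψ 0 = 0 := intervalIntegral.integral_same
  have hcongr : (∫ r in (0:ℝ)..1, f r) = Ψ 1 := by
    simp only [hΨdef]
    exact intervalIntegral.integral_congr
      (fun r hr => hEq r (by rwa [uIcc_of_le zero_le_one] at hr))
  rw [hcongr]
  linarith [hfinal, hΨ0]
end

section
/- If v_ε(r) = ū_ε(r) − ln r is positive and strictly decreasing on (0,1), then sinh(v_ε(1/4)) ≤ 2⁸·ε². -/
open Real Set Metric

namespace Stmt5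

noncomputable def e0 : EuclideanSpace ℝ (Fin 2) := EuclideanSpace.single 0 1

lemma norm_smul_e0 {r : ℝ} (hr : 0 ≤ r) : ‖r • e0‖ = r := by
  rw [norm_smul, e0, EuclideanSpace.norm_single]
  simp [abs_of_nonneg hr]

noncomputable def q (y : EuclideanSpace ℝ (Fin 2)) : ℝ := (y 0)^2 + (y 1)^2

lemma q_nonneg (y : EuclideanSpace ℝ (Fin 2)) : 0 ≤ q y := add_nonneg (sq_nonneg _) (sq_nonneg _)

lemma norm_eq_sqrt_q (y : EuclideanSpace ℝ (Fin 2)) : ‖y‖ = Real.sqrt (q y) := by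
  rw [EuclideanSpace.norm_eq, q]
  congr 1
  simp [Fin.sum_univ_two, Real.norm_eq_abs, sq_abs]

lemma sq_norm_eq_q (y : EuclideanSpace ℝ (Fin 2)) : ‖y‖^2 = q y :=
  by rw [norm_eq_sqrt_q, Real.sq_sqrt (q_nonneg y)]

noncomputable def hh (u : EuclideanSpace ℝ (Fin 2) → ℝ) : ℝ → ℝ :=
  fun s => u (Real.sqrt s • e0)

lemma hh_contDiffOn {u : EuclideanSpace ℝ (Fin 2) → ℝ}
    (hu : ContDiffOn ℝ (⊤ : ℕ∞) u (ball 0 1)) : ContDiffOn ℝ (⊤ : ℕ∞) (hh u) (Ioo 0 1) := by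
  intro s hs
  have h1 : ContDiffAt ℝ (⊤ : ℕ∞) (fun s : ℝ => Real.sqrt s • e0) s :=
    (Real.contDiffAt_sqrt (ne_of_gt hs.1)).smul contDiffAt_const
  have hmem : Real.sqrt s • e0 ∈ ball (0 : EuclideanSpace ℝ (Fin 2)) 1 := by
    rw [mem_ball_zero_iff, norm_smul_e0 (Real.sqrt_nonneg s)]
    calc Real.sqrt s < Real.sqrt 1 := Real.sqrt_lt_sqrt (le_of_lt hs.1) hs.2
      _ = 1 := Real.sqrt_one
  have h2 : ContDiffAt ℝ (⊤ : ℕ∞) u (Real.sqrt s • e0) :=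
    hu.contDiffAt (isOpen_ball.mem_nhds hmem)
  exact (h2.comp s h1).contDiffWithinAt

end Stmt5

namespace Stmt5

noncomputable def P (i : Fin 2) : EuclideanSpace ℝ (Fin 2) →L[ℝ] ℝ := EuclideanSpace.proj i

noncomputable def Lq (y : EuclideanSpace ℝ (Fin 2)) : EuclideanSpace ℝ (Fin 2) →L[ℝ] ℝ :=
  (2 * y 0) • P 0 + (2 * y 1) • P 1

lemma hasFDerivAt_q (y : EuclideanSpace ℝ (Fin 2)) : HasFDerivAt q (Lq y) y := by
  have key : ∀ i : Fin 2, HasFDerivAt (fun z : EuclideanSpace ℝ (Fin 2) => (P i z)^2)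
      ((2 * y i) • P i) y := by
    intro i
    have := ((P i).hasFDerivAt (x := y)).mul ((P i).hasFDerivAt (x := y))
    have e : P i y • P i + P i y • P i = (2 * y i) • P i := by
      rw [← add_smul]; ring_nf; rfl
    rw [e] at this
    simpa [pow_two, Pi.mul_def] using this
  exact (key 0).add (key 1)

end Stmt5

namespace Stmt5

section

variable {u : EuclideanSpace ℝ (Fin 2) → ℝ} {g : ℝ → ℝ}

lemma u_eq_hh_q (hrad : ∀ x ∈ closedBall (0 : EuclideanSpace ℝ (Fin 2)) 1, u x = g ‖x‖)
    {y : EuclideanSpace ℝ (Fin 2)} (hy : y ∈ closedBall (0 : EuclideanSpace ℝ (Fin 2)) 1) :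
    u y = hh u (q y) := by
  have hny : ‖y‖ ≤ 1 := by simpa [mem_closedBall_zero_iff] using hy
  have hs : Real.sqrt (q y) = ‖y‖ := (norm_eq_sqrt_q y).symm
  have hmem : Real.sqrt (q y) • e0 ∈ closedBall (0 : EuclideanSpace ℝ (Fin 2)) 1 := by
    rw [mem_closedBall_zero_iff, norm_smul_e0 (Real.sqrt_nonneg _), hs]; exact hny
  rw [hh, hrad _ hmem, norm_smul_e0 (Real.sqrt_nonneg _), hs, hrad _ hy]

lemma g_eq (hrad : ∀ x ∈ closedBall (0 : EuclideanSpace ℝ (Fin 2)) 1, u x = g ‖x‖)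
    {r : ℝ} (h0 : 0 ≤ r) (h1 : r ≤ 1) : g r = u (r • e0) := by
  have hmem : r • e0 ∈ closedBall (0 : EuclideanSpace ℝ (Fin 2)) 1 := by
    rw [mem_closedBall_zero_iff, norm_smul_e0 h0]; exact h1
  rw [hrad _ hmem, norm_smul_e0 h0]

lemma hh_eq_g (hrad : ∀ x ∈ closedBall (0 : EuclideanSpace ℝ (Fin 2)) 1, u x = g ‖x‖)
    {r : ℝ} (h0 : 0 ≤ r) (h1 : r ≤ 1) : hh u (r^2) = g r := by
  rw [hh, Real.sqrt_sq h0, ← g_eq hrad h0 h1]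

variable (hsm : ContDiffOn ℝ (⊤ : ℕ∞) u (ball 0 1))
include hsm

lemma hh_hasDerivAt {s : ℝ} (hs : s ∈ Ioo (0:ℝ) 1) :
    HasDerivAt (hh u) (deriv (hh u) s) s :=
  (((hh_contDiffOn hsm).contDiffAt (isOpen_Ioo.mem_nhds hs)).differentiableAt
    (by simp)).hasDerivAt

lemma hh_deriv_hasDerivAt {s : ℝ} (hs : s ∈ Ioo (0:ℝ) 1) :
    HasDerivAt (deriv (hh u)) (deriv (deriv (hh u)) s) s :=
  ((((hh_contDiffOn hsm).deriv_of_isOpen (m := (⊤ : ℕ∞)) isOpen_Ioo (by simp)).contDiffAt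
    (isOpen_Ioo.mem_nhds hs)).differentiableAt (by simp)).hasDerivAt

lemma u_hasFDerivAt
    (hrad : ∀ x ∈ closedBall (0 : EuclideanSpace ℝ (Fin 2)) 1, u x = g ‖x‖)
    {y : EuclideanSpace ℝ (Fin 2)} (hy : y ∈ ball (0 : EuclideanSpace ℝ (Fin 2)) 1)
    (hy0 : y ≠ 0) :
    HasFDerivAt u (deriv (hh u) (q y) • Lq y) y := by
  have hny : ‖y‖ < 1 := by simpa [mem_ball_zero_iff] using hy
  have hq : q y ∈ Ioo (0:ℝ) 1 := by
    constructor
    · rw [← sq_norm_eq_q]; exact pow_pos (norm_pos_iff.mpr hy0) 2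
    · rw [← sq_norm_eq_q]
      calc ‖y‖^2 ≤ ‖y‖ := by nlinarith [norm_nonneg y]
        _ < 1 := hny
  have hd : HasDerivAt (hh u) (deriv (hh u) (q y)) (q y) := hh_hasDerivAt hsm hq
  have hcomp := hd.comp_hasFDerivAt y (hasFDerivAt_q y)
  apply hcomp.congr_of_eventuallyEq
  filter_upwards [isOpen_ball.mem_nhds hy] with z hz
  exact u_eq_hh_q hrad (ball_subset_closedBall hz)

end

end Stmt5

namespace Stmt5

section
variable {u : EuclideanSpace ℝ (Fin 2) → ℝ} {g : ℝ → ℝ}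

lemma Lq_single (y : EuclideanSpace ℝ (Fin 2)) (i : Fin 2) :
    Lq y (EuclideanSpace.single i 1) = 2 * y i := by
  fin_cases i <;>
    simp [Lq, P, ContinuousLinearMap.add_apply, ContinuousLinearMap.smul_apply,
      EuclideanSpace.single_apply, smul_eq_mul]

lemma laplacian_radial (hsm : ContDiffOn ℝ (⊤ : ℕ∞) u (ball 0 1))
    (hrad : ∀ x ∈ closedBall (0 : EuclideanSpace ℝ (Fin 2)) 1, u x = g ‖x‖)
    {r : ℝ} (hr : r ∈ Ioo (0:ℝ) 1) :
    laplacian2 u (r • e0)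
      = 4 * r^2 * deriv (deriv (hh u)) (r^2) + 4 * deriv (hh u) (r^2) := by
  obtain ⟨hr0, hr1⟩ := hr
  set x : EuclideanSpace ℝ (Fin 2) := r • e0 with hxdef
  have hx0 : x 0 = r := by simp [hxdef, e0, EuclideanSpace.single_apply]
  have hx1 : x 1 = 0 := by simp [hxdef, e0, EuclideanSpace.single_apply]
  have hnx : ‖x‖ = r := norm_smul_e0 (le_of_lt hr0)
  have hqx : q x = r^2 := by rw [← sq_norm_eq_q, hnx]
  have hxb : x ∈ ball (0 : EuclideanSpace ℝ (Fin 2)) 1 := by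
    rw [mem_ball_zero_iff, hnx]; exact hr1
  have hxne : x ≠ 0 := by
    intro h; rw [h] at hnx; simp at hnx; exact (ne_of_gt hr0) hnx.symm
  have hs2 : r^2 ∈ Ioo (0:ℝ) 1 := ⟨pow_pos hr0 2, by nlinarith⟩
  set U : Set (EuclideanSpace ℝ (Fin 2)) := ball 0 1 ∩ {0}ᶜ with hUdef
  have hUopen : IsOpen U := isOpen_ball.inter isOpen_compl_singleton
  have hxU : x ∈ U := ⟨hxb, hxne⟩
  have hFi_eq : ∀ i : Fin 2, ∀ y ∈ U,
      fderiv ℝ u y (EuclideanSpace.single i 1) = deriv (hh u) (q y) * (2 * y i) := by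
    intro i y hy
    rw [(u_hasFDerivAt hsm hrad hy.1 hy.2).fderiv]
    rw [ContinuousLinearMap.smul_apply, Lq_single, smul_eq_mul]
  have hΦ : ∀ i : Fin 2, HasFDerivAt
      (fun y => fderiv ℝ u y (EuclideanSpace.single i 1))
      (deriv (hh u) (q x) • ((2:ℝ) • P i)
        + (2 * P i x) • (deriv (deriv (hh u)) (q x) • Lq x)) x := by
    intro i
    have hqx' : q x ∈ Ioo (0:ℝ) 1 := by rw [hqx]; exact hs2
    have hc : HasFDerivAt (fun y => deriv (hh u) (q y))
        (deriv (deriv (hh u)) (q x) • Lq x) x :=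
      (hh_deriv_hasDerivAt hsm hqx').comp_hasFDerivAt x (hasFDerivAt_q x)
    have hd : HasFDerivAt (fun y : EuclideanSpace ℝ (Fin 2) => 2 * P i y)
        ((2:ℝ) • P i) x := ((P i).hasFDerivAt).const_mul 2
    have := hc.mul hd
    apply this.congr_of_eventuallyEq
    filter_upwards [hUopen.mem_nhds hxU] with z hz
    exact hFi_eq i z hz
  have heval : ∀ i : Fin 2,
      fderiv ℝ (fun y => fderiv ℝ u y (EuclideanSpace.single i 1)) x
        (EuclideanSpace.single i 1)
      = deriv (hh u) (q x) * (2 * (EuclideanSpace.single i (1:ℝ)) i)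
        + (2 * x i) * (deriv (deriv (hh u)) (q x) * (2 * x i)) := by
    intro i
    rw [(hΦ i).fderiv]
    simp only [ContinuousLinearMap.add_apply, ContinuousLinearMap.smul_apply,
      Lq_single, smul_eq_mul]
    rfl
  rw [laplacian2, Fin.sum_univ_two, heval 0, heval 1, hqx, hx0, hx1]
  have h00 : (EuclideanSpace.single (0 : Fin 2) (1:ℝ)) 0 = 1 := by
    simp [EuclideanSpace.single_apply]
  have h11 : (EuclideanSpace.single (1 : Fin 2) (1:ℝ)) 1 = 1 := by
    simp [EuclideanSpace.single_apply]
  rw [h00, h11]; ring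

end

end Stmt5

namespace Stmt5

section
variable {ε : ℝ} {u : EuclideanSpace ℝ (Fin 2) → ℝ} {g : ℝ → ℝ}

lemma ode (hu : IsDirichletSol ε u)
    (hrad : ∀ x ∈ closedBall (0 : EuclideanSpace ℝ (Fin 2)) 1, u x = g ‖x‖)
    {r : ℝ} (hr : r ∈ Ioo (0:ℝ) 1) :
    4 * r^2 * deriv (deriv (hh u)) (r^2) + 4 * deriv (hh u) (r^2)
      = (ε^2)⁻¹ * (Real.exp (g r) - r^2 * Real.exp (-(g r))) := by
  have hxb : r • e0 ∈ ball (0 : EuclideanSpace ℝ (Fin 2)) 1 := by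
    rw [mem_ball_zero_iff, norm_smul_e0 (le_of_lt hr.1)]; exact hr.2
  have hpde := hu.2.2.1 (r • e0) hxb
  rw [laplacian_radial hu.2.1 hrad hr] at hpde
  rw [hpde, norm_smul_e0 (le_of_lt hr.1), ← g_eq hrad (le_of_lt hr.1) (le_of_lt hr.2)]

lemma sinh_form {r : ℝ} (hr0 : 0 < r) (a : ℝ) :
    Real.exp a - r^2 * Real.exp (-a) = 2 * r * Real.sinh (a - Real.log r) := by
  rw [Real.sinh_eq, neg_sub, Real.exp_sub, Real.exp_sub, Real.exp_log hr0, Real.exp_neg]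
  have h1 : Real.exp a ≠ 0 := Real.exp_ne_zero a
  field_simp

lemma FF_hasDerivAt (hu : IsDirichletSol ε u)
    (hrad : ∀ x ∈ closedBall (0 : EuclideanSpace ℝ (Fin 2)) 1, u x = g ‖x‖)
    {r : ℝ} (hr : r ∈ Ioo (0:ℝ) 1) :
    HasDerivAt (fun t => 2 * t^2 * deriv (hh u) (t^2))
      (2 * r^2 * (ε^2)⁻¹ * Real.sinh (g r - Real.log r)) r := by
  have hr2 : r^2 ∈ Ioo (0:ℝ) 1 := ⟨pow_pos hr.1 2, by nlinarith [hr.1, hr.2]⟩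
  have h1 : HasDerivAt (fun t : ℝ => t^2) (2*r) r := by
    simpa using hasDerivAt_pow 2 r
  have h2 : HasDerivAt (fun t : ℝ => deriv (hh u) (t^2))
      (deriv (deriv (hh u)) (r^2) * (2*r)) r := by
    have hd : HasDerivAt (deriv (hh u)) (deriv (deriv (hh u)) (r^2)) (r^2) :=
      hh_deriv_hasDerivAt hu.2.1 hr2
    simpa [Function.comp_def] using
      HasDerivAt.comp (h := fun t : ℝ => t^2) (x := r) hd h1
  have h3 : HasDerivAt (fun t : ℝ => 2*t^2) (2*(2*r)) r := h1.const_mul 2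
  have h4 := h3.mul h2
  have heq : 2*(2*r) * deriv (hh u) (r^2) + 2*r^2 * (deriv (deriv (hh u)) (r^2) * (2*r))
      = r * (4 * r^2 * deriv (deriv (hh u)) (r^2) + 4 * deriv (hh u) (r^2)) := by ring
  rw [heq, ode hu hrad hr, sinh_form hr.1] at h4
  exact h4.congr_deriv (by ring)

lemma v_hasDerivAt (hu : IsDirichletSol ε u)
    (hrad : ∀ x ∈ closedBall (0 : EuclideanSpace ℝ (Fin 2)) 1, u x = g ‖x‖)
    {r : ℝ} (hr : r ∈ Ioo (0:ℝ) 1) :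
    HasDerivAt (fun t => g t - Real.log t)
      (2 * r * deriv (hh u) (r^2) - 1/r) r := by
  have hr2 : r^2 ∈ Ioo (0:ℝ) 1 := ⟨pow_pos hr.1 2, by nlinarith [hr.1, hr.2]⟩
  have h1 : HasDerivAt (fun t : ℝ => t^2) (2*r) r := by
    simpa using hasDerivAt_pow 2 r
  have h2 : HasDerivAt (fun t : ℝ => hh u (t^2)) (deriv (hh u) (r^2) * (2*r)) r := by
    have hd : HasDerivAt (hh u) (deriv (hh u) (r^2)) (r^2) :=
      hh_hasDerivAt hu.2.1 hr2
    simpa [Function.comp_def] using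
      HasDerivAt.comp (h := fun t : ℝ => t^2) (x := r) hd h1
  have h3 : HasDerivAt (fun t : ℝ => hh u (t^2) - Real.log t)
      (deriv (hh u) (r^2) * (2*r) - 1/r) r := by
    simpa [one_div, Pi.sub_def] using h2.sub (Real.hasDerivAt_log (ne_of_gt hr.1))
  have heq : (fun t => g t - Real.log t) =ᶠ[nhds r] (fun t : ℝ => hh u (t^2) - Real.log t) := by
    filter_upwards [isOpen_Ioo.mem_nhds hr] with t ht
    rw [hh_eq_g hrad (le_of_lt ht.1) (le_of_lt ht.2)]
  have h4 := h3.congr_of_eventuallyEq heq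
  exact h4.congr_deriv (by ring)

lemma deriv_nonpos_of_strictAntiOn {f : ℝ → ℝ} {f' r : ℝ} (hf : HasDerivAt f f' r)
    (hr : r ∈ Ioo (0:ℝ) 1) (ha : StrictAntiOn f (Ioo 0 1)) : f' ≤ 0 := by
  have h := hasDerivAt_iff_tendsto_slope.1 hf
  have h2 : Filter.Tendsto (slope f r) (nhdsWithin r (Ioi r)) (nhds f') :=
    h.mono_left (nhdsWithin_mono r (fun z hz => ne_of_gt hz))
  apply le_of_tendsto h2
  filter_upwards [Ioo_mem_nhdsGT_of_mem ⟨le_refl r, hr.2⟩] with z hz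
  rw [slope_def_field]
  apply div_nonpos_of_nonpos_of_nonneg
  · have := ha hr ⟨lt_trans hr.1 hz.1, hz.2⟩ hz.1
    linarith
  · linarith [hz.1]

end

end Stmt5

namespace Stmt5

section
variable {ε : ℝ} {u : EuclideanSpace ℝ (Fin 2) → ℝ} {g : ℝ → ℝ}

lemma phi_hasDerivAt (hsm : ContDiffOn ℝ (⊤ : ℕ∞) u (ball 0 1)) {r : ℝ} (hr : r ∈ Ioo (0:ℝ) 1) :
    HasDerivAt (fun t : ℝ => hh u (t^2) + Real.log t)
      (2 * r * deriv (hh u) (r^2) + 1/r) r := by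
  have hr2 : r^2 ∈ Ioo (0:ℝ) 1 := ⟨pow_pos hr.1 2, by nlinarith [hr.1, hr.2]⟩
  have h1 : HasDerivAt (fun t : ℝ => t^2) (2*r) r := by
    simpa using hasDerivAt_pow 2 r
  have h2 : HasDerivAt (fun t : ℝ => hh u (t^2)) (deriv (hh u) (r^2) * (2*r)) r := by
    have hd : HasDerivAt (hh u) (deriv (hh u) (r^2)) (r^2) :=
      hh_hasDerivAt hsm hr2
    simpa [Function.comp_def] using
      HasDerivAt.comp (h := fun t : ℝ => t^2) (x := r) hd h1
  have h3 := h2.add (Real.hasDerivAt_log (ne_of_gt hr.1))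
  exact h3.congr_deriv (by rw [one_div]; ring)

end

end Stmt5

open Stmt5

/-- if `v_ε(r) = ū_ε(r) − ln r` is positive and strictly decreasing on `(0,1)`,
then `sinh(v_ε(1/4)) ≤ 2⁸·ε²`. -/
theorem stmt_5 (ε : ℝ) (hε : 0 < ε) (u : EuclideanSpace ℝ (Fin 2) → ℝ) (g : ℝ → ℝ)
    (hu : IsDirichletSol ε u)
    (hrad : ∀ x ∈ closedBall (0 : EuclideanSpace ℝ (Fin 2)) 1, u x = g ‖x‖)
    (hpos : ∀ r ∈ Ioo (0 : ℝ) 1, 0 < g r - Real.log r)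
    (hdec : StrictAntiOn (fun r => g r - Real.log r) (Ioo (0 : ℝ) 1)) :
    Real.sinh (g (1/4) - Real.log (1/4)) ≤ 2 ^ 8 * ε ^ 2 := by
  have hε2 : (0:ℝ) < ε^2 := pow_pos hε 2
  have hε2i : (0:ℝ) < (ε^2)⁻¹ := inv_pos.mpr hε2
  set S := Real.sinh (g (1/4) - Real.log (1/4)) with hSdef
  have hq4 : (1/4 : ℝ) ∈ Ioo (0:ℝ) 1 := by constructor <;> norm_num
  have hSpos : 0 < S := Real.sinh_pos_iff.mpr (hpos _ hq4)
  set FF : ℝ → ℝ := fun t => 2 * t^2 * deriv (hh u) (t^2) with hFFdef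
  set K : ℝ := 2 * (ε^2)⁻¹ * S with hKdef
  have hKpos : 0 < K := by positivity
  -- Step 1 : FF (1/4) ≤ 1
  have hF14 : FF (1/4) ≤ 1 := by
    have hv := v_hasDerivAt hu hrad hq4
    have hv0 := deriv_nonpos_of_strictAntiOn hv hq4 hdec
    simp only [hFFdef]
    nlinarith [hv0]
  -- Step 2 : ∃ a ∈ Ioc 0 (1/8), -1 < FF a
  have hex : ∃ a, a ∈ Ioc (0:ℝ) (1/8) ∧ -1 < FF a := by
    by_contra hcon
    push_neg at hcon
    obtain ⟨z, hz, hmax'⟩ := (isCompact_closedBall (0 : EuclideanSpace ℝ (Fin 2)) 1).exists_isMaxOn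
      ⟨0, mem_closedBall_self zero_le_one⟩ hu.1
    have hmax : ∀ y ∈ closedBall (0 : EuclideanSpace ℝ (Fin 2)) 1, u y ≤ u z :=
      fun y hy => hmax' hy
    set M := u z with hMdef
    have hgM : ∀ r : ℝ, 0 ≤ r → r ≤ 1 → g r ≤ M := by
      intro r h0 h1
      rw [g_eq hrad h0 h1]
      exact hmax _ (by rw [mem_closedBall_zero_iff, norm_smul_e0 h0]; exact h1)
    have hM8 : g (1/8) ≤ M := hgM (1/8) (by norm_num) (by norm_num)
    set c : ℝ := (1/8) * Real.exp (-(M - g (1/8) + 1)) with hcdef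
    have hc0 : 0 < c := by positivity
    have hc8 : c < 1/8 := by
      have he1 : Real.exp (-(M - g (1/8) + 1)) < 1 := by
        rw [Real.exp_lt_one_iff]; linarith
      nlinarith
    have hmem : ∀ t : ℝ, t ∈ Icc c (1/8) → t ∈ Ioo (0:ℝ) 1 := by
      intro t ht
      exact ⟨lt_of_lt_of_le hc0 ht.1, by linarith [ht.2]⟩
    set φ : ℝ → ℝ := fun t => hh u (t^2) + Real.log t with hφdef
    have hanti : AntitoneOn φ (Icc c (1/8)) := by
      apply antitoneOn_of_deriv_nonpos (convex_Icc _ _)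
      · intro t ht
        exact ((phi_hasDerivAt hu.2.1 (hmem t ht)).continuousAt).continuousWithinAt
      · intro t ht
        rw [interior_Icc] at ht
        exact ((phi_hasDerivAt hu.2.1 (hmem t (Ioo_subset_Icc_self ht))).differentiableAt).differentiableWithinAt
      · intro t ht
        rw [interior_Icc] at ht
        have ht' := hmem t (Ioo_subset_Icc_self ht)
        rw [(phi_hasDerivAt hu.2.1 ht').deriv]
        have hFt : FF t ≤ -1 := hcon t ⟨ht'.1, le_of_lt ht.2⟩
        simp only [hFFdef] at hFt
        have ht0 : 0 < t := ht'.1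
        have key : (2 * t * deriv (hh u) (t^2) + 1/t) * t ≤ 0 := by
          have e : (2 * t * deriv (hh u) (t^2) + 1/t) * t
              = 2*t^2*deriv (hh u) (t^2) + 1 := by
            field_simp
          rw [e]; linarith
        nlinarith [key]
    have hkey : φ (1/8) ≤ φ c := by
      apply hanti (left_mem_Icc.mpr (le_of_lt hc8)) (right_mem_Icc.mpr (le_of_lt hc8))
        (le_of_lt hc8)
    have e1 : hh u (c^2) = g c := hh_eq_g hrad (le_of_lt hc0) (by linarith)
    have e2 : hh u ((1/8:ℝ)^2) = g (1/8) := hh_eq_g hrad (by norm_num) (by norm_num)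
    have e3 : Real.log c = Real.log (1/8) + (-(M - g (1/8) + 1)) := by
      rw [hcdef, Real.log_mul (by norm_num) (Real.exp_ne_zero _), Real.log_exp]
    simp only [hφdef, e1, e2, e3] at hkey
    have hgc : g c ≤ M := hgM c (le_of_lt hc0) (by linarith)
    linarith
  obtain ⟨a, ⟨ha0, ha8⟩, haF⟩ := hex
  -- Step 3 : monotonicity of FF - K t³/3 on [a, 1/4]
  have hmem2 : ∀ t : ℝ, t ∈ Icc a (1/4) → t ∈ Ioo (0:ℝ) 1 := by
    intro t ht
    exact ⟨lt_of_lt_of_le ha0 ht.1, by linarith [ht.2]⟩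
  set W : ℝ → ℝ := fun t => FF t - K * t^3 / 3 with hWdef
  have hWd : ∀ t : ℝ, t ∈ Ioo (0:ℝ) 1 →
      HasDerivAt W (2 * t^2 * (ε^2)⁻¹ * Real.sinh (g t - Real.log t) - K * t^2) t := by
    intro t ht
    have h1 := FF_hasDerivAt hu hrad ht
    have h2 : HasDerivAt (fun s : ℝ => K * s^3 / 3) (K * t^2) t := by
      have := (hasDerivAt_pow 3 t).const_mul (K/3)
      convert this using 1
      · rfl
      · rfl
      · funext s; ring
      · push_cast; ring
    exact h1.sub h2
  have ha14 : a ≤ 1/4 := by linarith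
  have hmono : MonotoneOn W (Icc a (1/4)) := by
    apply monotoneOn_of_deriv_nonneg (convex_Icc _ _)
    · intro t ht
      exact ((hWd t (hmem2 t ht)).continuousAt).continuousWithinAt
    · intro t ht
      rw [interior_Icc] at ht
      exact ((hWd t (hmem2 t (Ioo_subset_Icc_self ht))).differentiableAt).differentiableWithinAt
    · intro t ht
      rw [interior_Icc] at ht
      have ht' := hmem2 t (Ioo_subset_Icc_self ht)
      rw [(hWd t ht').deriv]
      have hvt : S ≤ Real.sinh (g t - Real.log t) := by
        rw [hSdef, Real.sinh_le_sinh]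
        exact le_of_lt (hdec ht' hq4 ht.2)
      simp only [hKdef]
      have hst := mul_le_mul_of_nonneg_left hvt
        (by positivity : (0:ℝ) ≤ (ε^2)⁻¹ * t^2)
      nlinarith [hst]
  have hWle : W a ≤ W (1/4) :=
    hmono (left_mem_Icc.mpr ha14) (right_mem_Icc.mpr ha14) ha14
  simp only [hWdef] at hWle
  have ha3 : a^3 ≤ (1/8)^3 := by
    apply pow_le_pow_left₀ (le_of_lt ha0) ha8
  have hKb : K * (7/1536) ≤ 2 := by
    nlinarith [mul_le_mul_of_nonneg_left ha3 (le_of_lt hKpos)]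
  have hSK : S = K * ε^2 / 2 := by
    rw [hKdef]; field_simp
  rw [hSK]
  nlinarith [mul_le_mul_of_nonneg_right hKb (le_of_lt hε2)]
end

section
/- Assume v(r) > 0, v'(r) < 0, v''(r) > 0 and v'''(r) < 0 for all 0 < r < 1, and for t ∈ (0,1] define M₁(t) = sup_{r ∈ [t,1]} |v'(r)|, M₂(t) = sup_{r ∈ [t,1]} |v''(r)|, M₃(t) = sup_{r ∈ [t,1]} |sinh(v(r))|. Then for any t, t' ∈ [1/4, 1/2] and any 0 < ε < 1/8: (1) M₂(t) = (2t/ε²)·M₃(t) + M₁(t)/t; (2) M₁(t) < (2/ε)·M₃(t); and (3) if t' > t, then M₃(t') < (2/(t'−t))·ε²·M₁(t). -/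
open Real Set Metric Filter Topology

/-- `M₁(t) = sup_{r ∈ [t,1]} |v′(r)|`. -/
noncomputable def M1 (v : ℝ → ℝ) (t : ℝ) : ℝ := sSup ((fun r => |deriv v r|) '' Icc t 1)

/-- `M₂(t) = sup_{r ∈ [t,1]} |v″(r)|`. -/
noncomputable def M2 (v : ℝ → ℝ) (t : ℝ) : ℝ :=
  sSup ((fun r => |deriv (deriv v) r|) '' Icc t 1)

/-- `M₃(t) = sup_{r ∈ [t,1]} |sinh (v r)|`. -/
noncomputable def M3 (v : ℝ → ℝ) (t : ℝ) : ℝ :=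
  sSup ((fun r => |Real.sinh (v r)|) '' Icc t 1)

lemma deriv_at_one_abs_le {g : ℝ → ℝ} {a B : ℝ} (ha : a < 1) (hB : 0 ≤ B)
    (hdiff : ∀ x ∈ Ioo a 1, HasDerivAt g (deriv g x) x)
    (hbd : ∀ x ∈ Ioo a 1, |deriv g x| ≤ B) :
    |deriv g 1| ≤ B := by
  by_cases h : DifferentiableAt ℝ g 1
  · have hd1 : HasDerivWithinAt g (deriv g 1) (Iio 1) 1 :=
      h.hasDerivAt.hasDerivWithinAt
    rw [hasDerivWithinAt_iff_tendsto_slope' (by simp)] at hd1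
    refine le_of_tendsto hd1.abs ?_
    have hmem : Ioo a 1 ∈ 𝓝[Iio 1] (1:ℝ) := by
      rw [mem_nhdsWithin]
      exact ⟨Ioi a, isOpen_Ioi, ha, by rintro x ⟨hx1, hx2⟩; exact ⟨hx1, hx2⟩⟩
    filter_upwards [hmem] with x hx
    have hcont : ContinuousOn g (Icc x 1) := by
      intro y hy
      rcases eq_or_lt_of_le hy.2 with rfl | hy2
      · exact h.continuousAt.continuousWithinAt
      · exact ((hdiff y ⟨lt_of_lt_of_le hx.1 hy.1, hy2⟩).differentiableAt.continuousAt).continuousWithinAt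
    obtain ⟨c, hc, hceq⟩ := exists_hasDerivAt_eq_slope g (deriv g) hx.2 hcont
      (fun y hy => hdiff y ⟨lt_trans hx.1 hy.1, hy.2⟩)
    have hsl : slope g 1 x = deriv g c := by
      rw [slope_def_field, hceq, show g x - g 1 = -(g 1 - g x) by ring,
        show x - 1 = -(1 - x) by ring, neg_div_neg_eq]
    rw [hsl]
    exact hbd c ⟨lt_trans hx.1 hc.1, hc.2⟩
  · simp [deriv_zero_of_not_differentiableAt h, hB]

set_option maxHeartbeats 1000000 in
/-- assuming `v > 0`, `v′ < 0`, `v″ > 0`, `v‴ < 0` on `(0,1)`, for any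
`t, t' ∈ [1/4,1/2]` and any `0 < ε < 1/8`:
(1) `M₂(t) = (2t/ε²)·M₃(t) + M₁(t)/t`;
(2) `M₁(t) < (2/ε)·M₃(t)`;
(3) if `t' > t` then `M₃(t') < (2/(t'−t))·ε²·M₁(t)`. -/
theorem stmt_6 (ε : ℝ) (hε : 0 < ε) (hε8 : ε < 1/8) (v : ℝ → ℝ) (hv : IsODESol ε v)
    (hsign : ∀ r ∈ Ioo (0 : ℝ) 1,
      0 < v r ∧ deriv v r < 0 ∧ 0 < deriv (deriv v) r ∧ deriv (deriv (deriv v)) r < 0) :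
    ∀ t ∈ Icc (1/4 : ℝ) (1/2), ∀ t' ∈ Icc (1/4 : ℝ) (1/2),
      (M2 v t = 2 * t / ε ^ 2 * M3 v t + M1 v t / t) ∧
      (M1 v t < 2 / ε * M3 v t) ∧
      (t < t' → M3 v t' < 2 / (t' - t) * ε ^ 2 * M1 v t) := by
  obtain ⟨hsm, hcont1, hode, hv10, _htop⟩ := hv
  have hIoo : IsOpen (Ioo (0:ℝ) 1) := isOpen_Ioo
  have hsm1 : ContDiffOn ℝ (⊤ : ℕ∞) (deriv v) (Ioo 0 1) := hsm.deriv_of_isOpen hIoo (by simp)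
  have hsm2 : ContDiffOn ℝ (⊤ : ℕ∞) (deriv (deriv v)) (Ioo 0 1) := hsm1.deriv_of_isOpen hIoo (by simp)
  have hdv : ∀ r ∈ Ioo (0:ℝ) 1, HasDerivAt v (deriv v r) r := fun r hr =>
    ((hsm.differentiableOn (by simp)).differentiableAt (hIoo.mem_nhds hr)).hasDerivAt
  have hddv : ∀ r ∈ Ioo (0:ℝ) 1, HasDerivAt (deriv v) (deriv (deriv v) r) r := fun r hr =>
    ((hsm1.differentiableOn (by simp)).differentiableAt (hIoo.mem_nhds hr)).hasDerivAt
  have hcv : ContinuousOn v (Ioo 0 1) := hsm.continuousOn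
  have hcdv : ContinuousOn (deriv v) (Ioo 0 1) := hsm1.continuousOn
  have hcddv : ContinuousOn (deriv (deriv v)) (Ioo 0 1) := hsm2.continuousOn
  have hanti_v : StrictAntiOn v (Ioo 0 1) :=
    strictAntiOn_of_deriv_neg (convex_Ioo 0 1) hcv
      (by rw [interior_Ioo]; exact fun r hr => (hsign r hr).2.1)
  have hmono_dv : StrictMonoOn (deriv v) (Ioo 0 1) :=
    strictMonoOn_of_deriv_pos (convex_Ioo 0 1) hcdv
      (by rw [interior_Ioo]; exact fun r hr => (hsign r hr).2.2.1)
  have hanti_ddv : StrictAntiOn (deriv (deriv v)) (Ioo 0 1) :=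
    strictAntiOn_of_deriv_neg (convex_Ioo 0 1) hcddv
      (by rw [interior_Ioo]; exact fun r hr => (hsign r hr).2.2.2)
  have hsubset : Icc (1/4:ℝ) (1/2) ⊆ Ioo 0 1 := fun x hx =>
    ⟨by linarith [hx.1], by linarith [hx.2]⟩
  -- Step A: tangent-line bound for deriv v
  have stepA : ∀ a ∈ Ioo (0:ℝ) 1, ∀ u ∈ Ioo (0:ℝ) 1, a < u →
      deriv v u < deriv v a + (u - a) * deriv (deriv v) a := by
    intro a ha u hu hau
    have hIccsub : Icc a u ⊆ Ioo 0 1 := Icc_subset_Ioo ha.1 hu.2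
    obtain ⟨c, hc, hceq⟩ := exists_hasDerivAt_eq_slope (deriv v) (deriv (deriv v)) hau
      (hcdv.mono hIccsub) (fun y hy => hddv y (hIccsub ⟨hy.1.le, hy.2.le⟩))
    have hclt : deriv (deriv v) c < deriv (deriv v) a :=
      hanti_ddv ha (hIccsub ⟨hc.1.le, hc.2.le⟩) hc.1
    rw [hceq] at hclt
    have := (div_lt_iff₀ (by linarith : (0:ℝ) < u - a)).mp hclt
    nlinarith
  -- values of the three sups
  have hM1 : ∀ t ∈ Icc (1/4:ℝ) (1/2), M1 v t = -deriv v t := by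
    intro t ht
    have htI := hsubset ht
    have ht1 : t < 1 := htI.2
    have hub : ∀ y ∈ (fun r => |deriv v r|) '' Icc t 1, y ≤ |deriv v t| := by
      rintro y ⟨r, hr, rfl⟩
      dsimp only
      rcases eq_or_lt_of_le hr.2 with rfl | hr2
      · refine deriv_at_one_abs_le ht1 (abs_nonneg _)
          (fun x hx => hdv x ⟨lt_trans htI.1 hx.1, hx.2⟩) ?_
        intro x hx
        have hxI : x ∈ Ioo (0:ℝ) 1 := ⟨lt_trans htI.1 hx.1, hx.2⟩
        have h2 : deriv v t < deriv v x := hmono_dv htI hxI hx.1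
        rw [abs_of_neg (hsign x hxI).2.1, abs_of_neg (hsign t htI).2.1]
        linarith
      · have hrI : r ∈ Ioo (0:ℝ) 1 := ⟨lt_of_lt_of_le htI.1 hr.1, hr2⟩
        rw [abs_of_neg (hsign r hrI).2.1, abs_of_neg (hsign t htI).2.1]
        rcases eq_or_lt_of_le hr.1 with rfl | h
        · exact le_rfl
        · have := hmono_dv htI hrI h; linarith
    have hgt : IsGreatest ((fun r => |deriv v r|) '' Icc t 1) |deriv v t| :=
      ⟨⟨t, ⟨le_refl t, ht1.le⟩, rfl⟩, hub⟩
    rw [M1, hgt.csSup_eq, abs_of_neg (hsign t htI).2.1]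
  have hM2 : ∀ t ∈ Icc (1/4:ℝ) (1/2), M2 v t = deriv (deriv v) t := by
    intro t ht
    have htI := hsubset ht
    have ht1 : t < 1 := htI.2
    have hub : ∀ y ∈ (fun r => |deriv (deriv v) r|) '' Icc t 1, y ≤ |deriv (deriv v) t| := by
      rintro y ⟨r, hr, rfl⟩
      dsimp only
      rcases eq_or_lt_of_le hr.2 with rfl | hr2
      · refine deriv_at_one_abs_le ht1 (abs_nonneg _)
          (fun x hx => hddv x ⟨lt_trans htI.1 hx.1, hx.2⟩) ?_
        intro x hx
        have hxI : x ∈ Ioo (0:ℝ) 1 := ⟨lt_trans htI.1 hx.1, hx.2⟩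
        have h2 : deriv (deriv v) x < deriv (deriv v) t := hanti_ddv htI hxI hx.1
        rw [abs_of_pos (hsign x hxI).2.2.1, abs_of_pos (hsign t htI).2.2.1]
        linarith
      · have hrI : r ∈ Ioo (0:ℝ) 1 := ⟨lt_of_lt_of_le htI.1 hr.1, hr2⟩
        rw [abs_of_pos (hsign r hrI).2.2.1, abs_of_pos (hsign t htI).2.2.1]
        rcases eq_or_lt_of_le hr.1 with rfl | h
        · exact le_rfl
        · have := hanti_ddv htI hrI h; linarith
    have hgt : IsGreatest ((fun r => |deriv (deriv v) r|) '' Icc t 1) |deriv (deriv v) t| :=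
      ⟨⟨t, ⟨le_refl t, ht1.le⟩, rfl⟩, hub⟩
    rw [M2, hgt.csSup_eq, abs_of_pos (hsign t htI).2.2.1]
  have hM3 : ∀ t ∈ Icc (1/4:ℝ) (1/2), M3 v t = Real.sinh (v t) := by
    intro t ht
    have htI := hsubset ht
    have ht1 : t < 1 := htI.2
    have hspos : 0 < Real.sinh (v t) := Real.sinh_pos_iff.mpr (hsign t htI).1
    have hub : ∀ y ∈ (fun r => |Real.sinh (v r)|) '' Icc t 1, y ≤ |Real.sinh (v t)| := by
      rintro y ⟨r, hr, rfl⟩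
      dsimp only
      rw [abs_of_pos hspos]
      rcases eq_or_lt_of_le hr.2 with rfl | hr2
      · rw [hv10]; simp [hspos.le]
      · have hrI : r ∈ Ioo (0:ℝ) 1 := ⟨lt_of_lt_of_le htI.1 hr.1, hr2⟩
        rw [abs_of_pos (Real.sinh_pos_iff.mpr (hsign r hrI).1)]
        rcases eq_or_lt_of_le hr.1 with rfl | h
        · exact le_rfl
        · exact (Real.sinh_lt_sinh.mpr (hanti_v htI hrI h)).le
    have hgt : IsGreatest ((fun r => |Real.sinh (v r)|) '' Icc t 1) |Real.sinh (v t)| :=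
      ⟨⟨t, ⟨le_refl t, ht1.le⟩, rfl⟩, hub⟩
    rw [M3, hgt.csSup_eq, abs_of_pos hspos]
  intro t ht t' ht'
  have htI := hsubset ht
  have ht'I := hsubset ht'
  have htne : t ≠ 0 := ne_of_gt htI.1
  have hεne : ε ≠ 0 := ne_of_gt hε
  have hodet := hode t htI
  refine ⟨?_, ?_, ?_⟩
  · -- statement (1)
    rw [hM1 t ht, hM2 t ht, hM3 t ht]
    field_simp at hodet ⊢
    linarith [hodet]
  · -- statement (2)
    rw [hM1 t ht, hM3 t ht]
    set X := -deriv v t with hXdef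
    set S := Real.sinh (v t) with hSdef
    set W := deriv (deriv v) t with hWdef
    have hXpos : 0 < X := by rw [hXdef]; linarith [(hsign t htI).2.1]
    have hSpos : 0 < S := Real.sinh_pos_iff.mpr (hsign t htI).1
    have hWpos : 0 < W := (hsign t htI).2.2.1
    have hvtS : v t < S := Real.self_lt_sinh_iff.mpr (hsign t htI).1
    have hWc : ε^2 * t * W = 2 * t^2 * S + ε^2 * X := by
      have h' : t⁻¹ * deriv v t = -(t⁻¹ * X) := by rw [hXdef]; ring
      rw [h'] at hodet
      field_simp at hodet
      linarith [hodet]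
    -- Taylor bound
    have key2 : ∀ s : ℝ, 0 < s → s < 1 - t → s * X - s^2 * (W/2) < v t := by
      intro s hs0 hs1
      have hsub' : Icc t (t+s) ⊆ Ioo 0 1 := fun x hx =>
        ⟨lt_of_lt_of_le htI.1 hx.1, by linarith [hx.2]⟩
      set G : ℝ → ℝ := fun u => v u - (v t + (u - t) * deriv v t + (u-t)^2 * (W/2)) with hGdef
      have hGd : ∀ u ∈ Ioo t (t+s), HasDerivAt G
          (deriv v u - (deriv v t + (u - t) * W)) u := by
        intro u hu
        have huI : u ∈ Ioo (0:ℝ) 1 := hsub' ⟨hu.1.le, hu.2.le⟩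
        have p1 : HasDerivAt (fun u:ℝ => u - t) 1 u := (hasDerivAt_id u).sub_const t
        have p2 : HasDerivAt (fun u:ℝ => (u - t) * deriv v t) (deriv v t) u := by
          simpa using p1.mul_const (deriv v t)
        have p3 : HasDerivAt (fun u:ℝ => (u - t)^2 * (W/2)) ((u - t) * W) u := by
          have := (p1.pow 2).mul_const (W/2)
          simpa using this.congr_deriv (by ring)
        have p4 : HasDerivAt (fun u:ℝ => v t + (u - t) * deriv v t + (u-t)^2 * (W/2))
            (deriv v t + (u - t) * W) u := by
          exact (((hasDerivAt_const u (v t)).add p2).add p3).congr_deriv (by ring)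
        exact (hdv u huI).sub p4
      have hGanti : AntitoneOn G (Icc t (t+s)) := by
        apply antitoneOn_of_deriv_nonpos (convex_Icc t (t+s))
        · apply ContinuousOn.sub (hcv.mono hsub')
          fun_prop
        · rw [interior_Icc]
          exact fun u hu => ((hGd u hu).differentiableAt).differentiableWithinAt
        · rw [interior_Icc]
          intro u hu
          rw [(hGd u hu).deriv]
          have huI : u ∈ Ioo (0:ℝ) 1 := hsub' ⟨hu.1.le, hu.2.le⟩
          have := stepA t htI u huI hu.1
          rw [← hWdef] at this
          linarith
      have hGle : G (t+s) ≤ G t :=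
        hGanti ⟨le_refl t, by linarith⟩ ⟨by linarith, le_refl _⟩ (by linarith)
      have hGt : G t = 0 := by rw [hGdef]; simp
      have hvpos : 0 < v (t+s) := (hsign (t+s) ⟨by linarith [htI.1], by linarith⟩).1
      have : v (t+s) - (v t + s * deriv v t + s^2 * (W/2)) ≤ 0 := by
        have := hGle; rw [hGt] at this
        simpa [hGdef] using this
      have hdvX : deriv v t = -X := by rw [hXdef]; ring
      rw [hdvX] at this
      nlinarith
    by_contra hcon
    push_neg at hcon
    have h1 : 2 * S ≤ ε * X := by
      rw [div_mul_eq_mul_div, div_le_iff₀ hε] at hcon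
      nlinarith
    rcases le_or_gt (X/W) (2/5) with hcase | hcase
    · have hs := key2 (X/W) (div_pos hXpos hWpos) (by nlinarith [ht.2])
      have hX2 : X^2 < 2 * W * S := by
        have hXW : (X/W) * X - (X/W)^2 * (W/2) = X^2/(2*W) := by field_simp; ring
        rw [hXW] at hs
        have := (div_lt_iff₀ (by positivity : (0:ℝ) < 2*W)).mp (lt_trans hs hvtS)
        linarith
      have hbig : ε^2 * t * X^2 < 4 * t^2 * S^2 + 2 * ε^2 * S * X := by
        have h5 := mul_lt_mul_of_pos_left hX2 (show (0:ℝ) < ε^2 * t from mul_pos (by positivity) htI.1)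
        have h6 : ε^2 * t * (2 * W * S) = 2 * S * (2 * t^2 * S + ε^2 * X) := by
          rw [← hWc]; ring
        rw [h6] at h5
        nlinarith [h5]
      have h2 : 4 * t^2 * S^2 ≤ 2 * ε * t^2 * S * X := by
        nlinarith [mul_le_mul_of_nonneg_left h1 (le_of_lt (show (0:ℝ) < 2 * S * t^2 from by positivity))]
      have h3 : 2 * ε * t * S * X ≤ ε^2 * t * X^2 := by
        nlinarith [mul_le_mul_of_nonneg_left h1 (le_of_lt (mul_pos (mul_pos hε htI.1) hXpos))]
      have h4 : t - t^2 < ε := by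
        nlinarith [hbig, h2, h3, mul_pos (mul_pos hε hSpos) hXpos]
      nlinarith [ht.1, ht.2, h4, hε8]
    · have hWX : 2 * W < 5 * X := by
        have := (lt_div_iff₀ hWpos).mp hcase
        linarith
      have hs := key2 (2/5) (by norm_num) (by nlinarith [ht.2])
      have hX5 : X < 5 * v t := by nlinarith
      nlinarith [hvtS, h1, hXpos, hε8]
  · -- statement (3)
    intro htt'
    rw [hM1 t ht, hM3 t' ht']
    have hIccsub : Icc t t' ⊆ Ioo 0 1 := Icc_subset_Ioo htI.1 ht'I.2
    obtain ⟨c, hc, hceq⟩ := exists_hasDerivAt_eq_slope (deriv v) (deriv (deriv v)) htt'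
      (hcdv.mono hIccsub) (fun y hy => hddv y (hIccsub ⟨hy.1.le, hy.2.le⟩))
    have hcI : c ∈ Ioo (0:ℝ) 1 := hIccsub ⟨hc.1.le, hc.2.le⟩
    have hodec := hode c hcI
    have htt0 : (0:ℝ) < t' - t := by linarith
    set S' := Real.sinh (v t') with hS'def
    set X := -deriv v t with hXdef
    have hS'pos : 0 < S' := Real.sinh_pos_iff.mpr (hsign t' ht'I).1
    have hXpos : 0 < X := by rw [hXdef]; linarith [(hsign t htI).2.1]
    have h1 : (t' - t) * deriv (deriv v) c < X := by
      have hdvt' : deriv v t' < 0 := (hsign t' ht'I).2.1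
      have : (t' - t) * deriv (deriv v) c = deriv v t' - deriv v t := by
        rw [hceq]; field_simp
      rw [this, hXdef]; linarith
    have h2 : 2 * (ε^2)⁻¹ * t * S' < deriv (deriv v) c := by
      have hdvc : deriv v c < 0 := (hsign c hcI).2.1
      have hsinh : S' ≤ Real.sinh (v c) := Real.sinh_le_sinh.mpr (hanti_v hcI ht'I hc.2).le
      have hterm : c⁻¹ * deriv v c < 0 :=
        mul_neg_of_pos_of_neg (inv_pos.mpr hcI.1) hdvc
      have hc_t : t < c := hc.1
      have hA : (0:ℝ) < (ε^2)⁻¹ := by positivity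
      have e1 := mul_lt_mul_of_pos_right hc_t (mul_pos (mul_pos two_pos hA) hS'pos)
      have e2 := mul_le_mul_of_nonneg_left hsinh
        (mul_nonneg (mul_nonneg (by norm_num : (0:ℝ) ≤ 2) hA.le) hcI.1.le)
      linarith [e1, e2, hodec, hterm]
    have h3 : (t' - t) * (2 * (ε^2)⁻¹ * t * S') < X := by
      nlinarith [mul_lt_mul_of_pos_left h2 htt0, h1]
    have hfinal : (t' - t) * S' < 2 * ε^2 * X := by
      have h4 := mul_lt_mul_of_pos_left h3 (show (0:ℝ) < 2 * ε^2 by positivity)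
      have h5 : 2 * ε^2 * ((t' - t) * (2 * (ε^2)⁻¹ * t * S')) = 4 * t * ((t'-t) * S') := by
        field_simp; ring
      rw [h5] at h4
      nlinarith [mul_pos htt0 hS'pos, ht.1]
    have hgoal : 2 / (t' - t) * ε^2 * X = (2 * ε^2 * X) / (t' - t) := by ring
    rw [hgoal, lt_div_iff₀ htt0]
    linarith
end

section
/- For any integers l > k ≥ 0 there exists a constant C = C(l,k) such that for every ε with 0 < ε < 1/8, the k-th derivative of v_ε(r) = ū_ε(r) − ln r satisfies sup_{r ∈ [1/2, 1]} |v_ε^{(k)}(r)| ≤ C·ε^{l−k}. -/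
open Real Set Metric

open Filter

local notation "E2" => EuclideanSpace ℝ (Fin 2)

/-- Formal expressions in 7 variables:
`X0 = r`, `X1 = r⁻¹`, `X2 = v`, `X3 = v'`, `X4 = sinh v`, `X5 = cosh v`, `X6 = ε⁻¹`. -/
inductive Ex where
  | X : Fin 7 → Ex
  | C : ℝ → Ex
  | add : Ex → Ex → Ex
  | mul : Ex → Ex → Ex

noncomputable def evalE (z : Fin 7 → ℝ) : Ex → ℝ
  | .X i => z i
  | .C c => c
  | .add a b => evalE z a + evalE z b
  | .mul a b => evalE z a * evalE z b

/-- formal derivative of each generator, implementing the ODE `v'' = 2 r ε⁻² sinh v − v'/r`. -/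
noncomputable def ruleE : Fin 7 → Ex
  | 0 => .C 1
  | 1 => .mul (.C (-1)) (.mul (.X 1) (.X 1))
  | 2 => .X 3
  | 3 => .add (.mul (.C 2) (.mul (.X 0) (.mul (.X 6) (.mul (.X 6) (.X 4)))))
          (.mul (.C (-1)) (.mul (.X 3) (.X 1)))
  | 4 => .mul (.X 5) (.X 3)
  | 5 => .mul (.X 4) (.X 3)
  | 6 => .C 0

noncomputable def derE : Ex → Ex
  | .X i => ruleE i
  | .C _ => .C 0
  | .add a b => .add (derE a) (derE b)
  | .mul a b => .add (.mul (derE a) b) (.mul a (derE b))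

lemma hasDerivAt_evalE (z : ℝ → Fin 7 → ℝ) (r : ℝ)
    (hz : ∀ i, HasDerivAt (fun t => z t i) (evalE (z r) (ruleE i)) r) (e : Ex) :
    HasDerivAt (fun t => evalE (z t) e) (evalE (z r) (derE e)) r := by
  induction e with
  | X i => exact hz i
  | C c => simpa [evalE, derE] using hasDerivAt_const r c
  | add a b iha ihb => exact iha.add ihb
  | mul a b iha ihb => exact iha.mul ihb

/-- validity of a variable assignment given smallness parameter `s` and `εi = ε⁻¹`. -/
def validZ (z : Fin 7 → ℝ) (s εi : ℝ) : Prop :=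
  |z 0| ≤ 1 ∧ |z 1| ≤ 3 ∧ |z 2| ≤ s ∧ |z 3| ≤ s ∧ |z 4| ≤ 8*s ∧ |z 5| ≤ 8 ∧ |z 6| ≤ εi
    ∧ 0 ≤ s ∧ s ≤ 32 ∧ 1 ≤ εi

def BdE (e : Ex) : Prop :=
  ∃ C : ℝ, 0 ≤ C ∧ ∃ m : ℕ, ∀ z s εi, validZ z s εi → |evalE z e| ≤ C * εi ^ m

def SmE (e : Ex) : Prop :=
  ∃ C : ℝ, 0 ≤ C ∧ ∃ m : ℕ, ∀ z s εi, validZ z s εi → |evalE z e| ≤ C * s * εi ^ m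

lemma bdE_all (e : Ex) : BdE e := by
  induction e with
  | X i =>
    fin_cases i
    · exact ⟨1, by norm_num, 0, fun z s εi h => by simpa [evalE] using h.1⟩
    · exact ⟨3, by norm_num, 0, fun z s εi h => by simpa [evalE] using h.2.1⟩
    · exact ⟨32, by norm_num, 0, fun z s εi h => by
        simpa [evalE] using (h.2.2.1.trans h.2.2.2.2.2.2.2.2.1)⟩
    · exact ⟨32, by norm_num, 0, fun z s εi h => by
        simpa [evalE] using (h.2.2.2.1.trans h.2.2.2.2.2.2.2.2.1)⟩
    · refine ⟨256, by norm_num, 0, fun z s εi h => ?_⟩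
      have h4 : |evalE z (Ex.X ⟨4, by omega⟩)| ≤ 8 * s := h.2.2.2.2.1
      have h32 : s ≤ 32 := h.2.2.2.2.2.2.2.2.1
      simp only [pow_zero, mul_one]
      linarith
    · exact ⟨8, by norm_num, 0, fun z s εi h => by simpa [evalE] using h.2.2.2.2.2.1⟩
    · exact ⟨1, by norm_num, 1, fun z s εi h => by
        simpa [evalE] using h.2.2.2.2.2.2.1⟩
  | C c => exact ⟨|c|, abs_nonneg c, 0, fun z s εi h => by simp [evalE]⟩
  | add a b iha ihb =>
    obtain ⟨C1, hC1, m1, h1⟩ := iha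
    obtain ⟨C2, hC2, m2, h2⟩ := ihb
    refine ⟨C1 + C2, by linarith, max m1 m2, fun z s εi h => ?_⟩
    have hεi : 1 ≤ εi := h.2.2.2.2.2.2.2.2.2
    have e1 : εi ^ m1 ≤ εi ^ (max m1 m2) := pow_le_pow_right₀ hεi (le_max_left _ _)
    have e2 : εi ^ m2 ≤ εi ^ (max m1 m2) := pow_le_pow_right₀ hεi (le_max_right _ _)
    calc |evalE z (a.add b)| ≤ |evalE z a| + |evalE z b| := abs_add_le _ _
    _ ≤ C1 * εi ^ m1 + C2 * εi ^ m2 := add_le_add (h1 z s εi h) (h2 z s εi h)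
    _ ≤ C1 * εi ^ (max m1 m2) + C2 * εi ^ (max m1 m2) := by
        exact add_le_add (by nlinarith) (by nlinarith)
    _ = (C1 + C2) * εi ^ (max m1 m2) := by ring
  | mul a b iha ihb =>
    obtain ⟨C1, hC1, m1, h1⟩ := iha
    obtain ⟨C2, hC2, m2, h2⟩ := ihb
    refine ⟨C1 * C2, by positivity, m1 + m2, fun z s εi h => ?_⟩
    have hεi : (1:ℝ) ≤ εi := h.2.2.2.2.2.2.2.2.2
    have p1 := h1 z s εi h
    have p2 := h2 z s εi h
    calc |evalE z (a.mul b)| = |evalE z a| * |evalE z b| := abs_mul _ _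
    _ ≤ (C1 * εi ^ m1) * (C2 * εi ^ m2) := by
        apply mul_le_mul p1 p2 (abs_nonneg _) (by positivity)
    _ = C1 * C2 * εi ^ (m1 + m2) := by rw [pow_add]; ring

/-- the "ideal" of expressions all of whose monomials contain a small factor. -/
inductive IdE : Ex → Prop where
  | x2 : IdE (.X 2)
  | x3 : IdE (.X 3)
  | x4 : IdE (.X 4)
  | add {a b} : IdE a → IdE b → IdE (.add a b)
  | mulL {a b} : IdE a → IdE (.mul a b)
  | mulR {a b} : IdE b → IdE (.mul a b)

lemma smE_of_idE {e : Ex} (he : IdE e) : SmE e := by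
  induction he with
  | x2 => exact ⟨1, by norm_num, 0, fun z s εi h => by simpa [evalE] using h.2.2.1⟩
  | x3 => exact ⟨1, by norm_num, 0, fun z s εi h => by simpa [evalE] using h.2.2.2.1⟩
  | x4 => exact ⟨8, by norm_num, 0, fun z s εi h => by simpa [evalE] using h.2.2.2.2.1⟩
  | add ha hb iha ihb =>
    obtain ⟨C1, hC1, m1, h1⟩ := iha
    obtain ⟨C2, hC2, m2, h2⟩ := ihb
    refine ⟨C1 + C2, by linarith, max m1 m2, fun z s εi h => ?_⟩
    have hεi : (1:ℝ) ≤ εi := h.2.2.2.2.2.2.2.2.2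
    have hs : 0 ≤ s := h.2.2.2.2.2.2.2.1
    have e1 : εi ^ m1 ≤ εi ^ (max m1 m2) := pow_le_pow_right₀ hεi (le_max_left _ _)
    have e2 : εi ^ m2 ≤ εi ^ (max m1 m2) := pow_le_pow_right₀ hεi (le_max_right _ _)
    calc |evalE z (_root_.Ex.add _ _)| ≤ |evalE z _| + |evalE z _| := abs_add_le _ _
    _ ≤ C1 * s * εi ^ m1 + C2 * s * εi ^ m2 := add_le_add (h1 z s εi h) (h2 z s εi h)
    _ ≤ C1 * s * εi ^ (max m1 m2) + C2 * s * εi ^ (max m1 m2) := by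
        have q1 : C1 * s * εi ^ m1 ≤ C1 * s * εi ^ (max m1 m2) :=
          mul_le_mul_of_nonneg_left e1 (mul_nonneg hC1 hs)
        have q2 : C2 * s * εi ^ m2 ≤ C2 * s * εi ^ (max m1 m2) :=
          mul_le_mul_of_nonneg_left e2 (mul_nonneg hC2 hs)
        exact add_le_add q1 q2
    _ = (C1 + C2) * s * εi ^ (max m1 m2) := by ring
  | @mulL a b ha iha =>
    obtain ⟨C1, hC1, m1, h1⟩ := iha
    obtain ⟨C2, hC2, m2, h2⟩ := bdE_all b
    refine ⟨C1 * C2, by positivity, m1 + m2, fun z s εi h => ?_⟩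
    have hs : 0 ≤ s := h.2.2.2.2.2.2.2.1
    calc |evalE z (_root_.Ex.mul a b)| = |evalE z a| * |evalE z b| := abs_mul _ _
    _ ≤ (C1 * s * εi ^ m1) * (C2 * εi ^ m2) := by
        have hεi0 : (0:ℝ) ≤ εi := le_trans zero_le_one h.2.2.2.2.2.2.2.2.2
        exact mul_le_mul (h1 z s εi h) (h2 z s εi h) (abs_nonneg _)
          (mul_nonneg (mul_nonneg hC1 hs) (pow_nonneg hεi0 _))
    _ = C1 * C2 * s * εi ^ (m1 + m2) := by rw [pow_add]; ring
  | @mulR a b hb ihb =>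
    obtain ⟨C1, hC1, m1, h1⟩ := bdE_all a
    obtain ⟨C2, hC2, m2, h2⟩ := ihb
    refine ⟨C1 * C2, by positivity, m1 + m2, fun z s εi h => ?_⟩
    have hs : 0 ≤ s := h.2.2.2.2.2.2.2.1
    calc |evalE z (_root_.Ex.mul a b)| = |evalE z a| * |evalE z b| := abs_mul _ _
    _ ≤ (C1 * εi ^ m1) * (C2 * s * εi ^ m2) := by
        have hεi0 : (0:ℝ) ≤ εi := le_trans zero_le_one h.2.2.2.2.2.2.2.2.2
        exact mul_le_mul (h1 z s εi h) (h2 z s εi h) (abs_nonneg _)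
          (mul_nonneg hC1 (pow_nonneg hεi0 _))
    _ = C1 * C2 * s * εi ^ (m1 + m2) := by rw [pow_add]; ring

lemma idE_derE {e : Ex} (he : IdE e) : IdE (derE e) := by
  induction he with
  | x2 => exact IdE.x3
  | x3 =>
    exact IdE.add (IdE.mulR (IdE.mulR (IdE.mulR (IdE.mulR IdE.x4)))) (IdE.mulR (IdE.mulL IdE.x3))
  | x4 => exact IdE.mulR IdE.x3
  | add ha hb iha ihb => exact IdE.add iha ihb
  | @mulL a b ha iha => exact IdE.add (IdE.mulL iha) (IdE.mulL ha)
  | @mulR a b hb ihb => exact IdE.add (IdE.mulR hb) (IdE.mulR ihb)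

lemma idE_iter (j : ℕ) : IdE (derE^[j] (Ex.X 2)) := by
  induction j with
  | zero => exact IdE.x2
  | succ n ih => rw [Function.iterate_succ_apply']; exact idE_derE ih

lemma self_le_sinh' {x : ℝ} (hx : 0 ≤ x) : x ≤ Real.sinh x :=
  Real.self_le_sinh_iff.mpr hx

lemma sinh_le_mul_exp {x : ℝ} (hx : 0 ≤ x) : Real.sinh x ≤ x * Real.exp x := by
  rw [Real.sinh_eq]
  have h1 : 1 + (-2*x) ≤ Real.exp (-2*x) := by linarith [Real.add_one_le_exp (-2*x)]
  have h2 : Real.exp x * Real.exp (-2*x) = Real.exp (-x) := by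
    rw [← Real.exp_add]; ring_nf
  nlinarith [Real.exp_pos x]

lemma cosh_le_exp {x : ℝ} (hx : 0 ≤ x) : Real.cosh x ≤ Real.exp x := by
  rw [Real.cosh_eq]
  have : Real.exp (-x) ≤ Real.exp x := Real.exp_le_exp.mpr (by linarith)
  linarith

lemma exp_two_le_eight : Real.exp 2 ≤ 8 := by
  have h : Real.exp 1 ≤ 2.7182818286 := le_of_lt Real.exp_one_lt_d9
  have h2 : Real.exp 2 = Real.exp 1 * Real.exp 1 := by rw [← Real.exp_add]; norm_num
  nlinarith [Real.exp_pos 1]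

lemma exp_neg_le_factorial_mul_pow (y : ℝ) (hy : 0 < y) (N : ℕ) :
    Real.exp (-y⁻¹) ≤ (Nat.factorial N : ℝ) * y ^ N := by
  have hx : (0:ℝ) ≤ y⁻¹ := by positivity
  have key : (y⁻¹) ^ N / (Nat.factorial N : ℝ) ≤ Real.exp (y⁻¹) := by
    calc (y⁻¹) ^ N / (Nat.factorial N : ℝ) ≤ ∑ i ∈ Finset.range (N+1), (y⁻¹) ^ i / (Nat.factorial i : ℝ) := by
          apply Finset.single_le_sum (f := fun i => (y⁻¹) ^ i / (Nat.factorial i : ℝ)) ?_ ?_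
          · intro i _; positivity
          · exact Finset.self_mem_range_succ N
    _ ≤ Real.exp (y⁻¹) := Real.sum_le_exp_of_nonneg hx _
  have hfact : (0:ℝ) < (Nat.factorial N : ℝ) := by positivity
  have hyN : (0:ℝ) < y ^ N := by positivity
  have h2 : (y⁻¹) ^ N * y ^ N = 1 := by
    rw [← mul_pow]; simp [inv_mul_cancel₀ (ne_of_gt hy)]
  have key2 : (y⁻¹) ^ N ≤ Real.exp (y⁻¹) * (Nat.factorial N : ℝ) := by
    rw [div_le_iff₀ hfact] at key; linarith
  have h3 := mul_le_mul_of_nonneg_right key2 (le_of_lt hyN)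
  rw [h2] at h3
  have h5 : 1 ≤ Real.exp (y⁻¹) * ((Nat.factorial N : ℝ) * y ^ N) := by nlinarith
  have h6 : (Real.exp (y⁻¹))⁻¹ * Real.exp (y⁻¹) = 1 :=
    inv_mul_cancel₀ (ne_of_gt (Real.exp_pos _))
  rw [Real.exp_neg]
  nlinarith [Real.exp_pos (y⁻¹)]

lemma iteratedDeriv_congr_open {s : Set ℝ} (hs : IsOpen s) {f g : ℝ → ℝ}
    (hfg : ∀ x ∈ s, f x = g x) (j : ℕ) : ∀ x ∈ s, iteratedDeriv j f x = iteratedDeriv j g x := by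
  induction j with
  | zero => simpa using hfg
  | succ n ih =>
    intro x hx
    rw [iteratedDeriv_succ, iteratedDeriv_succ]
    apply Filter.EventuallyEq.deriv_eq
    filter_upwards [hs.mem_nhds hx] with y hy
    exact ih y hy

lemma sdt_max (f : ℝ → ℝ) (a δ D : ℝ) (hδ : 0 < δ)
    (hdiff : ∀ x ∈ Ioo (a-δ) (a+δ), DifferentiableAt ℝ f x)
    (hD : HasDerivAt (deriv f) D a)
    (hmax : IsLocalMax f a) : D ≤ 0 := by
  by_contra hpos
  push_neg at hpos
  have h0 : deriv f a = 0 := hmax.deriv_eq_zero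
  have hslope : Filter.Tendsto (slope (deriv f) a) (nhdsWithin a {a}ᶜ) (nhds D) :=
    hasDerivAt_iff_tendsto_slope.mp hD
  have hev : ∀ᶠ x in nhdsWithin a {a}ᶜ, 0 < slope (deriv f) a x :=
    hslope.eventually (eventually_gt_nhds hpos)
  rw [eventually_nhdsWithin_iff] at hev
  obtain ⟨η, hη, hev⟩ := Metric.eventually_nhds_iff.mp hev
  obtain ⟨ρ, hρ, hmax'⟩ := Metric.eventually_nhds_iff.mp hmax
  set m := min (min η ρ) δ with hmdef
  have hm : 0 < m := by positivity
  set τ := m / 2 with hτdef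
  have hτ : 0 < τ := by positivity
  have hτm : τ < m := by simp only [hτdef]; linarith
  have hτη : τ < η := lt_of_lt_of_le hτm ((min_le_left _ _).trans (min_le_left _ _))
  have hτρ : τ < ρ := lt_of_lt_of_le hτm ((min_le_left _ _).trans (min_le_right _ _))
  have hτδ : τ < δ := lt_of_lt_of_le hτm (min_le_right _ _)
  -- deriv f is positive on (a, a+τ]
  have hpos' : ∀ x ∈ Ioo a (a + τ), 0 < deriv f x := by
    intro x hx
    have hxa : x ≠ a := ne_of_gt hx.1
    have hdist : dist x a < η := by
      rw [Real.dist_eq, abs_lt]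
      constructor <;> [linarith [hx.1]; linarith [hx.2]]
    have := hev hdist hxa
    rw [slope_def_field, h0, sub_zero] at this
    have hxa' : 0 < x - a := by linarith [hx.1]
    -- this : 0 < deriv f x / (x - a)
    exact (div_pos_iff.mp this).resolve_right (fun h => absurd hxa' (not_lt.mpr (le_of_lt h.2))) |>.1
  -- f is strictly monotone on [a, a+τ]
  have hsub : Icc a (a + τ) ⊆ Ioo (a - δ) (a + δ) := by
    intro x hx
    constructor <;> [linarith [hx.1]; linarith [hx.2]]
  have hcont : ContinuousOn f (Icc a (a + τ)) := fun x hx =>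
    (hdiff x (hsub hx)).continuousAt.continuousWithinAt
  have hmono : StrictMonoOn f (Icc a (a + τ)) := by
    apply strictMonoOn_of_deriv_pos (convex_Icc _ _) hcont
    intro x hx
    rw [interior_Icc] at hx
    exact hpos' x hx
  have h1 : f a < f (a + τ) := by
    apply hmono (left_mem_Icc.mpr (by linarith)) (right_mem_Icc.mpr (by linarith))
    linarith
  have h2 : f (a + τ) ≤ f a := by
    apply hmax' ?_
    rw [Real.dist_eq]
    rw [abs_of_pos] <;> simp <;> linarith
  linarith

lemma sdt_min (f : ℝ → ℝ) (a δ D : ℝ) (hδ : 0 < δ)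
    (hdiff : ∀ x ∈ Ioo (a-δ) (a+δ), DifferentiableAt ℝ f x)
    (hD : HasDerivAt (deriv f) D a)
    (hmin : IsLocalMin f a) : 0 ≤ D := by
  have hneg : deriv (fun y => -f y) = fun y => -(deriv f y) := by
    funext y; exact deriv.neg
  have hD' : HasDerivAt (deriv (fun y => -f y)) (-D) a := by
    rw [hneg]; exact hD.neg
  have := sdt_max (fun y => -f y) a δ (-D) hδ
    (fun x hx => (hdiff x hx).neg) hD' hmin.neg
  linarith

lemma endpoint_deriv_bound (h : ℝ → ℝ) (a b B : ℝ) (hab : a < b) (hB : 0 ≤ B)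
    (hdiff : ∀ x ∈ Ioo a b, DifferentiableAt ℝ h x)
    (hbd : ∀ x ∈ Ioo a b, |deriv h x| ≤ B) : |deriv h b| ≤ B := by
  by_cases hd : DifferentiableAt ℝ h b
  · have T : Tendsto (slope h b) (nhdsWithin b (Iio b)) (nhds (deriv h b)) :=
      (hasDerivAt_iff_tendsto_slope.mp hd.hasDerivAt).mono_left
        (nhdsWithin_mono b (fun x hx => ne_of_lt hx))
    have hmem : Ioi a ∈ nhds b := Ioi_mem_nhds hab
    have hev : ∀ᶠ x in nhdsWithin b (Iio b), a < x ∧ x < b := by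
      filter_upwards [mem_nhdsWithin_of_mem_nhds hmem, self_mem_nhdsWithin] with x h1 h2
      exact ⟨h1, h2⟩
    have hev2 : ∀ᶠ x in nhdsWithin b (Iio b), |slope h b x| ≤ B := by
      filter_upwards [hev] with x hx
      have hxb : x < b := hx.2
      have hcont : ContinuousOn h (Icc x b) := by
        intro y hy
        rcases eq_or_lt_of_le hy.2 with rfl | hyb
        · exact hd.continuousAt.continuousWithinAt
        · exact (hdiff y ⟨lt_of_lt_of_le hx.1 hy.1, hyb⟩).continuousAt.continuousWithinAt
      have hdiff' : ∀ y ∈ Ioo x b, HasDerivAt h (deriv h y) y := fun y hy =>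
        (hdiff y ⟨lt_trans hx.1 hy.1, hy.2⟩).hasDerivAt
      obtain ⟨ξ, hξ, hξ2⟩ := exists_hasDerivAt_eq_slope h (deriv h) hxb hcont hdiff'
      have : slope h b x = deriv h ξ := by
        rw [slope_def_field, hξ2]
        rw [div_eq_div_iff (by linarith) (by linarith)]
        ring
      rw [this]
      exact hbd ξ ⟨lt_trans hx.1 hξ.1, hξ.2⟩
    exact le_of_tendsto T.abs hev2
  · rw [deriv_zero_of_not_differentiableAt hd]
    simpa using hB

lemma chain_aux (u : E2 → ℝ) (hu : ContDiffOn ℝ (⊤ : ℕ∞) u (ball 0 1)) (x₀ w : E2) (t₀ : ℝ)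
    (hx : x₀ + t₀ • w ∈ ball (0:E2) 1) :
    HasDerivAt (deriv (fun t : ℝ => u (x₀ + t • w)))
      (fderiv ℝ (fun y => fderiv ℝ u y w) (x₀ + t₀ • w) w) t₀ := by
  set x := x₀ + t₀ • w with hxdef
  obtain ⟨δ, hδ, hball⟩ := Metric.isOpen_iff.1 Metric.isOpen_ball x hx
  have hCA : ∀ y ∈ ball x δ, ContDiffAt ℝ (⊤ : ℕ∞) u y := fun y hy =>
    (hu y (hball hy)).contDiffAt (Metric.isOpen_ball.mem_nhds (hball hy))
  set A : E2 → ℝ := fun y => fderiv ℝ u y w with hA_def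
  have hA : ∀ y ∈ ball x δ, DifferentiableAt ℝ A y := by
    intro y hy
    have h1 : ContDiffAt ℝ 1 (fderiv ℝ u) y := (hCA y hy).fderiv_right (WithTop.coe_le_coe.mpr le_top)
    exact ((h1.clm_apply contDiffAt_const).differentiableAt one_ne_zero)
  have hc : ∀ t : ℝ, HasDerivAt (fun s : ℝ => x₀ + s • w) w t := by
    intro t
    simpa using ((hasDerivAt_id t).smul_const w).const_add x₀
  have hδ' : ∀ t : ℝ, |t - t₀| * ‖w‖ < δ → x₀ + t • w ∈ ball x δ := by
    intro t ht
    simp only [Metric.mem_ball, dist_eq_norm, hxdef]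
    have : x₀ + t • w - (x₀ + t₀ • w) = (t - t₀) • w := by
      rw [sub_smul]; abel
    rw [this, norm_smul]
    simpa using ht
  have hev : ∀ᶠ t in nhds t₀, |t - t₀| * ‖w‖ < δ := by
    have hcont : Continuous (fun t : ℝ => |t - t₀| * ‖w‖) :=
      ((continuous_id.sub continuous_const).abs).mul continuous_const
    have h0 : (fun t : ℝ => |t - t₀| * ‖w‖) t₀ < δ := by simpa using hδ
    exact hcont.continuousAt.eventually_lt continuousAt_const h0
  have key : ∀ᶠ t in nhds t₀, deriv (fun s : ℝ => u (x₀ + s • w)) t = A (x₀ + t • w) := by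
    filter_upwards [hev] with t ht
    have hmem := hδ' t ht
    have hdu : HasFDerivAt u (fderiv ℝ u (x₀ + t • w)) (x₀ + t • w) :=
      ((hCA _ hmem).differentiableAt (by simp)).hasFDerivAt
    exact (hdu.comp_hasDerivAt t (hc t)).deriv
  have hAd : DifferentiableAt ℝ A x := hA x (Metric.mem_ball_self hδ)
  have h3 : HasDerivAt (fun t : ℝ => A (x₀ + t • w)) (fderiv ℝ A x w) t₀ := by
    have h4 : HasFDerivAt A (fderiv ℝ A x) (x₀ + t₀ • w) := by
      rw [← hxdef]; exact hAd.hasFDerivAt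
    exact h4.comp_hasDerivAt t₀ (hc t₀)
  exact h3.congr_of_eventuallyEq (key.mono fun t ht => ht)

lemma u_nonpos (ε : ℝ) (hε : 0 < ε) (u : E2 → ℝ) (hsol : IsDirichletSol ε u) :
    ∀ x ∈ closedBall (0:E2) 1, u x ≤ 0 := by
  obtain ⟨hcont, hsm, hpde, hbdy⟩ := hsol
  obtain ⟨x₀, hx₀, hmax⟩ := (isCompact_closedBall (0:E2) 1).exists_isMaxOn
    ⟨0, by simp⟩ hcont
  suffices h : u x₀ ≤ 0 by
    intro x hx
    exact le_trans (hmax hx) h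
  rcases eq_or_lt_of_le (mem_closedBall_iff_norm.mp hx₀) with hb | hb
  · -- boundary: ‖x₀ - 0‖ = 1
    have : x₀ ∈ sphere (0:E2) 1 := by
      simpa [mem_sphere_iff_norm] using hb
    rw [hbdy x₀ this]
  · have hball : x₀ ∈ ball (0:E2) 1 := by
      simpa [mem_ball_iff_norm] using hb
    -- each second partial at the interior max is ≤ 0
    have hlap : ∀ i : Fin 2,
        fderiv ℝ (fun y => fderiv ℝ u y (EuclideanSpace.single i 1)) x₀
          (EuclideanSpace.single i 1) ≤ 0 := by
      intro i
      set ei : E2 := EuclideanSpace.single i 1 with hei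
      set φ : ℝ → ℝ := fun t => u (x₀ + t • ei) with hφ
      have hev : ∀ᶠ t in nhds (0:ℝ), x₀ + t • ei ∈ ball (0:E2) 1 := by
        have hc : Continuous (fun t : ℝ => x₀ + t • ei) :=
          continuous_const.add (continuous_id.smul continuous_const)
        have : (fun t : ℝ => x₀ + t • ei) 0 ∈ ball (0:E2) 1 := by simpa using hball
        exact hc.continuousAt.preimage_mem_nhds (isOpen_ball.mem_nhds this)
      obtain ⟨δ, hδ, hδball⟩ := Metric.eventually_nhds_iff.mp hev
      have hD : HasDerivAt (deriv φ)
          (fderiv ℝ (fun y => fderiv ℝ u y ei) x₀ ei) 0 := by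
        have := chain_aux u hsm x₀ ei 0 (by simpa using hball)
        simpa using this
      have hdiff : ∀ t ∈ Ioo (0-δ) (0+δ), DifferentiableAt ℝ φ t := by
        intro t ht
        have hmem : x₀ + t • ei ∈ ball (0:E2) 1 := by
          apply hδball
          rw [Real.dist_eq]
          rw [sub_zero]
          rcases ht with ⟨h1, h2⟩
          rw [abs_lt]; constructor <;> linarith
        have hdu : DifferentiableAt ℝ u (x₀ + t • ei) :=
          ((hsm _ hmem).contDiffAt (isOpen_ball.mem_nhds hmem)).differentiableAt (by simp)
        have hcurve : HasDerivAt (fun s : ℝ => x₀ + s • ei) ei t := by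
          simpa using ((hasDerivAt_id t).smul_const ei).const_add x₀
        exact (hdu.hasFDerivAt.comp_hasDerivAt t hcurve).differentiableAt
      have hlm : IsLocalMax φ 0 := by
        filter_upwards [hev] with t ht
        have : u (x₀ + t • ei) ≤ u x₀ := hmax (ball_subset_closedBall ht)
        simpa [hφ] using this
      exact sdt_max φ 0 δ _ hδ hdiff hD hlm
    have hsum : laplacian2 u x₀ ≤ 0 := by
      rw [laplacian2, Fin.sum_univ_two]
      have h0 := hlap 0
      have h1 := hlap 1
      linarith
    rw [hpde x₀ hball] at hsum
    have hε2 : (0:ℝ) < (ε^2)⁻¹ := by positivity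
    have hexp : Real.exp (u x₀) - ‖x₀‖^2 * Real.exp (-u x₀) ≤ 0 := by
      by_contra hcc
      push_neg at hcc
      nlinarith
    have hnorm : ‖x₀‖^2 ≤ 1 := by
      have : ‖x₀‖ ≤ 1 := by
        simpa [mem_closedBall_iff_norm] using hx₀
      nlinarith [norm_nonneg x₀]
    have : Real.exp (u x₀) ≤ Real.exp (-u x₀) := by
      nlinarith [Real.exp_pos (-u x₀)]
    have := Real.exp_le_exp.mp this
    linarith

noncomputable def Vfun (u : E2 → ℝ) : ℝ → ℝ :=
  fun t => u (t • EuclideanSpace.single 0 1) - Real.log t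

lemma radial_ODE (ε : ℝ) (hε : 0 < ε) (u : E2 → ℝ) (g : ℝ → ℝ)
    (hsol : IsDirichletSol ε u)
    (hrad : ∀ x ∈ closedBall (0:E2) 1, u x = g ‖x‖) :
    ∀ r ∈ Ioo (0:ℝ) 1,
      HasDerivAt (Vfun u) (deriv (Vfun u) r) r ∧
      HasDerivAt (deriv (Vfun u))
        (2*r*(ε^2)⁻¹*Real.sinh (Vfun u r) - deriv (Vfun u) r / r) r := by
  obtain ⟨hcont, hsm, hpde, hbdy⟩ := hsol
  set e₀ : E2 := EuclideanSpace.single 0 1 with he₀def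
  set e₁ : E2 := EuclideanSpace.single 1 1 with he₁def
  have hne₀ : ‖e₀‖ = 1 := by rw [he₀def, EuclideanSpace.norm_single]; norm_num
  have hsn : ∀ t : ℝ, ‖t • e₀‖ = |t| := by
    intro t; rw [norm_smul, hne₀, mul_one, Real.norm_eq_abs]
  have hmb : ∀ {t : ℝ}, 0 < t → t < 1 → t • e₀ ∈ ball (0:E2) 1 := by
    intro t h0 h1
    rw [mem_ball_iff_norm, sub_zero, hsn, abs_of_pos h0]; exact h1
  have hmcb : ∀ {t : ℝ}, 0 ≤ t → t ≤ 1 → t • e₀ ∈ closedBall (0:E2) 1 := by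
    intro t h0 h1
    rw [mem_closedBall_iff_norm, sub_zero, hsn, abs_of_nonneg h0]; exact h1
  set U : ℝ → ℝ := fun t => u (t • e₀) with hUdef
  have hUg : ∀ t : ℝ, 0 ≤ t → t ≤ 1 → U t = g t := by
    intro t h0 h1
    rw [hUdef]
    simp only
    rw [hrad _ (hmcb h0 h1), hsn, abs_of_nonneg h0]
  -- first derivative of U
  have hcurve₀ : ∀ t : ℝ, HasDerivAt (fun s : ℝ => s • e₀) e₀ t := by
    intro t; simpa using (hasDerivAt_id t).smul_const e₀
  have hUat : ∀ r ∈ Ioo (0:ℝ) 1, HasDerivAt U (fderiv ℝ u (r • e₀) e₀) r := by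
    intro r hr
    have hmem := hmb hr.1 hr.2
    have hdu : DifferentiableAt ℝ u (r • e₀) :=
      ((hsm _ hmem).contDiffAt (isOpen_ball.mem_nhds hmem)).differentiableAt (by simp)
    exact hdu.hasFDerivAt.comp_hasDerivAt r (hcurve₀ r)
  set U' : ℝ → ℝ := deriv U with hU'def
  have hU'at : ∀ r ∈ Ioo (0:ℝ) 1, HasDerivAt U (U' r) r := by
    intro r hr
    have h := hUat r hr
    have heq : U' r = fderiv ℝ u (r • e₀) e₀ := by rw [hU'def]; exact h.deriv
    rw [heq]
    exact h
  -- second derivative of U in the radial direction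
  have hU'' : ∀ r ∈ Ioo (0:ℝ) 1, HasDerivAt U'
      (fderiv ℝ (fun y => fderiv ℝ u y e₀) (r • e₀) e₀) r := by
    intro r hr
    have hmem : (0:E2) + r • e₀ ∈ ball (0:E2) 1 := by
      rw [zero_add]; exact hmb hr.1 hr.2
    have h := chain_aux u hsm 0 e₀ r hmem
    have heq : (fun t : ℝ => u ((0:E2) + t • e₀)) = U := by
      funext t; rw [zero_add]
    rw [heq, zero_add] at h
    exact h
  -- transverse second derivative equals U' r / r
  have hnorm2 : ∀ (a b : ℝ), ‖a • e₀ + b • e₁‖ = Real.sqrt (a^2 + b^2) := by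
    intro a b
    rw [EuclideanSpace.norm_eq, Fin.sum_univ_two]
    have h0 : (a • e₀ + b • e₁) 0 = a := by
      simp [he₀def, he₁def, EuclideanSpace.single_apply]
    have h1 : (a • e₀ + b • e₁) 1 = b := by
      simp [he₀def, he₁def, EuclideanSpace.single_apply]
    rw [h0, h1, Real.norm_eq_abs, Real.norm_eq_abs, sq_abs, sq_abs]
  have hLap₁ : ∀ r ∈ Ioo (0:ℝ) 1,
      fderiv ℝ (fun y => fderiv ℝ u y e₁) (r • e₀) e₁ = U' r / r := by
    intro r hr
    have hr0 : (0:ℝ) < r := hr.1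
    have hr1 : r < 1 := hr.2
    set x : E2 := r • e₀ with hxdef
    have hxball : x ∈ ball (0:E2) 1 := hmb hr0 hr1
    have hx0 : x + (0:ℝ) • e₁ ∈ ball (0:E2) 1 := by simpa using hxball
    have hW2 := chain_aux u hsm x e₁ 0 hx0
    set W : ℝ → ℝ := fun t => u (x + t • e₁) with hWdef
    have hx0' : x + (0:ℝ) • e₁ = x := by simp
    rw [hx0'] at hW2
    -- hW2 : HasDerivAt (deriv W) (fderiv ... x e₁) 0
    set ψ : ℝ → ℝ := fun t => Real.sqrt (r^2 + t^2) with hψdef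
    have hψpos : ∀ t : ℝ, 0 < ψ t := by
      intro t
      apply Real.sqrt_pos.mpr
      positivity
    have hψat : ∀ t : ℝ, HasDerivAt ψ (t / ψ t) t := by
      intro t
      have hin : HasDerivAt (fun s : ℝ => r^2 + s^2) (2*t) t := by
        simpa using ((hasDerivAt_pow 2 t).const_add (r^2))
      have := hin.sqrt (by positivity)
      convert this using 1
      rw [hψdef]
      field_simp
    have hψ0 : ψ 0 = r := by
      rw [hψdef]; simp [Real.sqrt_sq hr0.le]
    set β : ℝ := min 1 (1 - r^2) with hβdef
    have hβpos : 0 < β := by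
      rw [hβdef]; apply lt_min one_pos; nlinarith
    have hsq : ∀ t : ℝ, |t| < β → r^2 + t^2 < 1 := by
      intro t ht
      have h1 : |t| < 1 := lt_of_lt_of_le ht (min_le_left _ _)
      have h2 : β ≤ 1 - r^2 := min_le_right _ _
      have h3 : t^2 < β := by
        rcases eq_or_lt_of_le (abs_nonneg t) with h | h
        · rw [← sq_abs, ← h]; simpa using hβpos
        · rw [← sq_abs]
          calc |t|^2 = |t| * |t| := sq (|t|) ▸ by ring
          _ < 1 * β := by apply mul_lt_mul' h1.le ht (abs_nonneg t) one_pos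
          _ = β := one_mul β
      linarith
    have hψmem : ∀ t : ℝ, |t| < β → ψ t ∈ Ioo (0:ℝ) 1 := by
      intro t ht
      refine ⟨hψpos t, ?_⟩
      rw [hψdef]
      simp only
      have := hsq t ht
      calc Real.sqrt (r^2 + t^2) < Real.sqrt 1 := by
            apply Real.sqrt_lt_sqrt (by positivity) this
      _ = 1 := Real.sqrt_one
    have hWU : ∀ t : ℝ, |t| < β → W t = U (ψ t) := by
      intro t ht
      have hle : r^2 + t^2 ≤ 1 := (hsq t ht).le
      have hmemc : x + t • e₁ ∈ closedBall (0:E2) 1 := by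
        rw [mem_closedBall_iff_norm, sub_zero, hxdef, hnorm2]
        rw [show Real.sqrt (r^2 + t^2) ≤ 1 ↔ _ from Iff.rfl]
        calc Real.sqrt (r^2 + t^2) ≤ Real.sqrt 1 := Real.sqrt_le_sqrt hle
        _ = 1 := Real.sqrt_one
      have hψt := hψmem t ht
      rw [hWdef]
      simp only
      rw [hrad _ hmemc, hxdef, hnorm2]
      rw [hUg (ψ t) (hψt.1.le) (hψt.2.le)]
    have hevβ : ∀ᶠ t in nhds (0:ℝ), |t| < β := by
      have : Continuous (fun t : ℝ => |t|) := continuous_abs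
      have h0 : |(0:ℝ)| < β := by simpa using hβpos
      exact this.continuousAt.eventually_lt continuousAt_const h0
    have hderivW : ∀ᶠ t in nhds (0:ℝ), deriv W t = U' (ψ t) * (t / ψ t) := by
      filter_upwards [hevβ, eventually_eventually_nhds.mpr hevβ] with t ht htev
      have hWUev : W =ᶠ[nhds t] fun s => U (ψ s) := by
        filter_upwards [htev] with s hs
        exact hWU s hs
      rw [hWUev.deriv_eq]
      exact ((hU'at (ψ t) (hψmem t ht)).comp t (hψat t)).deriv
    have hd2 : deriv (deriv W) 0 = U' r / r := by
      rw [Filter.EventuallyEq.deriv_eq hderivW]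
      have hF₁ : HasDerivAt (fun t : ℝ => U' (ψ t))
          ((fderiv ℝ (fun y => fderiv ℝ u y e₀) (r • e₀) e₀) * (0 / ψ 0)) 0 := by
        have hU''ψ : HasDerivAt U' ((fderiv ℝ (fun y => fderiv ℝ u y e₀)) (r • e₀) e₀) (ψ 0) := by
          rw [hψ0]; exact hU'' r hr
        exact hU''ψ.comp 0 (hψat 0)
      have hF₂ : HasDerivAt (fun t : ℝ => t / ψ t)
          ((1 * ψ 0 - 0 * (0 / ψ 0)) / (ψ 0)^2) 0 := by
        exact (hasDerivAt_id 0).div (hψat 0) (ne_of_gt (hψpos 0))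
      have hprod : HasDerivAt (fun t => U' (ψ t) * (t / ψ t)) _ 0 := hF₁.mul hF₂
      rw [hprod.deriv]
      rw [hψ0]
      field_simp
      ring
    rw [← hW2.deriv, hd2]
  -- the ODE for U'
  have hODE_U : ∀ r ∈ Ioo (0:ℝ) 1, HasDerivAt U'
      ((ε^2)⁻¹ * (Real.exp (U r) - r^2 * Real.exp (-U r)) - U' r / r) r := by
    intro r hr
    have h := hU'' r hr
    have hxball := hmb hr.1 hr.2
    have hlap := hpde _ hxball
    rw [laplacian2, Fin.sum_univ_two] at hlap
    have hn : ‖r • e₀‖ = r := by rw [hsn, abs_of_pos hr.1]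
    rw [hLap₁ r hr] at hlap
    have hux : u (r • e₀) = U r := rfl
    rw [hux, hn] at hlap
    have : fderiv ℝ (fun y => fderiv ℝ u y e₀) (r • e₀) e₀
        = (ε^2)⁻¹ * (Real.exp (U r) - r^2 * Real.exp (-U r)) - U' r / r := by
      linarith
    rwa [this] at h
  -- pass to V
  intro r hr
  have hr0 : (0:ℝ) < r := hr.1
  have hrne : r ≠ 0 := ne_of_gt hr0
  have hVU : Vfun u = fun t => U t - Real.log t := by
    funext t; rw [Vfun, hUdef, he₀def]
  have hVat : HasDerivAt (Vfun u) (U' r - r⁻¹) r := by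
    rw [hVU]
    exact (hU'at r hr).sub (Real.hasDerivAt_log hrne)
  have hV'eq : ∀ ρ ∈ Ioo (0:ℝ) 1, deriv (Vfun u) ρ = U' ρ - ρ⁻¹ := by
    intro ρ hρ
    have : HasDerivAt (Vfun u) (U' ρ - ρ⁻¹) ρ := by
      rw [hVU]; exact (hU'at ρ hρ).sub (Real.hasDerivAt_log (ne_of_gt hρ.1))
    exact this.deriv
  constructor
  · rw [hV'eq r hr]; exact hVat
  · have hbase : HasDerivAt (fun t : ℝ => U' t - t⁻¹)
        (((ε^2)⁻¹ * (Real.exp (U r) - r^2 * Real.exp (-U r)) - U' r / r) - (-(r^2)⁻¹)) r :=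
      (hODE_U r hr).sub (hasDerivAt_inv hrne)
    have hcongr : (deriv (Vfun u)) =ᶠ[nhds r] fun t => U' t - t⁻¹ := by
      filter_upwards [isOpen_Ioo.mem_nhds hr] with ρ hρ
      exact hV'eq ρ hρ
    have h2 : HasDerivAt (deriv (Vfun u))
        (((ε^2)⁻¹ * (Real.exp (U r) - r^2 * Real.exp (-U r)) - U' r / r) - (-(r^2)⁻¹)) r :=
      hbase.congr_of_eventuallyEq hcongr
    have hval : ((ε^2)⁻¹ * (Real.exp (U r) - r^2 * Real.exp (-U r)) - U' r / r) - (-(r^2)⁻¹)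
        = 2*r*(ε^2)⁻¹*Real.sinh (Vfun u r) - deriv (Vfun u) r / r := by
      have hU_V : U r = Vfun u r + Real.log r := by
        rw [hVU]; simp
      have he1 : Real.exp (U r) = r * Real.exp (Vfun u r) := by
        rw [hU_V, Real.exp_add, Real.exp_log hr0]; ring
      have he2 : Real.exp (-U r) = Real.exp (-Vfun u r) / r := by
        have hh : -U r = -Vfun u r + -Real.log r := by rw [hU_V]; ring
        rw [hh, Real.exp_add, Real.exp_neg (Real.log r), Real.exp_log hr0, div_eq_mul_inv]
      rw [he1, he2, Real.sinh_eq, hV'eq r hr]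
      field_simp
      ring
    rwa [hval] at h2

set_option maxHeartbeats 2000000 in
lemma V_estimates (ε : ℝ) (hε : 0 < ε) (hε8 : ε < 1/8)
    (u : E2 → ℝ) (g : ℝ → ℝ) (hsol : IsDirichletSol ε u)
    (hrad : ∀ x ∈ closedBall (0:E2) 1, u x = g ‖x‖) :
    (∀ r ∈ Ioc (0:ℝ) 1, 0 ≤ Vfun u r) ∧
    (∀ r ∈ Ioo (0:ℝ) 1, deriv (Vfun u) r ≤ 0) ∧
    (∀ r ∈ Icc (5/16:ℝ) 1, Vfun u r ≤ 2 * Real.exp (-(32*ε)⁻¹)) ∧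
    (∀ r ∈ Ico (3/8:ℝ) 1, -deriv (Vfun u) r ≤ 32 * Real.exp (-(32*ε)⁻¹)) ∧
    (∀ r ∈ Icc (1/4:ℝ) 1, Vfun u r ≤ 2) ∧ Vfun u 1 = 0 := by
  have hOD := radial_ODE ε hε u g hsol hrad
  set V : ℝ → ℝ := Vfun u with hVdef
  have hVat : ∀ r ∈ Ioo (0:ℝ) 1, HasDerivAt V (deriv V r) r := fun r hr => (hOD r hr).1
  have hODE : ∀ r ∈ Ioo (0:ℝ) 1, HasDerivAt (deriv V)
      (2*r*(ε^2)⁻¹*Real.sinh (V r) - deriv V r / r) r := fun r hr => (hOD r hr).2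
  set e₀ : E2 := EuclideanSpace.single 0 1 with he₀def
  have hne₀ : ‖e₀‖ = 1 := by rw [he₀def, EuclideanSpace.norm_single]; norm_num
  have hsn : ∀ t : ℝ, ‖t • e₀‖ = |t| := by
    intro t; rw [norm_smul, hne₀, mul_one, Real.norm_eq_abs]
  have hmcb : ∀ {t : ℝ}, 0 ≤ t → t ≤ 1 → t • e₀ ∈ closedBall (0:E2) 1 := by
    intro t h0 h1
    rw [mem_closedBall_iff_norm, sub_zero, hsn, abs_of_nonneg h0]; exact h1
  -- continuity of V on (0,1]
  have hUcont : ContinuousOn (fun t : ℝ => u (t • e₀)) (Icc 0 1) := by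
    apply hsol.1.comp ((continuous_id.smul continuous_const).continuousOn)
    intro t ht
    exact hmcb ht.1 ht.2
  have hVcont : ContinuousOn V (Ioc 0 1) := by
    rw [hVdef]
    have h1 : ContinuousOn (fun t : ℝ => u (t • e₀)) (Ioc 0 1) :=
      hUcont.mono (Ioc_subset_Icc_self)
    have h2 : ContinuousOn Real.log (Ioc (0:ℝ) 1) := by
      apply Real.continuousOn_log.mono
      intro t ht
      exact ne_of_gt ht.1
    have := h1.sub (h2)
    convert this using 1
    rfl
  have hV1 : V 1 = 0 := by
    have hsph : (EuclideanSpace.single 0 1 : E2) ∈ sphere (0:E2) 1 := by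
      rw [mem_sphere_iff_norm, sub_zero, ← he₀def, hne₀]
    have hu0 := hsol.2.2.2 _ hsph
    rw [hVdef]
    show u ((1:ℝ) • EuclideanSpace.single 0 1) - Real.log 1 = 0
    rw [one_smul, hu0, Real.log_one, sub_zero]
  -- upper bound from u ≤ 0
  have hule := u_nonpos ε hε u hsol
  have hVle : ∀ r ∈ Ioc (0:ℝ) 1, V r ≤ -Real.log r := by
    intro r hr
    rw [hVdef, Vfun]
    have := hule _ (hmcb hr.1.le hr.2)
    rw [he₀def] at this
    linarith
  have hlog4 : Real.log 4 ≤ 2 := by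
    have h1 : Real.log 4 = 2 * Real.log 2 := by
      rw [show (4:ℝ) = 2^2 by norm_num, Real.log_pow]; push_cast; ring
    have h2 : Real.log 2 < 1 := by
      have := Real.log_two_lt_d9
      linarith
    linarith
  have hVle2 : ∀ r ∈ Icc (1/4:ℝ) 1, V r ≤ 2 := by
    intro r hr
    have h1 : V r ≤ -Real.log r := hVle r ⟨by linarith [hr.1], hr.2⟩
    have h2 : -Real.log r ≤ -Real.log (1/4) := by
      have := Real.log_le_log (by norm_num : (0:ℝ) < 1/4) hr.1
      linarith
    have h3 : -Real.log (1/4:ℝ) = Real.log 4 := by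
      rw [show (1/4:ℝ) = 4⁻¹ by norm_num, Real.log_inv, neg_neg]
    linarith
  -- nonnegativity: minimum principle
  have hVpos : ∀ r ∈ Ioc (0:ℝ) 1, 0 ≤ V r := by
    intro r₀ hr₀
    rcases eq_or_lt_of_le hr₀.2 with h1 | h1
    · rw [h1, hV1]
    by_contra hneg
    push_neg at hneg
    -- pick a with V a ≥ 1
    obtain ⟨xm, _, hxm⟩ := (isCompact_closedBall (0:E2) 1).exists_isMinOn
      ⟨0, by simp⟩ hsol.1
    set m : ℝ := u xm with hmdef
    set a : ℝ := min (r₀/2) (Real.exp (m - 1)) with hadef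
    have ha0 : 0 < a := lt_min (by linarith [hr₀.1]) (Real.exp_pos _)
    have har : a < r₀ := lt_of_le_of_lt (min_le_left _ _) (by linarith [hr₀.1])
    have ha1 : a < 1 := lt_trans har h1
    have hVa : 1 ≤ V a := by
      have hlog : Real.log a ≤ m - 1 := by
        calc Real.log a ≤ Real.log (Real.exp (m-1)) :=
              Real.log_le_log ha0 (min_le_right _ _)
        _ = m - 1 := Real.log_exp _
      have hua : m ≤ u (a • e₀) := hxm (hmcb ha0.le ha1.le)
      rw [hVdef, Vfun, he₀def] at *
      linarith
    -- minimum on [a,1]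
    obtain ⟨r₁, hr₁, hmin⟩ := (isCompact_Icc (a := a) (b := 1)).exists_isMinOn
      ⟨a, by constructor <;> linarith⟩ (hVcont.mono (fun t ht => ⟨lt_of_lt_of_le ha0 ht.1, ht.2⟩))
    have hmr₀ : V r₁ ≤ V r₀ := hmin ⟨har.le, hr₀.2⟩
    have hVr₁ : V r₁ < 0 := lt_of_le_of_lt hmr₀ hneg
    have hr₁a : r₁ ≠ a := fun h => by rw [h] at hVr₁; linarith
    have hr₁1 : r₁ ≠ 1 := fun h => by rw [h, hV1] at hVr₁; linarith
    have hr₁mem : r₁ ∈ Ioo a 1 :=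
      ⟨lt_of_le_of_ne hr₁.1 (Ne.symm hr₁a), lt_of_le_of_ne hr₁.2 hr₁1⟩
    have hr₁mem' : r₁ ∈ Ioo (0:ℝ) 1 := ⟨lt_trans ha0 hr₁mem.1, hr₁mem.2⟩
    have hloc : IsLocalMin V r₁ := hmin.isLocalMin (Icc_mem_nhds hr₁mem.1 hr₁mem.2)
    have hd0 : deriv V r₁ = 0 := hloc.deriv_eq_zero
    set δ : ℝ := min r₁ (1 - r₁) with hδdef
    have hδpos : 0 < δ := lt_min hr₁mem'.1 (by linarith [hr₁mem'.2])
    have hdiff : ∀ x ∈ Ioo (r₁-δ) (r₁+δ), DifferentiableAt ℝ V x := by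
      intro x hx
      have hδ1 : δ ≤ r₁ := min_le_left _ _
      have hδ2 : δ ≤ 1 - r₁ := min_le_right _ _
      exact (hVat x ⟨by cases hx; linarith, by cases hx; linarith⟩).differentiableAt
    have := sdt_min V r₁ δ _ hδpos hdiff (hODE r₁ hr₁mem') hloc
    rw [hd0] at this
    have hsinh : Real.sinh (V r₁) < 0 := by
      calc Real.sinh (V r₁) < Real.sinh 0 := Real.sinh_lt_sinh.mpr hVr₁
      _ = 0 := Real.sinh_zero
    have hεp : (0:ℝ) < (ε^2)⁻¹ := by positivity
    have hr₁p : (0:ℝ) < r₁ := hr₁mem'.1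
    have hzd : (0:ℝ) / r₁ = 0 := zero_div _
    rw [hzd, sub_zero] at this
    have hcoef : 0 < 2 * r₁ * (ε^2)⁻¹ := by positivity
    nlinarith [mul_pos hcoef (neg_pos.mpr hsinh)]
  -- V' ≤ 0
  have hV'nonpos : ∀ r ∈ Ioo (0:ℝ) 1, deriv V r ≤ 0 := by
    intro r₀ hr₀
    by_contra hc
    push_neg at hc
    set c : ℝ := deriv V r₀ with hcdef
    set w : ℝ → ℝ := fun ρ => ρ * deriv V ρ with hwdef
    have hwd : ∀ ρ ∈ Ioo (0:ℝ) 1, HasDerivAt w (2*ρ^2*(ε^2)⁻¹*Real.sinh (V ρ)) ρ := by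
      intro ρ hρ
      have h := (hasDerivAt_id' ρ).mul (hODE ρ hρ)
      refine h.congr_deriv ?_
      have hρ0 : (ρ:ℝ) ≠ 0 := ne_of_gt hρ.1
      field_simp
      ring
    have key : ∀ b ∈ Ioo r₀ 1, r₀ * c * (b - r₀) ≤ V b := by
      intro b hb
      have hsubI : Icc r₀ b ⊆ Ioo (0:ℝ) 1 := fun t ht =>
        ⟨lt_of_lt_of_le hr₀.1 ht.1, lt_of_le_of_lt ht.2 hb.2⟩
      have hmono : MonotoneOn w (Icc r₀ b) := by
        apply monotoneOn_of_deriv_nonneg (convex_Icc _ _)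
        · intro t ht
          exact (hwd t (hsubI ht)).continuousAt.continuousWithinAt
        · intro t ht
          rw [interior_Icc] at ht
          exact (hwd t (hsubI (Ioo_subset_Icc_self ht))).differentiableAt.differentiableWithinAt
        · intro t ht
          rw [interior_Icc] at ht
          have hmem := hsubI (Ioo_subset_Icc_self ht)
          rw [(hwd t hmem).deriv]
          have hsinh : 0 ≤ Real.sinh (V t) := by
            rw [← Real.sinh_zero]
            exact Real.sinh_le_sinh.mpr (hVpos t ⟨hmem.1, hmem.2.le⟩)
          positivity
      obtain ⟨ξ, hξ, hslope⟩ := exists_hasDerivAt_eq_slope V (deriv V) hb.1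
        (hVcont.mono (fun t ht => ⟨lt_of_lt_of_le hr₀.1 ht.1, le_of_lt (lt_of_le_of_lt ht.2 hb.2)⟩)
          |>.mono (fun t ht => ht))
        (fun x hx => hVat x (hsubI (Ioo_subset_Icc_self hx)))
      have hwineq : r₀ * c ≤ ξ * deriv V ξ := by
        have := hmono (left_mem_Icc.mpr hb.1.le) (Ioo_subset_Icc_self hξ) hξ.1.le
        rw [hwdef] at this
        simpa [hcdef] using this
      have hξ1 : ξ < 1 := lt_trans hξ.2 hb.2
      have hξ0 : 0 < ξ := lt_trans hr₀.1 hξ.1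
      have hc2 : r₀ * c ≤ deriv V ξ := by
        rcases le_or_gt (deriv V ξ) 0 with h | h
        · nlinarith [mul_pos hr₀.1 hc]
        · nlinarith
      rw [hslope] at hc2
      have hb0 : 0 < b - r₀ := by linarith [hb.1]
      rw [le_div_iff₀ hb0] at hc2
      have hV0 : 0 ≤ V r₀ := hVpos r₀ ⟨hr₀.1, hr₀.2.le⟩
      nlinarith
    have hNB : (nhdsWithin (1:ℝ) (Ioo r₀ 1)).NeBot := by
      rw [← mem_closure_iff_nhdsWithin_neBot, closure_Ioo (ne_of_lt hr₀.2)]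
      exact ⟨hr₀.2.le, le_refl 1⟩
    have hT1 : Tendsto V (nhdsWithin 1 (Ioo r₀ 1)) (nhds (V 1)) := by
      apply (hVcont 1 ⟨one_pos, le_refl 1⟩).mono_left
      apply nhdsWithin_mono
      intro t ht
      exact ⟨lt_trans hr₀.1 ht.1, ht.2.le⟩
    have hT2 : Tendsto (fun b => r₀ * c * (b - r₀)) (nhdsWithin 1 (Ioo r₀ 1))
        (nhds (r₀ * c * (1 - r₀))) := by
      apply Tendsto.mono_left _ nhdsWithin_le_nhds
      have hcont2 : Continuous (fun b : ℝ => r₀ * c * (b - r₀)) :=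
        continuous_const.mul (continuous_id.sub continuous_const)
      exact hcont2.tendsto 1
    have hev2 : ∀ᶠ b in nhdsWithin 1 (Ioo r₀ 1), r₀ * c * (b - r₀) ≤ V b := by
      filter_upwards [self_mem_nhdsWithin] with b hb using key b hb
    have hfin := le_of_tendsto_of_tendsto hT2 hT1 hev2
    rw [hV1] at hfin
    nlinarith [mul_pos (mul_pos hr₀.1 hc) (by linarith [hr₀.2] : (0:ℝ) < 1 - r₀)]
  -- barrier
  have hbar : ∀ r ∈ Icc (1/4:ℝ) 1, V r ≤ 2 * Real.exp (-((r - 1/4) * (2*ε)⁻¹)) := by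
    set W2 : ℝ → ℝ := fun ρ => 2 * Real.exp (-((ρ - 1/4) * (2*ε)⁻¹)) with hW2def
    have hW2pos : ∀ ρ, 0 < W2 ρ := fun ρ => by positivity
    have hW2at : ∀ ρ : ℝ, HasDerivAt W2 (-(2*ε)⁻¹ * W2 ρ) ρ := by
      intro ρ
      have hlin : HasDerivAt (fun ρ : ℝ => -((ρ - 1/4) * (2*ε)⁻¹)) (-(2*ε)⁻¹) ρ := by
        refine (((hasDerivAt_id ρ).sub_const (1/4)).mul_const ((2*ε)⁻¹)).neg.congr_deriv ?_
        ring
      have h2 := (hlin.exp).const_mul 2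
      refine h2.congr_deriv ?_
      rw [hW2def]
      ring
    set h : ℝ → ℝ := fun ρ => V ρ - W2 ρ with hhdef
    have hW2cont : Continuous W2 := by
      rw [hW2def]; fun_prop
    have hhcont : ContinuousOn h (Icc (1/4:ℝ) 1) :=
      (hVcont.mono (fun t ht => ⟨by linarith [ht.1], ht.2⟩)).sub hW2cont.continuousOn
    obtain ⟨r₂, hr₂, hmax⟩ := (isCompact_Icc (a := (1/4:ℝ)) (b := 1)).exists_isMaxOn
      ⟨1/2, by norm_num⟩ hhcont
    rcases le_or_gt (h r₂) 0 with hple | hple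
    · intro r hr
      have h2 : h r ≤ h r₂ := hmax hr
      have h3 : h r ≤ 0 := le_trans h2 hple
      have hW2r : W2 r = 2 * Real.exp (-((r - 1/4) * (2*ε)⁻¹)) := rfl
      have h4 : h r = V r - W2 r := rfl
      rw [h4, hW2r] at h3
      linarith
    · exfalso
      have hh14 : h (1/4) ≤ 0 := by
        rw [hhdef]
        simp only
        have h1 : V (1/4) ≤ 2 := hVle2 (1/4) (by norm_num)
        have h2 : W2 (1/4) = 2 := by rw [hW2def]; norm_num
        linarith
      have hh1 : h 1 < 0 := by
        rw [hhdef]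
        simp only
        rw [hV1]
        linarith [hW2pos 1]
      have hr₂14 : r₂ ≠ 1/4 := fun hq => by rw [hq] at hple; linarith
      have hr₂1 : r₂ ≠ 1 := fun hq => by rw [hq] at hple; linarith
      have hr₂mem : r₂ ∈ Ioo (1/4:ℝ) 1 :=
        ⟨lt_of_le_of_ne hr₂.1 (Ne.symm hr₂14), lt_of_le_of_ne hr₂.2 hr₂1⟩
      have hr₂mem' : r₂ ∈ Ioo (0:ℝ) 1 := ⟨by linarith [hr₂mem.1], hr₂mem.2⟩
      have hloc : IsLocalMax h r₂ := hmax.isLocalMax (Icc_mem_nhds hr₂mem.1 hr₂mem.2)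
      have hhat : ∀ ρ ∈ Ioo (0:ℝ) 1, HasDerivAt h (deriv V ρ + (2*ε)⁻¹ * W2 ρ) ρ := by
        intro ρ hρ
        have := (hVat ρ hρ).sub (hW2at ρ)
        refine this.congr_deriv ?_
        ring
      have hderivh : ∀ ρ ∈ Ioo (0:ℝ) 1, deriv h ρ = deriv V ρ + (2*ε)⁻¹ * W2 ρ :=
        fun ρ hρ => (hhat ρ hρ).deriv
      set D : ℝ := (2*r₂*(ε^2)⁻¹*Real.sinh (V r₂) - deriv V r₂ / r₂)
        + (2*ε)⁻¹ * (-(2*ε)⁻¹ * W2 r₂) with hDdef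
      have hD : HasDerivAt (deriv h) D r₂ := by
        have hbase : HasDerivAt (fun ρ => deriv V ρ + (2*ε)⁻¹ * W2 ρ) D r₂ :=
          (hODE r₂ hr₂mem').add ((hW2at r₂).const_mul ((2*ε)⁻¹))
        apply hbase.congr_of_eventuallyEq
        filter_upwards [isOpen_Ioo.mem_nhds hr₂mem'] with ρ hρ
        exact hderivh ρ hρ
      set δ : ℝ := min r₂ (1 - r₂) with hδdef
      have hδpos : 0 < δ := lt_min hr₂mem'.1 (by linarith [hr₂mem'.2])
      have hdiff : ∀ x ∈ Ioo (r₂-δ) (r₂+δ), DifferentiableAt ℝ h x := by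
        intro x hx
        have hδ1 : δ ≤ r₂ := min_le_left _ _
        have hδ2 : δ ≤ 1 - r₂ := min_le_right _ _
        have hxm : x ∈ Ioo (0:ℝ) 1 := ⟨by cases hx; linarith, by cases hx; linarith⟩
        exact (hhat x hxm).differentiableAt
      have hDle := sdt_max h r₂ δ D hδpos hdiff hD hloc
      -- contradiction
      have hA : 0 ≤ V r₂ := hVpos r₂ ⟨hr₂mem'.1, hr₂mem'.2.le⟩
      have hS : V r₂ ≤ Real.sinh (V r₂) := self_le_sinh' hA
      have hAB : 0 < V r₂ - W2 r₂ := by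
        rw [hhdef] at hple; simpa using hple
      have hd : deriv V r₂ ≤ 0 := hV'nonpos r₂ hr₂mem'
      have hB : 0 < W2 r₂ := hW2pos r₂
      have hεp : (0:ℝ) < (ε^2)⁻¹ := by positivity
      have hq : (2*ε)⁻¹ * (2*ε)⁻¹ = (ε^2)⁻¹ / 4 := by
        field_simp
        ring
      have hdd : 0 ≤ -(deriv V r₂) / r₂ := div_nonneg (by linarith) hr₂mem'.1.le
      rw [hDdef] at hDle
      have hs0 : 0 ≤ Real.sinh (V r₂) := le_trans hA hS
      have ht1 : (1/2)*(ε^2)⁻¹*(V r₂) ≤ 2*r₂*(ε^2)⁻¹*Real.sinh (V r₂) := by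
        have e1 : (1/2)*(ε^2)⁻¹*(V r₂) ≤ (1/2)*(ε^2)⁻¹*Real.sinh (V r₂) :=
          mul_le_mul_of_nonneg_left hS (by positivity)
        have e2 : (1/2)*(ε^2)⁻¹*Real.sinh (V r₂) ≤ 2*r₂*(ε^2)⁻¹*Real.sinh (V r₂) := by
          apply mul_le_mul_of_nonneg_right ?_ hs0
          nlinarith [mul_nonneg (by linarith [hr₂mem.1] : (0:ℝ) ≤ 2*r₂ - 1/2) hεp.le]
        linarith
      have ht2 : -(deriv V r₂ / r₂) ≥ 0 := by
        rw [← neg_div]; exact hdd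
      have hlast : (2*ε)⁻¹ * (-(2*ε)⁻¹ * W2 r₂) = -((ε^2)⁻¹/4 * W2 r₂) := by
        rw [← hq]; ring
      rw [hlast] at hDle
      nlinarith [mul_pos hεp hAB, mul_nonneg hεp.le hA]
  -- smallness of V on [5/16, 1]
  have hVsmall : ∀ r ∈ Icc (5/16:ℝ) 1, V r ≤ 2 * Real.exp (-(32*ε)⁻¹) := by
    intro r hr
    have h1 : V r ≤ 2 * Real.exp (-((r - 1/4) * (2*ε)⁻¹)) :=
      hbar r ⟨by linarith [hr.1], hr.2⟩
    have h2 : Real.exp (-((r - 1/4) * (2*ε)⁻¹)) ≤ Real.exp (-(32*ε)⁻¹) := by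
      apply Real.exp_le_exp.mpr
      have hc1 : (32*ε)⁻¹ ≤ (r - 1/4) * (2*ε)⁻¹ := by
        have : (1/16:ℝ) * (2*ε)⁻¹ = (32*ε)⁻¹ := by
          field_simp
          ring
        rw [← this]
        apply mul_le_mul_of_nonneg_right (by linarith [hr.1]) (by positivity)
      linarith
    linarith
  -- smallness of V' on [3/8, 1)
  have hV'small : ∀ r ∈ Ico (3/8:ℝ) 1, -deriv V r ≤ 32 * Real.exp (-(32*ε)⁻¹) := by
    intro r hr
    have hrmem : r ∈ Ioo (0:ℝ) 1 := ⟨by linarith [hr.1], hr.2⟩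
    have hsubI : Icc (r - 1/16) r ⊆ Ioo (0:ℝ) 1 := fun t ht =>
      ⟨by linarith [ht.1, hr.1], lt_of_le_of_lt ht.2 hr.2⟩
    have hmono : MonotoneOn (deriv V) (Icc (r - 1/16) r) := by
      apply monotoneOn_of_deriv_nonneg (convex_Icc _ _)
      · intro t ht
        exact (hODE t (hsubI ht)).continuousAt.continuousWithinAt
      · intro t ht
        rw [interior_Icc] at ht
        exact (hODE t (hsubI (Ioo_subset_Icc_self ht))).differentiableAt.differentiableWithinAt
      · intro t ht
        rw [interior_Icc] at ht
        have hmem := hsubI (Ioo_subset_Icc_self ht)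
        rw [(hODE t hmem).deriv]
        have hsinh : 0 ≤ Real.sinh (V t) := by
          rw [← Real.sinh_zero]
          exact Real.sinh_le_sinh.mpr (hVpos t ⟨hmem.1, hmem.2.le⟩)
        have hd : deriv V t ≤ 0 := hV'nonpos t hmem
        have hεp : (0:ℝ) < (ε^2)⁻¹ := by positivity
        have h1 : 0 ≤ 2*t*(ε^2)⁻¹*Real.sinh (V t) :=
          mul_nonneg (mul_nonneg (mul_nonneg (by norm_num) hmem.1.le) hεp.le) hsinh
        have h2 : 0 ≤ -(deriv V t / t) := by
          rw [← neg_div]; exact div_nonneg (by linarith) hmem.1.le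
        linarith
    have hab : r - 1/16 < r := by linarith
    obtain ⟨ξ, hξ, hslope⟩ := exists_hasDerivAt_eq_slope V (deriv V) hab
      (hVcont.mono (fun t ht => ⟨(hsubI ⟨ht.1, ht.2⟩).1, (hsubI ⟨ht.1, ht.2⟩).2.le⟩))
      (fun x hx => hVat x (hsubI (Ioo_subset_Icc_self hx)))
    have hle : deriv V ξ ≤ deriv V r :=
      hmono (Ioo_subset_Icc_self hξ) (right_mem_Icc.mpr hab.le) hξ.2.le
    have hVrm : 0 ≤ V r := hVpos r ⟨hrmem.1, hrmem.2.le⟩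
    have hVsm : V (r - 1/16) ≤ 2 * Real.exp (-(32*ε)⁻¹) :=
      hVsmall (r - 1/16) ⟨by linarith [hr.1], by linarith [hr.2]⟩
    rw [hslope] at hle
    have : (V r - V (r - 1/16)) / (r - (r - 1/16)) = (V r - V (r - 1/16)) * 16 := by
      rw [show r - (r - 1/16) = (1/16:ℝ) by ring]
      rw [div_eq_mul_inv]
      norm_num
    rw [this] at hle
    nlinarith
  exact ⟨hVpos, hV'nonpos, hVsmall, hV'small, hVle2, hV1⟩

set_option maxHeartbeats 1000000 in
lemma main_bounds (ε : ℝ) (hε : 0 < ε) (hε8 : ε < 1/8)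
    (u : E2 → ℝ) (g : ℝ → ℝ) (hsol : IsDirichletSol ε u)
    (hrad : ∀ x ∈ closedBall (0:E2) 1, u x = g ‖x‖) :
    (∀ j : ℕ, ∀ r ∈ Ioo (0:ℝ) 1,
      DifferentiableAt ℝ (iteratedDeriv j (fun s => g s - Real.log s)) r) ∧
    (∀ j : ℕ, ∀ r ∈ Ico (1/2:ℝ) 1, ∃ z : Fin 7 → ℝ,
      validZ z (32 * Real.exp (-(32*ε)⁻¹)) ε⁻¹ ∧
      iteratedDeriv j (fun s => g s - Real.log s) r = evalE z (derE^[j] (Ex.X 2))) ∧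
    (fun s => g s - Real.log s) 1 = 0 := by
  obtain ⟨hVpos, hV'np, hVsmall, hV'small, hVle2, hV1⟩ :=
    V_estimates ε hε hε8 u g hsol hrad
  have hOD := radial_ODE ε hε u g hsol hrad
  set V : ℝ → ℝ := Vfun u with hVdef
  set e₀ : E2 := EuclideanSpace.single 0 1 with he₀def
  have hne₀ : ‖e₀‖ = 1 := by rw [he₀def, EuclideanSpace.norm_single]; norm_num
  have hsn : ∀ t : ℝ, ‖t • e₀‖ = |t| := by
    intro t; rw [norm_smul, hne₀, mul_one, Real.norm_eq_abs]
  have hmcb : ∀ {t : ℝ}, 0 ≤ t → t ≤ 1 → t • e₀ ∈ closedBall (0:E2) 1 := by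
    intro t h0 h1
    rw [mem_closedBall_iff_norm, sub_zero, hsn, abs_of_nonneg h0]; exact h1
  have hfV : ∀ t ∈ Ioo (0:ℝ) 1, (fun s => g s - Real.log s) t = V t := by
    intro t ht
    simp only
    rw [hVdef, Vfun, ← he₀def, hrad _ (hmcb ht.1.le ht.2.le), hsn, abs_of_pos ht.1]
  -- the variable assignment
  set z : ℝ → Fin 7 → ℝ := fun r =>
    ![r, r⁻¹, V r, deriv V r, Real.sinh (V r), Real.cosh (V r), ε⁻¹] with hzdef
  have hz : ∀ r ∈ Ioo (0:ℝ) 1, ∀ i, HasDerivAt (fun t => z t i) (evalE (z r) (ruleE i)) r := by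
    intro r hr i
    have hrne : r ≠ 0 := ne_of_gt hr.1
    fin_cases i
    · -- i = 0 : t
      show HasDerivAt (fun t : ℝ => t) (evalE (z r) (ruleE 0)) r
      have hval : evalE (z r) (ruleE 0) = 1 := rfl
      rw [hval]
      exact hasDerivAt_id r
    · -- i = 1 : t⁻¹
      show HasDerivAt (fun t : ℝ => t⁻¹) (evalE (z r) (ruleE 1)) r
      have hval : evalE (z r) (ruleE 1) = (-1) * (r⁻¹ * r⁻¹) := rfl
      rw [hval]
      have h := hasDerivAt_inv hrne
      refine h.congr_deriv ?_
      rw [pow_two, mul_inv]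
      ring
    · -- i = 2 : V
      show HasDerivAt (fun t : ℝ => V t) (evalE (z r) (ruleE 2)) r
      have hval : evalE (z r) (ruleE 2) = deriv V r := rfl
      rw [hval]
      exact (hOD r hr).1
    · -- i = 3 : deriv V
      show HasDerivAt (fun t : ℝ => deriv V t) (evalE (z r) (ruleE 3)) r
      have hval : evalE (z r) (ruleE 3)
          = 2 * (r * (ε⁻¹ * (ε⁻¹ * Real.sinh (V r)))) + (-1) * (deriv V r * r⁻¹) := rfl
      rw [hval]
      have h := (hOD r hr).2
      convert h using 1
      rw [show ((ε:ℝ)^2)⁻¹ = ε⁻¹ * ε⁻¹ by rw [pow_two, mul_inv], div_eq_mul_inv]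
      ring
    · -- i = 4 : sinh ∘ V
      show HasDerivAt (fun t : ℝ => Real.sinh (V t)) (evalE (z r) (ruleE 4)) r
      have hval : evalE (z r) (ruleE 4) = Real.cosh (V r) * deriv V r := rfl
      rw [hval]
      exact (Real.hasDerivAt_sinh (V r)).comp r (hOD r hr).1
    · -- i = 5 : cosh ∘ V
      show HasDerivAt (fun t : ℝ => Real.cosh (V t)) (evalE (z r) (ruleE 5)) r
      have hval : evalE (z r) (ruleE 5) = Real.sinh (V r) * deriv V r := rfl
      rw [hval]
      exact (Real.hasDerivAt_cosh (V r)).comp r (hOD r hr).1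
    · -- i = 6 : const
      show HasDerivAt (fun _ : ℝ => ε⁻¹) (evalE (z r) (ruleE 6)) r
      have hval : evalE (z r) (ruleE 6) = 0 := rfl
      rw [hval]
      exact hasDerivAt_const r _
  have hformula : ∀ j : ℕ, ∀ r ∈ Ioo (0:ℝ) 1,
      iteratedDeriv j V r = evalE (z r) (derE^[j] (Ex.X 2)) := by
    intro j
    induction j with
    | zero =>
      intro r hr
      rw [iteratedDeriv_zero, Function.iterate_zero_apply]
      rfl
    | succ n ih =>
      intro r hr
      rw [Function.iterate_succ_apply', iteratedDeriv_succ]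
      have hev : iteratedDeriv n V =ᶠ[nhds r]
          fun t => evalE (z t) (derE^[n] (Ex.X 2)) := by
        filter_upwards [isOpen_Ioo.mem_nhds hr] with t ht using ih t ht
      rw [Filter.EventuallyEq.deriv_eq hev]
      exact (hasDerivAt_evalE z r (hz r hr) _).deriv
  have hdiffV : ∀ j : ℕ, ∀ r ∈ Ioo (0:ℝ) 1, DifferentiableAt ℝ (iteratedDeriv j V) r := by
    intro j r hr
    have hev : iteratedDeriv j V =ᶠ[nhds r]
        fun t => evalE (z t) (derE^[j] (Ex.X 2)) := by
      filter_upwards [isOpen_Ioo.mem_nhds hr] with t ht using hformula j t ht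
    rw [hev.differentiableAt_iff]
    exact (hasDerivAt_evalE z r (hz r hr) _).differentiableAt
  have hcongr := fun j => iteratedDeriv_congr_open isOpen_Ioo hfV j
  refine ⟨?_, ?_, ?_⟩
  · intro j r hr
    have hev : (iteratedDeriv j fun s => g s - Real.log s) =ᶠ[nhds r]
        iteratedDeriv j V := by
      filter_upwards [isOpen_Ioo.mem_nhds hr] with t ht using hcongr j t ht
    rw [hev.differentiableAt_iff]
    exact hdiffV j r hr
  · intro j r hr
    have hrI : r ∈ Ioo (0:ℝ) 1 := ⟨by linarith [hr.1], hr.2⟩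
    refine ⟨z r, ?_, ?_⟩
    · -- validity
      have hs0 : (0:ℝ) ≤ 32 * Real.exp (-(32*ε)⁻¹) := by positivity
      have hVr0 : 0 ≤ V r := hVpos r ⟨hrI.1, hrI.2.le⟩
      have hVr2 : V r ≤ 2 := hVle2 r ⟨by linarith [hr.1], hrI.2.le⟩
      have hVsm : V r ≤ 2 * Real.exp (-(32*ε)⁻¹) :=
        hVsmall r ⟨by linarith [hr.1], hrI.2.le⟩
      have hV'sm : -deriv V r ≤ 32 * Real.exp (-(32*ε)⁻¹) :=
        hV'small r ⟨by linarith [hr.1], hrI.2⟩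
      have hV'le : deriv V r ≤ 0 := hV'np r hrI
      have hexp1 : Real.exp (-(32*ε)⁻¹) ≤ 1 := by
        apply Real.exp_le_one_iff.mpr
        have : (0:ℝ) ≤ (32*ε)⁻¹ := by positivity
        linarith
      refine ⟨?_, ?_, ?_, ?_, ?_, ?_, ?_, hs0, ?_, ?_⟩
      · show |r| ≤ 1
        rw [abs_of_pos hrI.1]; exact hrI.2.le
      · show |r⁻¹| ≤ 3
        rw [abs_of_pos (inv_pos.mpr hrI.1)]
        have := inv_anti₀ (by norm_num : (0:ℝ) < 1/2) hr.1
        norm_num at this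
        linarith
      · show |V r| ≤ 32 * Real.exp (-(32*ε)⁻¹)
        rw [abs_of_nonneg hVr0]
        nlinarith [Real.exp_pos (-(32*ε)⁻¹)]
      · show |deriv V r| ≤ 32 * Real.exp (-(32*ε)⁻¹)
        rw [abs_of_nonpos hV'le]
        exact hV'sm
      · show |Real.sinh (V r)| ≤ 8 * (32 * Real.exp (-(32*ε)⁻¹))
        have hsh0 : 0 ≤ Real.sinh (V r) := by
          rw [← Real.sinh_zero]; exact Real.sinh_le_sinh.mpr hVr0
        rw [abs_of_nonneg hsh0]
        have h1 : Real.sinh (V r) ≤ V r * Real.exp (V r) := sinh_le_mul_exp hVr0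
        have h2 : Real.exp (V r) ≤ 8 := le_trans (Real.exp_le_exp.mpr hVr2) exp_two_le_eight
        nlinarith [Real.exp_pos (V r), Real.exp_pos (-(32*ε)⁻¹)]
      · show |Real.cosh (V r)| ≤ 8
        rw [abs_of_nonneg (Real.cosh_pos _).le]
        exact le_trans (cosh_le_exp hVr0) (le_trans (Real.exp_le_exp.mpr hVr2) exp_two_le_eight)
      · show |ε⁻¹| ≤ ε⁻¹
        rw [abs_of_pos (by positivity)]
      · show 32 * Real.exp (-(32*ε)⁻¹) ≤ 32
        nlinarith
      · show (1:ℝ) ≤ ε⁻¹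
        have := inv_anti₀ hε (by linarith : ε ≤ 1)
        simpa using this
    · rw [hcongr j r hrI]
      exact hformula j r hrI
  · simp only
    have hsph : (e₀ : E2) ∈ sphere (0:E2) 1 := by
      rw [mem_sphere_iff_norm, sub_zero, hne₀]
    have hu0 : u e₀ = 0 := hsol.2.2.2 _ hsph
    have hg1 : g 1 = 0 := by
      have := hrad e₀ (by rw [mem_closedBall_iff_norm, sub_zero, hne₀])
      rw [hne₀] at this
      rw [← this, hu0]
    rw [hg1, Real.log_one, sub_zero]

/-- for any integers `l > k ≥ 0` there is a constant `C = C(l,k)` such that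
for every `0 < ε < 1/8`, the `k`-th derivative of `v_ε(r) = ū_ε(r) − ln r` satisfies
`sup_{r ∈ [1/2,1]} |v_ε^{(k)}(r)| ≤ C·ε^{l−k}`. -/
theorem stmt_7 (l k : ℕ) (hlk : k < l) :
    ∃ C : ℝ, ∀ ε : ℝ, 0 < ε → ε < 1/8 →
      ∀ (u : EuclideanSpace ℝ (Fin 2) → ℝ) (g : ℝ → ℝ),
        IsDirichletSol ε u →
        (∀ x ∈ closedBall (0 : EuclideanSpace ℝ (Fin 2)) 1, u x = g ‖x‖) →
        ∀ r ∈ Icc (1/2 : ℝ) 1,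
          |iteratedDeriv k (fun s => g s - Real.log s) r| ≤ C * ε ^ (l - k) := by
  obtain ⟨Ck, hCk0, mk, hCk⟩ := smE_of_idE (idE_iter k)
  set N : ℕ := mk + l with hNdef
  refine ⟨32 * Ck * (Nat.factorial N : ℝ) * 32^N, ?_⟩
  intro ε hε hε8 u g hsol hrad r hr
  obtain ⟨hdiffF, hval, hf1⟩ := main_bounds ε hε hε8 u g hsol hrad
  set s : ℝ := 32 * Real.exp (-(32*ε)⁻¹) with hsdef
  set B : ℝ := Ck * s * (ε⁻¹)^mk with hBdef
  have hs0 : 0 ≤ s := by rw [hsdef]; positivity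
  have hB0 : 0 ≤ B := by
    rw [hBdef]
    exact mul_nonneg (mul_nonneg hCk0 hs0) (pow_nonneg (inv_nonneg.mpr hε.le) mk)
  have hBbound : ∀ ρ ∈ Ico (1/2:ℝ) 1,
      |iteratedDeriv k (fun s => g s - Real.log s) ρ| ≤ B := by
    intro ρ hρ
    obtain ⟨zz, hvz, hfe⟩ := hval k ρ hρ
    rw [hfe]
    exact hCk zz s ε⁻¹ hvz
  -- numeric estimate
  have hnum : B ≤ 32 * Ck * (Nat.factorial N : ℝ) * 32^N * ε^(l-k) := by
    have hexp := exp_neg_le_factorial_mul_pow (32*ε) (by positivity) N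
    have hεne : ε ≠ 0 := ne_of_gt hε
    have hpow : ε^N * (ε⁻¹)^mk = ε^l := by
      have h1 : (ε:ℝ)^mk * (ε⁻¹)^mk = 1 := by
        rw [← mul_pow, mul_inv_cancel₀ hεne, one_pow]
      calc ε^N * (ε⁻¹)^mk = (ε^mk * ε^l) * (ε⁻¹)^mk := by rw [hNdef, pow_add]
      _ = (ε^mk * (ε⁻¹)^mk) * ε^l := by ring
      _ = ε^l := by rw [h1, one_mul]
    have hineq : ε^l ≤ ε^(l-k) := by
      apply pow_le_pow_of_le_one hε.le (by linarith) (Nat.sub_le l k)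
    have hCN : (0:ℝ) ≤ 32 * Ck * (Nat.factorial N : ℝ) * 32^N :=
      mul_nonneg (mul_nonneg (mul_nonneg (by norm_num) hCk0) (by positivity)) (by positivity)
    calc B = Ck * (32 * Real.exp (-(32*ε)⁻¹)) * (ε⁻¹)^mk := by rw [hBdef, hsdef]
    _ ≤ Ck * (32 * ((Nat.factorial N : ℝ) * (32*ε)^N)) * (ε⁻¹)^mk := by
        apply mul_le_mul_of_nonneg_right ?_ (pow_nonneg (inv_nonneg.mpr hε.le) mk)
        apply mul_le_mul_of_nonneg_left ?_ hCk0
        have := mul_le_mul_of_nonneg_left hexp (by norm_num : (0:ℝ) ≤ 32)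
        convert this using 2
    _ = 32 * Ck * (Nat.factorial N : ℝ) * 32^N * (ε^N * (ε⁻¹)^mk) := by
        rw [mul_pow]; ring
    _ = 32 * Ck * (Nat.factorial N : ℝ) * 32^N * ε^l := by rw [hpow]
    _ ≤ 32 * Ck * (Nat.factorial N : ℝ) * 32^N * ε^(l-k) :=
        mul_le_mul_of_nonneg_left hineq hCN
  rcases eq_or_lt_of_le hr.2 with h1 | h1
  · -- r = 1
    subst h1
    match k with
    | 0 =>
      have hf1' : g 1 - Real.log 1 = 0 := hf1
      rw [iteratedDeriv_zero]
      show |g 1 - Real.log 1| ≤ _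
      rw [hf1', abs_zero]
      have hCN : (0:ℝ) ≤ 32 * Ck * (Nat.factorial N : ℝ) * 32^N :=
        mul_nonneg (mul_nonneg (mul_nonneg (by norm_num) hCk0) (by positivity)) (by positivity)
      exact mul_nonneg hCN (pow_nonneg hε.le _)
    | (n+1) =>
      rw [iteratedDeriv_succ]
      have hdiff' : ∀ x ∈ Ioo (1/2:ℝ) 1,
          DifferentiableAt ℝ (iteratedDeriv n (fun s => g s - Real.log s)) x :=
        fun x hx => hdiffF n x ⟨by linarith [hx.1], hx.2⟩
      have hbd' : ∀ x ∈ Ioo (1/2:ℝ) 1,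
          |deriv (iteratedDeriv n (fun s => g s - Real.log s)) x| ≤ B := by
        intro x hx
        rw [← iteratedDeriv_succ]
        exact hBbound x ⟨hx.1.le, hx.2⟩
      have := endpoint_deriv_bound _ (1/2) 1 B (by norm_num) hB0 hdiff' hbd'
      exact le_trans this hnum
  · exact le_trans (hBbound r ⟨hr.1, h1⟩) hnum
end
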